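/- arXiv:1208.2521 — 5 statements merged into one kernel-verified Lean document; each statement's English description precedes it below -/
import Mathlib

section
/- Let 0 < q < 1. For every z ∈ ℂ with 0 < |z| < 1 and all integers n, m, the bilateral series ∑_{k=-∞}^∞ z^{2k+n+m} q^{(m+k)(m+k-1)/2} G(-z², q^{n+k+1}) H(-q^{m+k} z², q^{m+k+1}) converges absolutely and ∑_{k=-∞}^∞ z^{2k+n+m} q^{(m+k)(m+k-1)/2} G(-z², q^{n+k+1}) H(-q^{m+k} z², q^{m+k+1}) = (q;q)_∞² · δ_{nm}. (These are Hansen–Lommel type biorthogonality relations for Jackson's two q-Bessel functions.) -/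
open Complex Filter

/-- `(a;q)_k`, the finite q-shifted factorial. -/
noncomputable def qPoch (q : ℝ) (a : ℂ) (k : ℕ) : ℂ :=
  ∏ j ∈ Finset.range k, (1 - a * (q : ℂ) ^ j)

/-- `(a;q)_∞`, the infinite q-shifted factorial. -/
noncomputable def qPochInf (q : ℝ) (a : ℂ) : ℂ :=
  ∏' j : ℕ, (1 - a * (q : ℂ) ^ j)

/-- `G(z,w) = ∑ (q^k w;q)_∞ z^k / (q;q)_k`, so `G(z,w) = (w;q)_∞ ₂φ₁(0,0;w;q,z)` for `|z|<1`. -/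
noncomputable def Gqb (q : ℝ) (z w : ℂ) : ℂ :=
  ∑' k : ℕ, qPochInf q ((q : ℂ) ^ k * w) * z ^ k / qPoch q (q : ℂ) k

/-- `H(z,w) = ∑ q^{k(k-1)} (q^k w;q)_∞ z^k / (q;q)_k`, so `H(z,w) = (w;q)_∞ ₀φ₁(-;w;q,z)`. -/
noncomputable def Hqb (q : ℝ) (z w : ℂ) : ℂ :=
  ∑' k : ℕ, (q : ℂ) ^ (k * (k - 1)) * qPochInf q ((q : ℂ) ^ k * w) * z ^ k / qPoch q (q : ℂ) k

namespace HLaux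

variable {q : ℝ}

lemma hasProd_zero_of_factor {f : ℕ → ℂ} {j₀ : ℕ} (h : f j₀ = 0) : HasProd f 0 := by
  rw [HasProd]
  have he : (fun s : Finset ℕ => ∏ i ∈ s, f i) =ᶠ[atTop] (fun _ => 0) := by
    filter_upwards [eventually_ge_atTop ({j₀} : Finset ℕ)] with s hs
    exact Finset.prod_eq_zero (hs (Finset.mem_singleton_self j₀)) h
  exact Tendsto.congr' he.symm tendsto_const_nhds

lemma multipliable_qfac (hq0 : 0 < q) (hq1 : q < 1) (a : ℂ) :
    Multipliable fun j : ℕ => 1 - a * (q : ℂ) ^ j := by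
  by_cases h : ∀ j : ℕ, 1 - a * (q : ℂ) ^ j ≠ 0
  · -- use logs
    have hq : ‖(q:ℂ)‖ = q := by
      simp [Complex.norm_real, Real.norm_eq_abs, abs_of_pos hq0]
    obtain ⟨N, hN⟩ : ∃ N : ℕ, ‖a‖ * q ^ N ≤ 1/2 := by
      obtain ⟨N, hN⟩ := exists_pow_lt_of_lt_one (by positivity : (0:ℝ) < 1/(2*(‖a‖+1))) hq1
      refine ⟨N, ?_⟩
      have h2 : ‖a‖ * q ^ N ≤ (‖a‖+1) * q ^ N := by
        have : (0:ℝ) ≤ q ^ N := by positivity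
        nlinarith
      have h3 : (‖a‖+1) * q ^ N ≤ (‖a‖+1) * (1/(2*(‖a‖+1))) := by
        have hna : (0:ℝ) < ‖a‖ + 1 := by positivity
        nlinarith
      have h4 : (‖a‖+1) * (1/(2*(‖a‖+1))) = 1/2 := by
        have hna : (‖a‖ + 1) ≠ 0 := by positivity
        field_simp
      linarith
    have hb : ∀ j : ℕ, ‖a * (q:ℂ) ^ (j + N)‖ ≤ (1/2) * q ^ j := by
      intro j
      rw [norm_mul, norm_pow, hq]
      have : q ^ (j + N) = q ^ N * q ^ j := by rw [pow_add]; ring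
      rw [this, ← mul_assoc]
      have h1 : ‖a‖ * q ^ N ≤ 1/2 := hN
      have h2 : (0:ℝ) ≤ q ^ j := by positivity
      nlinarith
    have hsum : Summable fun j : ℕ => Complex.log (1 - a * (q:ℂ) ^ j) := by
      rw [← summable_nat_add_iff N]
      apply Summable.of_norm_bounded (g := fun j => (3/2) * ((1/2) * q ^ j))
      · exact ((summable_geometric_of_lt_one hq0.le hq1).mul_left _).mul_left _
      · intro j
        have hb' := hb j
        have h12 : ‖-(a * (q:ℂ) ^ (j + N))‖ ≤ 1/2 := by
          rw [norm_neg]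
          calc ‖a * (q:ℂ) ^ (j+N)‖ ≤ (1/2) * q ^ j := hb'
            _ ≤ (1/2) * 1 := by
                have : q ^ j ≤ 1 := pow_le_one₀ hq0.le hq1.le
                nlinarith
            _ = 1/2 := by norm_num
        have := Complex.norm_log_one_add_half_le_self h12
        rw [show (1 : ℂ) + -(a * (q:ℂ)^(j+N)) = 1 - a * (q:ℂ)^(j+N) by ring] at this
        refine this.trans ?_
        rw [norm_neg]
        nlinarith [hb j]
    have hp := hsum.hasSum.cexp
    have hfe : (Complex.exp ∘ fun j : ℕ => Complex.log (1 - a * (q:ℂ) ^ j))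
        = fun j : ℕ => 1 - a * (q:ℂ) ^ j := by
      funext j
      exact Complex.exp_log (h j)
    rw [hfe] at hp
    exact ⟨_, hp⟩
  · push_neg at h
    obtain ⟨j₀, hj₀⟩ := h
    exact (hasProd_zero_of_factor hj₀).multipliable

lemma qPochInf_peel (hq0 : 0 < q) (hq1 : q < 1) (a : ℂ) :
    qPochInf q a = (1 - a) * qPochInf q (a * (q : ℂ)) := by
  have h2 : (fun n : ℕ => 1 - a * (q:ℂ)^(n+1)) = (fun n : ℕ => 1 - (a*(q:ℂ)) * (q:ℂ)^n) := by
    funext n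
    rw [pow_succ']
    ring
  have hm : Multipliable fun n : ℕ => 1 - a * (q:ℂ)^(n+1) := by
    rw [h2]; exact multipliable_qfac hq0 hq1 _
  rw [qPochInf, tprod_eq_zero_mul' (f := fun j : ℕ => 1 - a*(q:ℂ)^j) hm]
  congr 1
  · simp
  · rw [qPochInf]
    exact tprod_congr fun b => by rw [pow_succ']; ring

noncomputable def Abar (q : ℝ) (r : ℤ) : ℂ := qPochInf q ((q:ℂ) ^ (r + 1))

lemma qC_ne (hq0 : 0 < q) : (q : ℂ) ≠ 0 := by
  simpa using ne_of_gt hq0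

lemma Abar_rec (hq0 : 0 < q) (hq1 : q < 1) (r : ℤ) :
    Abar q (r - 1) = (1 - (q:ℂ) ^ r) * Abar q r := by
  have h1 : (r - 1) + 1 = r := by ring
  rw [Abar, h1, qPochInf_peel hq0 hq1, Abar]
  congr 2
  rw [← zpow_add_one₀ (qC_ne hq0)]

lemma Abar_neg (hq0 : 0 < q) (hq1 : q < 1) : ∀ {r : ℤ}, r < 0 → Abar q r = 0 := by
  have base : Abar q (-1) = 0 := by
    rw [Abar]
    norm_num
    rw [qPochInf_peel hq0 hq1]
    simp
  have step : ∀ s : ℕ, Abar q (-1 - s) = 0 := by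
    intro s
    induction s with
    | zero => simpa using base
    | succ t ih =>
      have : (-1 - (t:ℤ) - 1) = (-1 - (t:ℤ)) - 1 := by ring
      have h2 := Abar_rec hq0 hq1 (-1 - (t:ℤ))
      rw [ih, mul_zero] at h2
      have harg : (-1 - ((t+1 : ℕ) : ℤ)) = (-1 - (t:ℤ)) - 1 := by push_cast; ring
      rw [harg, h2]
  intro r hr
  have : ∃ s : ℕ, r = -1 - s := ⟨(-1 - r).toNat, by omega⟩
  obtain ⟨s, rfl⟩ := this
  exact step s

lemma tprod_le_one {g : ℕ → ℝ} (hm : Multipliable g) (h0 : ∀ j, 0 ≤ g j)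
    (h1 : ∀ j, g j ≤ 1) : ∏' j, g j ≤ 1 :=
  le_of_tendsto hm.hasProd (Eventually.of_forall fun s =>
    Finset.prod_le_one (fun i _ => h0 i) (fun i _ => h1 i))

lemma norm_Abar_le_one (hq0 : 0 < q) (hq1 : q < 1) (r : ℤ) : ‖Abar q r‖ ≤ 1 := by
  rcases lt_or_ge r 0 with hr | hr
  · rw [Abar_neg hq0 hq1 hr]; simp
  · have hmult := multipliable_qfac hq0 hq1 ((q:ℂ) ^ (r+1))
    rw [Abar, qPochInf, Multipliable.norm_tprod hmult]
    have hfac : ∀ j : ℕ, ‖1 - (q:ℂ)^(r+1) * (q:ℂ)^j‖ ≤ 1 := by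
      intro j
      have hrs : (r + 1 : ℤ) = (((r+1).toNat : ℕ) : ℤ) := by omega
      have hs : (q:ℂ)^(r+1) = ((q ^ (r+1).toNat : ℝ) : ℂ) := by
        rw [hrs, zpow_natCast]
        push_cast
        rfl
      rw [hs, show ((q:ℂ)^j) = ((q^j : ℝ) : ℂ) by push_cast; rfl]
      rw [show (1 : ℂ) - ((q ^ (r+1).toNat : ℝ):ℂ) * ((q^j : ℝ):ℂ)
            = (((1 - q ^ (r+1).toNat * q^j : ℝ)) : ℂ) by push_cast; ring]
      rw [Complex.norm_real, Real.norm_eq_abs, abs_le]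
      constructor
      · have h1 : q ^ (r+1).toNat * q ^ j ≤ 1 := by
          have := pow_le_one₀ hq0.le hq1.le (n := (r+1).toNat)
          have := pow_le_one₀ hq0.le hq1.le (n := j)
          nlinarith [pow_nonneg hq0.le ((r+1).toNat), pow_nonneg hq0.le j]
        linarith
      · nlinarith [pow_nonneg hq0.le ((r+1).toNat), pow_nonneg hq0.le j]
    exact tprod_le_one hmult.norm (fun j => norm_nonneg _) hfac

/-! ### Real Pochhammer bounds -/

noncomputable def RP (q : ℝ) (k : ℕ) : ℝ := ∏ j ∈ Finset.range k, (1 - q ^ (j+1))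

lemma qPoch_q_eq (k : ℕ) : qPoch q (q:ℂ) k = ((RP q k : ℝ) : ℂ) := by
  rw [qPoch, RP]
  push_cast
  exact Finset.prod_congr rfl fun j _ => by rw [pow_succ']

lemma RP_pos (hq0 : 0 < q) (hq1 : q < 1) (k : ℕ) : 0 < RP q k := by
  apply Finset.prod_pos
  intro j _
  have : q ^ (j+1) < 1 := pow_lt_one₀ hq0.le hq1 (Nat.succ_ne_zero j)
  linarith

lemma RP_le_one (hq0 : 0 < q) (hq1 : q < 1) (k : ℕ) : RP q k ≤ 1 := by
  apply Finset.prod_le_one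
  · intro j _
    have : q ^ (j+1) < 1 := pow_lt_one₀ hq0.le hq1 (Nat.succ_ne_zero j)
    linarith
  · intro j _
    have : 0 ≤ q ^ (j+1) := by positivity
    linarith

lemma RP_anti (hq0 : 0 < q) (hq1 : q < 1) {a b : ℕ} (h : a ≤ b) : RP q b ≤ RP q a := by
  induction b, h using Nat.le_induction with
  | base => exact le_refl _
  | succ b hb ih =>
    have h1 : RP q (b+1) = RP q b * (1 - q ^ (b+1)) := Finset.prod_range_succ _ _
    have h2 : 0 ≤ q ^ (b+1) := by positivity
    have h3 : 0 < RP q b := RP_pos hq0 hq1 b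
    nlinarith

lemma prod_one_sub_ge (s : Finset ℕ) (x : ℕ → ℝ) (h0 : ∀ j, 0 ≤ x j) (h1 : ∀ j, x j ≤ 1) :
    1 - ∑ j ∈ s, x j ≤ ∏ j ∈ s, (1 - x j) := by
  classical
  induction s using Finset.induction with
  | empty => simp
  | @insert a s ha ih =>
    rw [Finset.prod_insert ha, Finset.sum_insert ha]
    have hs0 : 0 ≤ ∑ j ∈ s, x j := Finset.sum_nonneg fun j _ => h0 j
    nlinarith [h0 a, h1 a]

lemma exists_RP_lb (hq0 : 0 < q) (hq1 : q < 1) : ∃ c : ℝ, 0 < c ∧ ∀ k, c ≤ RP q k := by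
  obtain ⟨N, hN⟩ := exists_pow_lt_of_lt_one (show (0:ℝ) < (1-q)/2 by linarith) hq1
  refine ⟨RP q N / 2, by have := RP_pos hq0 hq1 N; linarith, ?_⟩
  intro k
  rcases le_or_gt k N with h | h
  · have h1 := RP_anti hq0 hq1 h
    have h2 := RP_pos hq0 hq1 N
    linarith
  · have hsplit : RP q k = RP q N * ∏ j ∈ Finset.Ico N k, (1 - q^(j+1)) := by
      rw [RP, RP, Finset.range_eq_Ico, Finset.range_eq_Ico]
      exact (Finset.prod_Ico_consecutive (fun j => 1 - q^(j+1)) (Nat.zero_le N) h.le).symm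
    have hsum : ∑ j ∈ Finset.Ico N k, q^(j+1) ≤ 1/2 := by
      have he : ∑ j ∈ Finset.Ico N k, q^(j+1) = q^(N+1) * ∑ i ∈ Finset.range (k-N), q^i := by
        rw [Finset.sum_Ico_eq_sum_range, Finset.mul_sum]
        exact Finset.sum_congr rfl fun i _ => by rw [← pow_add]; congr 1; omega
      have hgeo : ∑ i ∈ Finset.range (k-N), q^i ≤ (1-q)⁻¹ := by
        have hs := Summable.sum_le_tsum (Finset.range (k-N)) (fun i _ => by positivity)
          (summable_geometric_of_lt_one hq0.le hq1)
        rwa [tsum_geometric_of_lt_one hq0.le hq1] at hs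
      have hq1' : (0:ℝ) < 1 - q := by linarith
      have hqN : q^(N+1) ≤ (1-q)/2 * q := by
        rw [pow_succ]
        have : 0 < q := hq0
        nlinarith [pow_nonneg hq0.le N]
      have hinv : 0 < (1-q)⁻¹ := by positivity
      calc ∑ j ∈ Finset.Ico N k, q^(j+1) = q^(N+1) * ∑ i ∈ Finset.range (k-N), q^i := he
        _ ≤ ((1-q)/2 * q) * (1-q)⁻¹ := by
            apply mul_le_mul hqN hgeo (Finset.sum_nonneg fun i _ => by positivity) (mul_nonneg (by linarith) hq0.le)
        _ = q/2 * ((1-q) * (1-q)⁻¹) := by ring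
        _ = q/2 := by rw [mul_inv_cancel₀ (ne_of_gt hq1')]; ring
        _ ≤ 1/2 := by linarith
    have hprod : (1:ℝ)/2 ≤ ∏ j ∈ Finset.Ico N k, (1 - q^(j+1)) := by
      have := prod_one_sub_ge (Finset.Ico N k) (fun j => q^(j+1))
        (fun j => by positivity)
        (fun j => (pow_le_one₀ hq0.le hq1.le))
      linarith
    have hRN := RP_pos hq0 hq1 N
    calc RP q N / 2 = RP q N * (1/2) := by ring
      _ ≤ RP q N * ∏ j ∈ Finset.Ico N k, (1 - q^(j+1)) := by nlinarith
      _ = RP q k := hsplit.symm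

lemma qPoch_ne_zero (hq0 : 0 < q) (hq1 : q < 1) (k : ℕ) : qPoch q (q:ℂ) k ≠ 0 := by
  rw [qPoch_q_eq]
  exact_mod_cast ne_of_gt (RP_pos hq0 hq1 k)

lemma norm_qPoch (hq0 : 0 < q) (hq1 : q < 1) (k : ℕ) : ‖qPoch q (q:ℂ) k‖ = RP q k := by
  rw [qPoch_q_eq, Complex.norm_real, Real.norm_eq_abs, abs_of_pos (RP_pos hq0 hq1 k)]

/-! ### Integer exponent helpers -/

lemma half_step (s : ℤ) : s*(s-1)/2 = (s-1)*(s-2)/2 + (s-1) := by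
  obtain ⟨x, hx⟩ := Int.even_mul_pred_self s
  obtain ⟨y, hy⟩ := Int.even_mul_pred_self (s-1)
  have hy' : (s-1)*(s-2) = y + y := by rw [← hy]; ring
  have hr : s*(s-1) = (s-1)*(s-2) + 2*(s-1) := by ring
  have e1 : s*(s-1)/2 = x := by rw [hx]; omega
  have e2 : (s-1)*(s-2)/2 = y := by rw [hy']; omega
  rw [e1, e2]
  linarith

lemma exp_shift (N : ℤ) (j : ℕ) :
    (j:ℤ) + (N-j)*(N-j-1)/2 = (N-1) + (N-1-j)*(N-1-j-1)/2 := by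
  have h := half_step (N - j)
  have h3 : (N-1-(j:ℤ))*(N-1-j-1)/2 = (N-(j:ℤ)-1)*(N-j-2)/2 := by
    congr 1
    ring
  rw [h3]
  linarith

lemma exp_combine (a b : ℤ) :
    a*(a-1)/2 + b*(b-1) + a*b = (a+b)*(a+b-1)/2 + b*(b-1)/2 := by
  obtain ⟨x, hx⟩ := Int.even_mul_pred_self a
  obtain ⟨y, hy⟩ := Int.even_mul_pred_self b
  obtain ⟨w, hw⟩ := Int.even_mul_pred_self (a+b)
  have e1 : a*(a-1)/2 = x := by rw [hx]; omega
  have e2 : b*(b-1)/2 = y := by rw [hy]; omega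
  have e3 : (a+b)*(a+b-1)/2 = w := by rw [hw]; omega
  have hr : (a+b)*(a+b-1) = a*(a-1) + b*(b-1) + 2*(a*b) := by ring
  rw [e1, e2, e3, hy]
  rw [hx, hy, hw] at hr
  linarith

lemma natcast_mul_pred (i : ℕ) : ((i*(i-1) : ℕ) : ℤ) = (i:ℤ)*((i:ℤ)-1) := by
  cases i with
  | zero => simp
  | succ t => push_cast [Nat.succ_sub_one]; ring

lemma natcast_tri (i : ℕ) : ((i*(i-1)/2 : ℕ) : ℤ) = (i:ℤ)*((i:ℤ)-1)/2 := by
  obtain ⟨t, ht⟩ : ∃ t, i*(i-1) = 2*t := by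
    cases i with
    | zero => exact ⟨0, rfl⟩
    | succ u =>
      obtain ⟨t, ht⟩ := Nat.even_mul_succ_self u
      exact ⟨t, by rw [Nat.succ_sub_one, mul_comm, ht]; ring⟩
  have h2 : i*(i-1)/2 = t := by rw [ht]; omega
  have h3 : (i:ℤ)*((i:ℤ)-1) = 2*(t:ℤ) := by
    rw [← natcast_mul_pred, ht]
    push_cast
    ring
  rw [h2, h3]
  omega

/-! ### phi and psi -/

noncomputable def phiF (q : ℝ) (M : ℤ) (i : ℕ) : ℂ :=
  (-1)^i * (q:ℂ)^(i*(i-1)/2) * Abar q (M - i) / qPoch q (q:ℂ) i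

noncomputable def psiF (q : ℝ) (N : ℤ) (j : ℕ) : ℂ :=
  (-1)^j * (q:ℂ)^((N-(j:ℤ))*(N-(j:ℤ)-1)/2) * Abar q (N - j) / qPoch q (q:ℂ) j

lemma phiF_eq_zero (hq0 : 0 < q) (hq1 : q < 1) {M : ℤ} {i : ℕ} (h : M < i) :
    phiF q M i = 0 := by
  rw [phiF, Abar_neg hq0 hq1 (by omega : M - (i:ℤ) < 0)]
  simp

lemma psiF_eq_zero (hq0 : 0 < q) (hq1 : q < 1) {N : ℤ} {j : ℕ} (h : N < j) :
    psiF q N j = 0 := by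
  rw [psiF, Abar_neg hq0 hq1 (by omega : N - (j:ℤ) < 0)]
  simp

lemma one_sub_qpow_ne (hq0 : 0 < q) (hq1 : q < 1) {E : ℤ} (hE : E ≠ 0) :
    (1:ℂ) - (q:ℂ)^E ≠ 0 := by
  intro h
  have h1 : (q:ℂ)^E = 1 := by
    have := sub_eq_zero.mp h
    exact this.symm
  have hq : ‖(q:ℂ)‖ = q := by
    simp [Complex.norm_real, Real.norm_eq_abs, abs_of_pos hq0]
  have h2 : q ^ E = 1 := by
    have := congrArg norm h1
    rwa [norm_zpow, hq, norm_one] at this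
  rcases lt_trichotomy E 0 with hlt | heq | hgt
  · set n := (-E).toNat with hn
    have hEn : E = -(n:ℤ) := by omega
    rw [hEn, zpow_neg, zpow_natCast, inv_eq_one] at h2
    have : q ^ n < 1 := pow_lt_one₀ hq0.le hq1 (by omega)
    rw [h2] at this
    exact lt_irrefl 1 this
  · exact hE heq
  · set n := E.toNat with hn
    have hEn : E = (n:ℤ) := by omega
    rw [hEn, zpow_natCast] at h2
    have : q ^ n < 1 := pow_lt_one₀ hq0.le hq1 (by omega)
    rw [h2] at this
    exact lt_irrefl 1 this

lemma qPoch_succ_q (hq0 : 0 < q) (i : ℕ) :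
    qPoch q (q:ℂ) (i+1) = qPoch q (q:ℂ) i * (1 - (q:ℂ)^((i:ℤ)+1)) := by
  rw [qPoch, Finset.prod_range_succ, ← qPoch]
  congr 2
  rw [zpow_add_one₀ (qC_ne hq0), zpow_natCast]
  ring

lemma summable_fin_supp (L : ℕ) (g : ℕ → ℂ) (hg : ∀ b, L ≤ b → g b = 0) : Summable g :=
  summable_of_ne_finset_zero (s := Finset.range L)
    (fun b hb => hg b (by simpa using hb))

lemma phi_step1 (hq0 : 0 < q) (hq1 : q < 1) (M : ℤ) (i : ℕ) :
    (1 - (q:ℂ)^((i:ℤ)+1)) * phiF q M (i+1) = -((q:ℂ)^(i:ℤ) * phiF q (M-1) i) := by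
  rw [phiF, phiF, qPoch_succ_q hq0 i]
  rw [show (i+1)*((i+1)-1)/2 = i*(i-1)/2 + i from Nat.triangle_succ i]
  rw [pow_add, pow_succ]
  have harg : M - ((i+1 : ℕ) : ℤ) = M - 1 - (i:ℤ) := by push_cast; ring
  rw [harg]
  have hne1 : (1 - (q:ℂ)^((i:ℤ)+1)) ≠ 0 := one_sub_qpow_ne hq0 hq1 (by omega)
  have hne2 : qPoch q (q:ℂ) i ≠ 0 := qPoch_ne_zero hq0 hq1 i
  have hzn : (q:ℂ)^(i:ℕ) = (q:ℂ)^(i:ℤ) := (zpow_natCast _ i).symm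
  field_simp
  rw [pow_add, hzn]
  ring

lemma phi_eval (hq0 : 0 < q) (hq1 : q < 1) (M : ℤ) :
    ∑' i, phiF q M i = if M = 0 then qPochInf q (q:ℂ) else 0 := by
  rcases lt_trichotomy M 0 with hM | hM | hM
  · rw [if_neg (by omega)]
    have hzz : ∀ i : ℕ, phiF q M i = 0 := fun i => phiF_eq_zero hq0 hq1 (by omega)
    rw [tsum_eq_sum (s := (∅ : Finset ℕ)) (fun b _ => hzz b)]
    simp
  · rw [if_pos hM, hM]
    rw [tsum_eq_single 0 (fun i hi => phiF_eq_zero hq0 hq1 (by omega))]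
    rw [phiF, Abar]
    norm_num [qPoch]
  · rw [if_neg (by omega)]
    set L := M.toNat + 1 with hL
    have hz : ∀ b : ℕ, L ≤ b → phiF q M b = 0 :=
      fun b hb => phiF_eq_zero hq0 hq1 (by omega)
    have s0 : Summable (phiF q M) := summable_fin_supp L _ hz
    have key : (1 - (q:ℂ)^M) * ∑' i, phiF q M i = 0 := by
      rw [← tsum_mul_left]
      have split : ∀ i : ℕ, (1 - (q:ℂ)^M) * phiF q M i
          = (1-(q:ℂ)^(i:ℤ)) * phiF q M i
            + (q:ℂ)^(i:ℤ) * ((1 - (q:ℂ)^(M-(i:ℤ))) * phiF q M i) := by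
        intro i
        have hqq : (q:ℂ)^(i:ℤ) * (q:ℂ)^(M-(i:ℤ)) = (q:ℂ)^M := by
          rw [← zpow_add₀ (qC_ne hq0)]; congr 1; ring
        have : (1 - (q:ℂ)^M)
            = (1-(q:ℂ)^(i:ℤ)) + (q:ℂ)^(i:ℤ) * (1 - (q:ℂ)^(M-(i:ℤ))) := by
          rw [mul_sub, mul_one, hqq]; ring
        rw [this]; ring
      rw [tsum_congr split]
      have s1 : Summable fun i : ℕ => (1-(q:ℂ)^(i:ℤ)) * phiF q M i :=
        summable_fin_supp L _ (fun b hb => by rw [hz b hb]; ring)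
      have s2 : Summable fun i : ℕ =>
          (q:ℂ)^(i:ℤ) * ((1 - (q:ℂ)^(M-(i:ℤ))) * phiF q M i) :=
        summable_fin_supp L _ (fun b hb => by rw [hz b hb]; ring)
      rw [Summable.tsum_add s1 s2]
      have e2 : ∀ i : ℕ, (q:ℂ)^(i:ℤ) * ((1 - (q:ℂ)^(M-(i:ℤ))) * phiF q M i)
          = (q:ℂ)^(i:ℤ) * phiF q (M-1) i := by
        intro i
        have hrec := Abar_rec hq0 hq1 (M - (i:ℤ))
        rw [phiF, phiF, show M - 1 - (i:ℤ) = M - (i:ℤ) - 1 from by ring, hrec]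
        ring
      have e1 : ∑' i : ℕ, (1-(q:ℂ)^(i:ℤ)) * phiF q M i
          = ∑' i : ℕ, -((q:ℂ)^(i:ℤ) * phiF q (M-1) i) := by
        rw [Summable.tsum_eq_zero_add s1]
        have h00 : (1-(q:ℂ)^((0:ℕ):ℤ)) * phiF q M 0 = 0 := by norm_num
        rw [h00, zero_add]
        apply tsum_congr
        intro i
        have hc : (((i+1:ℕ)):ℤ) = (i:ℤ)+1 := by push_cast; ring
        rw [hc]
        exact phi_step1 hq0 hq1 M i
      rw [e1, tsum_congr e2, tsum_neg]
      exact neg_add_cancel _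
    have hne : (1 - (q:ℂ)^M) ≠ 0 := one_sub_qpow_ne hq0 hq1 (by omega)
    rcases mul_eq_zero.mp key with h | h
    · exact absurd h hne
    · exact h

lemma psi_step1 (hq0 : 0 < q) (hq1 : q < 1) (N : ℤ) (j : ℕ) :
    (1 - (q:ℂ)^((j:ℤ)+1)) * psiF q N (j+1) = -(psiF q (N-1) j) := by
  rw [psiF, psiF, qPoch_succ_q hq0 j, pow_succ]
  have h1 : N - ((j+1:ℕ):ℤ) = N - 1 - (j:ℤ) := by push_cast; ring
  rw [h1]
  have hne1 : (1 - (q:ℂ)^((j:ℤ)+1)) ≠ 0 := one_sub_qpow_ne hq0 hq1 (by omega)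
  have hne2 : qPoch q (q:ℂ) j ≠ 0 := qPoch_ne_zero hq0 hq1 j
  field_simp

lemma psi_key (hq0 : 0 < q) (hq1 : q < 1) (N : ℤ) :
    (1 - (q:ℂ)^N) * ∑' j, psiF q N j
      = -((1 - (q:ℂ)^(N-1)) * ∑' j, psiF q (N-1) j) := by
  set L := N.toNat + 1 with hL
  have hz : ∀ b : ℕ, L ≤ b → psiF q N b = 0 :=
    fun b hb => psiF_eq_zero hq0 hq1 (by omega)
  rw [← tsum_mul_left]
  have split : ∀ j : ℕ, (1 - (q:ℂ)^N) * psiF q N j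
      = (1-(q:ℂ)^(j:ℤ)) * psiF q N j
        + (q:ℂ)^(j:ℤ) * ((1 - (q:ℂ)^(N-(j:ℤ))) * psiF q N j) := by
    intro j
    have hqq : (q:ℂ)^(j:ℤ) * (q:ℂ)^(N-(j:ℤ)) = (q:ℂ)^N := by
      rw [← zpow_add₀ (qC_ne hq0)]; congr 1; ring
    have : (1 - (q:ℂ)^N)
        = (1-(q:ℂ)^(j:ℤ)) + (q:ℂ)^(j:ℤ) * (1 - (q:ℂ)^(N-(j:ℤ))) := by
      rw [mul_sub, mul_one, hqq]; ring
    rw [this]; ring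
  rw [tsum_congr split]
  have s1 : Summable fun j : ℕ => (1-(q:ℂ)^(j:ℤ)) * psiF q N j :=
    summable_fin_supp L _ (fun b hb => by rw [hz b hb]; ring)
  have s2 : Summable fun j : ℕ =>
      (q:ℂ)^(j:ℤ) * ((1 - (q:ℂ)^(N-(j:ℤ))) * psiF q N j) :=
    summable_fin_supp L _ (fun b hb => by rw [hz b hb]; ring)
  rw [Summable.tsum_add s1 s2]
  have e2 : ∀ j : ℕ, (q:ℂ)^(j:ℤ) * ((1 - (q:ℂ)^(N-(j:ℤ))) * psiF q N j)
      = (q:ℂ)^(N-1) * psiF q (N-1) j := by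
    intro j
    have hrec := Abar_rec hq0 hq1 (N - (j:ℤ))
    rw [show N - (j:ℤ) - 1 = N - 1 - (j:ℤ) from by ring] at hrec
    have hmerge : (q:ℂ)^(j:ℤ) * (q:ℂ)^((N-(j:ℤ))*(N-(j:ℤ)-1)/2)
        = (q:ℂ)^(N-1) * (q:ℂ)^((N-1-(j:ℤ))*(N-1-(j:ℤ)-1)/2) := by
      rw [← zpow_add₀ (qC_ne hq0), ← zpow_add₀ (qC_ne hq0)]
      exact congrArg _ (exp_shift N j)
    rw [psiF, psiF, hrec]
    linear_combination (((-1):ℂ)^j * (1 - (q:ℂ)^(N-(j:ℤ))) * Abar q (N-(j:ℤ))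
      / qPoch q (q:ℂ) j) * hmerge
  have e1 : ∑' j : ℕ, (1-(q:ℂ)^(j:ℤ)) * psiF q N j
      = ∑' j : ℕ, -(psiF q (N-1) j) := by
    rw [Summable.tsum_eq_zero_add s1]
    have h00 : (1-(q:ℂ)^((0:ℕ):ℤ)) * psiF q N 0 = 0 := by norm_num
    rw [h00, zero_add]
    apply tsum_congr
    intro j
    have hc : (((j+1:ℕ)):ℤ) = (j:ℤ)+1 := by push_cast; ring
    rw [hc]
    exact psi_step1 hq0 hq1 N j
  rw [e1, tsum_congr e2, tsum_neg, tsum_mul_left]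
  ring

lemma psi_eval (hq0 : 0 < q) (hq1 : q < 1) (N : ℤ) :
    ∑' j, psiF q N j = if N = 0 then qPochInf q (q:ℂ) else 0 := by
  rcases lt_trichotomy N 0 with hN | hN | hN
  · rw [if_neg (by omega)]
    have hzz : ∀ j : ℕ, psiF q N j = 0 := fun j => psiF_eq_zero hq0 hq1 (by omega)
    rw [tsum_eq_sum (s := (∅ : Finset ℕ)) (fun b _ => hzz b)]
    simp
  · rw [if_pos hN, hN]
    rw [tsum_eq_single 0 (fun j hj => psiF_eq_zero hq0 hq1 (by omega))]
    rw [psiF, Abar]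
    norm_num [qPoch]
  · rw [if_neg (by omega)]
    have haux : ∀ s : ℕ, ∑' j, psiF q ((s:ℤ)+1) j = 0 := by
      intro s
      induction s with
      | zero =>
        have hk := psi_key hq0 hq1 1
        have hz0 : (1 - (q:ℂ)^((1:ℤ)-1)) = 0 := by norm_num
        rw [hz0, zero_mul, neg_zero] at hk
        have hne : (1 - (q:ℂ)^(1:ℤ)) ≠ 0 := one_sub_qpow_ne hq0 hq1 (by omega)
        have := mul_eq_zero.mp hk
        rcases this with h | h
        · exact absurd h hne
        · simpa using h
      | succ t ih =>
        have hk := psi_key hq0 hq1 ((t:ℤ)+2)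
        rw [show ((t:ℤ)+2) - 1 = (t:ℤ)+1 from by ring] at hk
        rw [ih, mul_zero, neg_zero] at hk
        have hne : (1 - (q:ℂ)^((t:ℤ)+2)) ≠ 0 := one_sub_qpow_ne hq0 hq1 (by omega)
        have hcast : (((t+1:ℕ)):ℤ) + 1 = (t:ℤ)+2 := by push_cast; ring
        rw [hcast]
        rcases mul_eq_zero.mp hk with h | h
        · exact absurd h hne
        · exact h
    obtain ⟨s, rfl⟩ : ∃ s : ℕ, N = (s:ℤ)+1 := ⟨(N-1).toNat, by omega⟩
    exact haux s

/-! ### Norm bounds -/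

lemma normC_q (hq0 : 0 < q) : ‖(q:ℂ)‖ = q := by
  simp [Complex.norm_real, Real.norm_eq_abs, abs_of_pos hq0]

lemma mul_pred_nonneg (s : ℤ) : 0 ≤ s*(s-1) := by
  rcases le_or_gt s 0 with h | h
  · nlinarith
  · nlinarith

lemma q_zpow_le_one (hq0 : 0 < q) (hq1 : q < 1) {E : ℤ} (hE : 0 ≤ E) :
    ‖(q:ℂ)^E‖ ≤ 1 := by
  rw [norm_zpow, normC_q hq0]
  rw [show E = ((E.toNat : ℕ) : ℤ) from by omega, zpow_natCast]
  exact pow_le_one₀ hq0.le hq1.le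

lemma norm_phiF_le (hq0 : 0 < q) (hq1 : q < 1) {c : ℝ} (hc0 : 0 < c)
    (hc : ∀ k, c ≤ RP q k) (M : ℤ) (i : ℕ) : ‖phiF q M i‖ ≤ 1/c := by
  rw [phiF, norm_div, norm_mul, norm_mul]
  have h1 : ‖((-1 : ℂ))^i‖ ≤ 1 := by rw [norm_pow, norm_neg, norm_one, one_pow]
  have h2 : ‖(q:ℂ)^(i*(i-1)/2)‖ ≤ 1 := by
    rw [norm_pow, normC_q hq0]
    exact pow_le_one₀ hq0.le hq1.le
  have h3 := norm_Abar_le_one hq0 hq1 (M - i)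
  have hden : c ≤ ‖qPoch q (q:ℂ) i‖ := by rw [norm_qPoch hq0 hq1]; exact hc i
  have hnum : ‖((-1 : ℂ))^i‖ * ‖(q:ℂ)^(i*(i-1)/2)‖ * ‖Abar q (M - i)‖ ≤ 1 := by
    have hab : ‖((-1 : ℂ))^i‖ * ‖(q:ℂ)^(i*(i-1)/2)‖ ≤ 1 :=
      mul_le_one₀ h1 (norm_nonneg _) h2
    exact mul_le_one₀ hab (norm_nonneg _) h3
  calc ‖((-1 : ℂ))^i‖ * ‖(q:ℂ)^(i*(i-1)/2)‖ * ‖Abar q (M - i)‖ / ‖qPoch q (q:ℂ) i‖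
      ≤ 1 / c := by
        apply div_le_div₀ (by norm_num) hnum hc0 hden

lemma norm_psiF_le (hq0 : 0 < q) (hq1 : q < 1) {c : ℝ} (hc0 : 0 < c)
    (hc : ∀ k, c ≤ RP q k) (N : ℤ) (j : ℕ) : ‖psiF q N j‖ ≤ 1/c := by
  rw [psiF, norm_div, norm_mul, norm_mul]
  have h1 : ‖((-1 : ℂ))^j‖ ≤ 1 := by rw [norm_pow, norm_neg, norm_one, one_pow]
  have h2 : ‖(q:ℂ)^((N-(j:ℤ))*(N-(j:ℤ)-1)/2)‖ ≤ 1 :=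
    q_zpow_le_one hq0 hq1 (Int.ediv_nonneg (mul_pred_nonneg _) (by norm_num))
  have h3 := norm_Abar_le_one hq0 hq1 (N - j)
  have hden : c ≤ ‖qPoch q (q:ℂ) j‖ := by rw [norm_qPoch hq0 hq1]; exact hc j
  have hnum : ‖((-1 : ℂ))^j‖ * ‖(q:ℂ)^((N-(j:ℤ))*(N-(j:ℤ)-1)/2)‖ * ‖Abar q (N - j)‖ ≤ 1 := by
    have hab : ‖((-1 : ℂ))^j‖ * ‖(q:ℂ)^((N-(j:ℤ))*(N-(j:ℤ)-1)/2)‖ ≤ 1 :=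
      mul_le_one₀ h1 (norm_nonneg _) h2
    exact mul_le_one₀ hab (norm_nonneg _) h3
  exact div_le_div₀ (by norm_num) hnum hc0 hden

lemma tsum_norm_phiF_le (hq0 : 0 < q) (hq1 : q < 1) {c : ℝ} (hc0 : 0 < c)
    (hc : ∀ k, c ≤ RP q k) (M : ℤ) :
    ∑' i, ‖phiF q M i‖ ≤ (M.toNat+1) * (1/c) := by
  rw [tsum_eq_sum (s := Finset.range (M.toNat+1))
    (fun b hb => by rw [phiF_eq_zero hq0 hq1 (by simp at hb; omega), norm_zero])]
  calc ∑ i ∈ Finset.range (M.toNat+1), ‖phiF q M i‖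
      ≤ ∑ _i ∈ Finset.range (M.toNat+1), (1/c) :=
        Finset.sum_le_sum fun i _ => norm_phiF_le hq0 hq1 hc0 hc M i
    _ = (M.toNat+1) * (1/c) := by
        rw [Finset.sum_const, Finset.card_range, nsmul_eq_mul]
        push_cast
        ring

lemma tsum_norm_psiF_le (hq0 : 0 < q) (hq1 : q < 1) {c : ℝ} (hc0 : 0 < c)
    (hc : ∀ k, c ≤ RP q k) (N : ℤ) :
    ∑' j, ‖psiF q N j‖ ≤ (N.toNat+1) * (1/c) := by
  rw [tsum_eq_sum (s := Finset.range (N.toNat+1))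
    (fun b hb => by rw [psiF_eq_zero hq0 hq1 (by simp at hb; omega), norm_zero])]
  calc ∑ j ∈ Finset.range (N.toNat+1), ‖psiF q N j‖
      ≤ ∑ _j ∈ Finset.range (N.toNat+1), (1/c) :=
        Finset.sum_le_sum fun j _ => norm_psiF_le hq0 hq1 hc0 hc N j
    _ = (N.toNat+1) * (1/c) := by
        rw [Finset.sum_const, Finset.card_range, nsmul_eq_mul]
        push_cast
        ring

lemma tsum_norm_phiF_zero (hq0 : 0 < q) (hq1 : q < 1) {M : ℤ} (hM : M < 0) :
    ∑' i, ‖phiF q M i‖ = 0 := by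
  rw [tsum_eq_sum (s := (∅ : Finset ℕ))
    (fun b _ => by rw [phiF_eq_zero hq0 hq1 (by omega), norm_zero])]
  simp

/-! ### The triple-sum function -/

noncomputable def FF (q : ℝ) (z : ℂ) (n m : ℤ) : ℤ × ℕ × ℕ → ℂ := fun p =>
  z ^ (2*p.1+n+m) * (q:ℂ)^((m+p.1)*(m+p.1-1)/2) *
    (qPochInf q ((q:ℂ)^(p.2.2) * (q:ℂ)^(n+p.1+1)) * (-z^2)^(p.2.2) / qPoch q (q:ℂ) p.2.2) *
    ((q:ℂ)^(p.2.1*(p.2.1-1)) * qPochInf q ((q:ℂ)^(p.2.1) * (q:ℂ)^(m+p.1+1)) *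
      (-((q:ℂ)^(m+p.1))*z^2)^(p.2.1) / qPoch q (q:ℂ) p.2.1)

lemma FF_eq (hq0 : 0 < q) (hq1 : q < 1) {z : ℂ} (hz : z ≠ 0) (n m : ℤ)
    (t : ℤ) (i j : ℕ) :
    FF q z n m (t - i - j, (i, j))
      = z^(2*t+n+m) * phiF q (n+t) i * psiF q (m+t) j := by
  have hQ := qC_ne hq0
  set k : ℤ := t - i - j with hk
  have hG : (q:ℂ)^(j:ℕ) * (q:ℂ)^(n+k+1) = (q:ℂ)^((n + t - i) + 1) := by
    rw [← zpow_natCast (q:ℂ) j, ← zpow_add₀ hQ]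
    congr 1
    rw [hk]; ring
  have hH : (q:ℂ)^(i:ℕ) * (q:ℂ)^(m+k+1) = (q:ℂ)^((m + t - j) + 1) := by
    rw [← zpow_natCast (q:ℂ) i, ← zpow_add₀ hQ]
    congr 1
    rw [hk]; ring
  have hpz : (-z^2)^j = (-1:ℂ)^j * z^((2*(j:ℤ))) := by
    rw [neg_pow, ← pow_mul, ← zpow_natCast z (2*j)]
    norm_cast
  have hpz2 : (-((q:ℂ)^(m+k))*z^2)^i
      = (-1:ℂ)^i * (q:ℂ)^((m+k)*(i:ℤ)) * z^((2*(i:ℤ))) := by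
    rw [show (-((q:ℂ)^(m+k))*z^2) = (-1) * ((q:ℂ)^(m+k)) * z^2 from by ring]
    rw [mul_pow, mul_pow, ← pow_mul, ← zpow_natCast z (2*i), ← zpow_natCast ((q:ℂ)^(m+k)) i,
      ← zpow_mul]
    norm_cast
  have hzmerge : z^(2*k+n+m) * z^(2*(j:ℤ)) * z^(2*(i:ℤ)) = z^(2*t+n+m) := by
    rw [← zpow_add₀ hz, ← zpow_add₀ hz]
    congr 1
    rw [hk]; ring
  have hii : (q:ℂ)^(i*(i-1) : ℕ) = (q:ℂ)^((i:ℤ)*((i:ℤ)-1)) := by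
    rw [← zpow_natCast (q:ℂ) (i*(i-1)), natcast_mul_pred]
  have hii2 : (q:ℂ)^(i*(i-1)/2 : ℕ) = (q:ℂ)^((i:ℤ)*((i:ℤ)-1)/2) := by
    rw [← zpow_natCast (q:ℂ) (i*(i-1)/2), natcast_tri]
  have hQmerge : (q:ℂ)^((m+k)*(m+k-1)/2) * (q:ℂ)^((i:ℤ)*((i:ℤ)-1)) * (q:ℂ)^((m+k)*(i:ℤ))
      = (q:ℂ)^((m+t-(j:ℤ))*(m+t-(j:ℤ)-1)/2) * (q:ℂ)^((i:ℤ)*((i:ℤ)-1)/2) := by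
    rw [← zpow_add₀ hQ, ← zpow_add₀ hQ, ← zpow_add₀ hQ]
    congr 1
    have hcomb := exp_combine (m+k) (i:ℤ)
    have harg : m + k + (i:ℤ) = m + t - j := by rw [hk]; ring
    have hdiv : (m+k+(i:ℤ))*(m+k+(i:ℤ)-1)/2 = (m+t-(j:ℤ))*(m+t-(j:ℤ)-1)/2 := by
      rw [harg]
    rw [hdiv] at hcomb
    linarith
  rw [FF]
  simp only
  rw [hG, hH, hpz, hpz2]
  rw [phiF, psiF]
  rw [show (n + t) - (i:ℤ) = n + t - i from rfl, show (m + t) - (j:ℤ) = m + t - j from rfl]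
  rw [hii2]
  calc z^(2*k+n+m) * (q:ℂ)^((m+k)*(m+k-1)/2) *
        (qPochInf q ((q:ℂ)^((n+t-(i:ℤ))+1)) * ((-1:ℂ)^j * z^(2*(j:ℤ))) / qPoch q (q:ℂ) j) *
        ((q:ℂ)^(i*(i-1):ℕ) * qPochInf q ((q:ℂ)^((m+t-(j:ℤ))+1)) *
          ((-1:ℂ)^i * (q:ℂ)^((m+k)*(i:ℤ)) * z^(2*(i:ℤ))) / qPoch q (q:ℂ) i)
      = (z^(2*k+n+m) * z^(2*(j:ℤ)) * z^(2*(i:ℤ)))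
        * ((q:ℂ)^((m+k)*(m+k-1)/2) * (q:ℂ)^((i:ℤ)*((i:ℤ)-1)) * (q:ℂ)^((m+k)*(i:ℤ)))
        * ((-1:ℂ)^j * (-1:ℂ)^i)
        * qPochInf q ((q:ℂ)^((n+t-(i:ℤ))+1)) * qPochInf q ((q:ℂ)^((m+t-(j:ℤ))+1))
        / (qPoch q (q:ℂ) j * qPoch q (q:ℂ) i) := by
        rw [hii]
        ring
    _ = z^(2*t+n+m)
        * ((q:ℂ)^((m+t-(j:ℤ))*(m+t-(j:ℤ)-1)/2) * (q:ℂ)^((i:ℤ)*((i:ℤ)-1)/2))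
        * ((-1:ℂ)^j * (-1:ℂ)^i)
        * qPochInf q ((q:ℂ)^((n+t-(i:ℤ))+1)) * qPochInf q ((q:ℂ)^((m+t-(j:ℤ))+1))
        / (qPoch q (q:ℂ) j * qPoch q (q:ℂ) i) := by
        rw [hzmerge, hQmerge]
    _ = z^(2*t+n+m) *
        ((-1:ℂ)^i * (q:ℂ)^((i:ℤ)*((i:ℤ)-1)/2) * Abar q (n+t-(i:ℤ)) / qPoch q (q:ℂ) i) *
        ((-1:ℂ)^j * (q:ℂ)^((m+t-(j:ℤ))*(m+t-(j:ℤ)-1)/2) * Abar q (m+t-(j:ℤ))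
          / qPoch q (q:ℂ) j) := by
        rw [Abar, Abar]
        ring

lemma FF_fiber (z : ℂ) (n m k : ℤ)
    (hsum : Summable fun p : ℕ × ℕ => FF q z n m (k, p)) :
    ∑' p : ℕ × ℕ, FF q z n m (k, p)
      = z ^ (2*k+n+m) * (q:ℂ)^((m+k)*(m+k-1)/2) * Gqb q (-z^2) ((q:ℂ)^(n+k+1)) *
        Hqb q (-((q:ℂ)^(m+k))*z^2) ((q:ℂ)^(m+k+1)) := by
  rw [Summable.tsum_prod' hsum (fun i => hsum.prod_factor i)]
  have hinner : ∀ i : ℕ, ∑' j : ℕ, FF q z n m (k,(i,j))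
      = (z^(2*k+n+m) * (q:ℂ)^((m+k)*(m+k-1)/2) *
         ((q:ℂ)^(i*(i-1)) * qPochInf q ((q:ℂ)^i * (q:ℂ)^(m+k+1)) *
           (-((q:ℂ)^(m+k))*z^2)^i / qPoch q (q:ℂ) i))
        * Gqb q (-z^2) ((q:ℂ)^(n+k+1)) := by
    intro i
    rw [show (fun j : ℕ => FF q z n m (k,(i,j)))
        = (fun j : ℕ => (z^(2*k+n+m) * (q:ℂ)^((m+k)*(m+k-1)/2) *
           ((q:ℂ)^(i*(i-1)) * qPochInf q ((q:ℂ)^i * (q:ℂ)^(m+k+1)) *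
             (-((q:ℂ)^(m+k))*z^2)^i / qPoch q (q:ℂ) i)) *
           (qPochInf q ((q:ℂ)^j * (q:ℂ)^(n+k+1)) * (-z^2)^j / qPoch q (q:ℂ) j))
      from funext fun j => by rw [FF]; ring]
    rw [tsum_mul_left]
    rfl
  rw [tsum_congr hinner, tsum_mul_right, tsum_mul_left]
  rw [show (∑' i : ℕ, (q:ℂ)^(i*(i-1)) * qPochInf q ((q:ℂ)^i * (q:ℂ)^(m+k+1)) *
      (-((q:ℂ)^(m+k))*z^2)^i / qPoch q (q:ℂ) i)
    = Hqb q (-((q:ℂ)^(m+k))*z^2) ((q:ℂ)^(m+k+1)) from rfl]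
  ring

lemma summable_poly_geo (B : ℕ) {x : ℝ} (hx0 : 0 ≤ x) (hx1 : x < 1) :
    Summable (fun s : ℕ => ((s:ℝ)+1) * ((s:ℝ)+B+1) * x^s) := by
  have hxn : ‖x‖ < 1 := by rwa [Real.norm_eq_abs, _root_.abs_of_nonneg hx0]
  have h2 := summable_pow_mul_geometric_of_norm_lt_one (R := ℝ) 2 hxn
  have h1 := summable_pow_mul_geometric_of_norm_lt_one (R := ℝ) 1 hxn
  have h0 := summable_geometric_of_lt_one hx0 hx1
  have := (h2.add ((h1.mul_left ((B:ℝ)+2)))).add (h0.mul_left ((B:ℝ)+1))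
  apply this.congr
  intro s
  push_cast
  ring

def shiftEquiv : (ℤ × ℕ × ℕ) ≃ (ℤ × ℕ × ℕ) where
  toFun p := (p.1 - p.2.1 - p.2.2, p.2)
  invFun p := (p.1 + p.2.1 + p.2.2, p.2)
  left_inv p := by
    rcases p with ⟨t, i, j⟩
    have h : t - i - j + i + j = t := by ring
    simp [h]
  right_inv p := by
    rcases p with ⟨t, i, j⟩
    have h : t + i + j - i - j = t := by ring
    simp [h]

end HLaux


open HLaux

/-- Hansen–Lommel type biorthogonality (2.14) for Jackson's two q-Bessel functions:
`∑_{k∈ℤ} z^{2k+n+m} q^{(m+k)(m+k-1)/2} G(-z²,q^{n+k+1}) H(-q^{m+k}z²,q^{m+k+1}) = (q;q)_∞² δ_{nm}`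
for `0 < |z| < 1`, with absolute convergence. -/
theorem stmt9 (q : ℝ) (hq0 : 0 < q) (hq1 : q < 1) (z : ℂ)
    (hz0 : 0 < ‖z‖) (hz1 : ‖z‖ < 1) (n m : ℤ) :
    (Summable fun k : ℤ =>
      ‖z ^ (2 * k + n + m) * (q : ℂ) ^ ((m + k) * (m + k - 1) / 2) *
        Gqb q (-z ^ 2) ((q : ℂ) ^ (n + k + 1)) *
        Hqb q (-((q : ℂ) ^ (m + k)) * z ^ 2) ((q : ℂ) ^ (m + k + 1))‖) ∧
    ∑' k : ℤ, z ^ (2 * k + n + m) * (q : ℂ) ^ ((m + k) * (m + k - 1) / 2) *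
        Gqb q (-z ^ 2) ((q : ℂ) ^ (n + k + 1)) *
        Hqb q (-((q : ℂ) ^ (m + k)) * z ^ 2) ((q : ℂ) ^ (m + k + 1)) =
      qPochInf q (q : ℂ) ^ 2 * (if n = m then 1 else 0) := by
  classical
  obtain ⟨c, hc0, hc⟩ := exists_RP_lb hq0 hq1
  have hzne : z ≠ 0 := by
    intro h; rw [h] at hz0; simp at hz0
  have hw0 : 0 < ‖z‖ := by exact hz0
  have hw1 : ‖z‖ < 1 := by exact hz1
  have hFe_eq : ∀ (t : ℤ) (p : ℕ × ℕ), FF q z n m (shiftEquiv (t, p))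
      = z^(2*t+n+m) * phiF q (n+t) p.1 * psiF q (m+t) p.2 := by
    intro t p
    rcases p with ⟨i, j⟩
    exact FF_eq hq0 hq1 hzne n m t i j
  have hnormFe : ∀ (t : ℤ) (p : ℕ × ℕ), ‖FF q z n m (shiftEquiv (t,p))‖
      = ‖z‖^(2*t+n+m) * (‖phiF q (n+t) p.1‖ * ‖psiF q (m+t) p.2‖) := by
    intro t p
    rw [hFe_eq, norm_mul, norm_mul, norm_zpow, mul_assoc]
  have hφsum : ∀ M : ℤ, Summable fun i : ℕ => ‖phiF q M i‖ := fun M =>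
    summable_of_ne_finset_zero (s := Finset.range (M.toNat+1))
      (fun b hb => by rw [phiF_eq_zero hq0 hq1 (by simp at hb; omega), norm_zero])
  have hψsum : ∀ N : ℤ, Summable fun j : ℕ => ‖psiF q N j‖ := fun N =>
    summable_of_ne_finset_zero (s := Finset.range (N.toNat+1))
      (fun b hb => by rw [psiF_eq_zero hq0 hq1 (by simp at hb; omega), norm_zero])
  have hfib : ∀ t : ℤ, Summable (fun p : ℕ × ℕ => ‖FF q z n m (shiftEquiv (t, p))‖) := by
    intro t
    apply summable_of_ne_finset_zero
      (s := Finset.range ((n+t).toNat+1) ×ˢ Finset.range ((m+t).toNat+1))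
    intro p hp
    rcases p with ⟨i, j⟩
    rw [Finset.mem_product, Finset.mem_range, Finset.mem_range] at hp
    push_neg at hp
    rw [hFe_eq]
    by_cases hi : (n + t) < (i:ℤ)
    · rw [phiF_eq_zero hq0 hq1 hi]
      simp
    · have hj : (m + t) < (j:ℤ) := by
        push_neg at hi
        have := hp (by omega)
        omega
      rw [psiF_eq_zero hq0 hq1 hj]
      simp
  have hfibval : ∀ t : ℤ, ∑' p : ℕ × ℕ, ‖FF q z n m (shiftEquiv (t,p))‖
      = ‖z‖^(2*t+n+m)
        * ((∑' i, ‖phiF q (n+t) i‖) * (∑' j, ‖psiF q (m+t) j‖)) := by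
    intro t
    rw [tsum_congr (fun p => hnormFe t p), tsum_mul_left]
    congr 1
    have hps : Summable fun p : ℕ × ℕ => ‖phiF q (n+t) p.1‖ * ‖psiF q (m+t) p.2‖ := by
      apply summable_of_ne_finset_zero
        (s := Finset.range ((n+t).toNat+1) ×ˢ Finset.range ((m+t).toNat+1))
      intro p hp
      rcases p with ⟨i, j⟩
      rw [Finset.mem_product, Finset.mem_range, Finset.mem_range] at hp
      push_neg at hp
      by_cases hi : (n + t) < (i:ℤ)
      · rw [phiF_eq_zero hq0 hq1 hi]
        simp
      · have hj : (m + t) < (j:ℤ) := by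
          push_neg at hi
          have := hp (by omega)
          omega
        rw [psiF_eq_zero hq0 hq1 hj]
        simp
    rw [Summable.tsum_prod' hps (fun i => hps.prod_factor i)]
    calc ∑' i, ∑' j, ‖phiF q (n+t) i‖ * ‖psiF q (m+t) j‖
        = ∑' i, ‖phiF q (n+t) i‖ * (∑' j, ‖psiF q (m+t) j‖) :=
          tsum_congr fun i => tsum_mul_left
      _ = _ := tsum_mul_right
  have hmaj : ∀ t : ℤ, ∑' p : ℕ × ℕ, ‖FF q z n m (shiftEquiv (t,p))‖
      ≤ (if 0 ≤ n+t then ‖z‖^(2*t+n+m)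
          * ((((n+t).toNat+1) * (1/c)) * ((((m+t).toNat+1)) * (1/c))) else 0) := by
    intro t
    rw [hfibval t]
    by_cases hnt : 0 ≤ n + t
    · rw [if_pos hnt]
      have h1 := tsum_norm_phiF_le hq0 hq1 hc0 hc (n+t)
      have h2 := tsum_norm_psiF_le hq0 hq1 hc0 hc (m+t)
      have hwp : (0:ℝ) < ‖z‖^(2*t+n+m) := zpow_pos hw0 _
      apply mul_le_mul_of_nonneg_left _ hwp.le
      apply mul_le_mul h1 h2 (tsum_nonneg (fun _ => norm_nonneg _)) (by positivity)
    · rw [if_neg hnt, tsum_norm_phiF_zero hq0 hq1 (by omega), zero_mul, mul_zero]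
  have hgsum : Summable (fun t : ℤ => (if 0 ≤ n+t then ‖z‖^(2*t+n+m)
      * ((((n+t).toNat+1) * (1/c)) * ((((m+t).toNat+1)) * (1/c))) else 0)) := by
    have hinj : Function.Injective (fun s : ℕ => -n + (s:ℤ)) := by
      intro a b hab
      simpa using hab
    rw [← Function.Injective.summable_iff hinj (by
      intro t ht
      apply if_neg
      intro h0
      exact ht ⟨(n+t).toNat, by simp; omega⟩)]
    have hx0 : (0:ℝ) ≤ ‖z‖^2 := by positivity
    have hx1 : ‖z‖^2 < 1 := by nlinarith
    apply Summable.of_nonneg_of_le (fun s => ?_) (fun s => ?_)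
      ((summable_poly_geo ((m-n).toNat) hx0 hx1).mul_left
        (‖z‖^(m-n) * ((1/c)*(1/c))))
    · dsimp only [Function.comp]
      split
      · positivity
      · exact le_refl 0
    · dsimp only [Function.comp]
      rw [if_pos (by omega)]
      have he1 : ‖z‖^(2*(-n+(s:ℤ))+n+m) = ‖z‖^(m-n) * (‖z‖^2)^s := by
        rw [← pow_mul, ← zpow_natCast ‖z‖ (2*s), ← zpow_add₀ hw0.ne']
        congr 1
        push_cast
        ring
      have he2 : ((n + (-n + (s:ℤ))).toNat : ℝ) = (s:ℝ) := by
        have : (n + (-n + (s:ℤ))).toNat = s := by omega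
        rw [this]
      have he3 : ((m + (-n + (s:ℤ))).toNat : ℝ) ≤ (s:ℝ) + ((m-n).toNat : ℝ) := by
        have h4 : (m + (-n + (s:ℤ))).toNat ≤ s + (m-n).toNat := by omega
        calc ((m + (-n + (s:ℤ))).toNat : ℝ) ≤ ((s + (m-n).toNat : ℕ) : ℝ) := by
              exact_mod_cast h4
          _ = (s:ℝ) + ((m-n).toNat : ℝ) := by push_cast; ring
      rw [he1]
      have hc1 : (0:ℝ) ≤ 1/c := by positivity
      calc ‖z‖^(m-n) * (‖z‖^2)^s
            * ((((n + (-n + (s:ℤ))).toNat+1) * (1/c)) * ((((m + (-n + (s:ℤ))).toNat+1)) * (1/c)))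
          = (‖z‖^(m-n) * ((1/c)*(1/c)))
            * ((((n + (-n + (s:ℤ))).toNat : ℝ)+1) * (((m + (-n + (s:ℤ))).toNat : ℝ)+1) * (‖z‖^2)^s) := by
            ring
        _ ≤ (‖z‖^(m-n) * ((1/c)*(1/c)))
            * (((s:ℝ)+1) * (((s:ℝ)+((m-n).toNat : ℝ)+1)) * (‖z‖^2)^s) := by
            apply mul_le_mul_of_nonneg_left _ (by positivity)
            apply mul_le_mul_of_nonneg_right _ (by positivity)
            rw [he2]
            apply mul_le_mul_of_nonneg_left _ (by positivity)
            linarith [he3]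
        _ = (‖z‖^(m-n) * ((1/c)*(1/c))) * (((s:ℝ)+1) * ((s:ℝ)+((m-n).toNat : ℝ)+1) * (‖z‖^2)^s) := by
            ring
  have houter : Summable (fun t : ℤ => ∑' p : ℕ × ℕ, ‖FF q z n m (shiftEquiv (t,p))‖) :=
    Summable.of_nonneg_of_le (fun t => tsum_nonneg fun _ => norm_nonneg _) hmaj hgsum
  have hFeN : Summable (fun p : ℤ × ℕ × ℕ => ‖FF q z n m (shiftEquiv p)‖) := by
    apply (summable_prod_of_nonneg (fun p => norm_nonneg _)).mpr
    exact ⟨hfib, houter⟩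
  have hFN : Summable (fun p : ℤ × ℕ × ℕ => ‖FF q z n m p‖) :=
    (shiftEquiv.summable_iff (f := fun p : ℤ × ℕ × ℕ => ‖FF q z n m p‖)).mp hFeN
  have hFsum : Summable (FF q z n m) := hFN.of_norm
  have hFesum : Summable (FF q z n m ∘ shiftEquiv) :=
    (shiftEquiv.summable_iff (f := FF q z n m)).mpr hFsum
  have hTk : ∀ k : ℤ, ∑' p : ℕ × ℕ, FF q z n m (k, p)
      = z ^ (2 * k + n + m) * (q : ℂ) ^ ((m + k) * (m + k - 1) / 2) *
        Gqb q (-z ^ 2) ((q : ℂ) ^ (n + k + 1)) *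
        Hqb q (-((q : ℂ) ^ (m + k)) * z ^ 2) ((q : ℂ) ^ (m + k + 1)) := fun k =>
    FF_fiber z n m k (hFsum.prod_factor k)
  constructor
  · apply Summable.of_nonneg_of_le (fun k => norm_nonneg _) (fun k => ?_)
      (((summable_prod_of_nonneg (fun _ => norm_nonneg _)).mp hFN).2)
    rw [← hTk k]
    exact norm_tsum_le_tsum_norm (hFN.prod_factor k)
  · have cinf := qPochInf q (q:ℂ)
    calc ∑' k : ℤ, z ^ (2 * k + n + m) * (q : ℂ) ^ ((m + k) * (m + k - 1) / 2) *
          Gqb q (-z ^ 2) ((q : ℂ) ^ (n + k + 1)) *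
          Hqb q (-((q : ℂ) ^ (m + k)) * z ^ 2) ((q : ℂ) ^ (m + k + 1))
        = ∑' k : ℤ, ∑' p : ℕ × ℕ, FF q z n m (k, p) := tsum_congr fun k => (hTk k).symm
      _ = ∑' p : ℤ × ℕ × ℕ, FF q z n m p :=
          (Summable.tsum_prod' hFsum (fun k => hFsum.prod_factor k)).symm
      _ = ∑' p : ℤ × ℕ × ℕ, FF q z n m (shiftEquiv p) :=
          (shiftEquiv.tsum_eq (FF q z n m)).symm
      _ = ∑' t : ℤ, ∑' p : ℕ × ℕ, FF q z n m (shiftEquiv (t, p)) :=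
          Summable.tsum_prod' hFesum (fun t => hFesum.prod_factor t)
      _ = ∑' t : ℤ, z^(2*t+n+m)
            * ((if n+t = 0 then qPochInf q (q:ℂ) else 0)
              * (if m+t = 0 then qPochInf q (q:ℂ) else 0)) := by
          apply tsum_congr
          intro t
          have hps : Summable (fun p : ℕ × ℕ => FF q z n m (shiftEquiv (t,p))) :=
            hFesum.prod_factor t
          rw [tsum_congr (fun p : ℕ × ℕ => hFe_eq t p)]
          have hsump : Summable (fun p : ℕ × ℕ =>
              z^(2*t+n+m) * phiF q (n+t) p.1 * psiF q (m+t) p.2) :=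
            hps.congr (fun p => hFe_eq t p)
          rw [Summable.tsum_prod' hsump (fun i => hsump.prod_factor i)]
          calc ∑' i, ∑' j, z^(2*t+n+m) * phiF q (n+t) i * psiF q (m+t) j
              = ∑' i, (z^(2*t+n+m) * phiF q (n+t) i) * (∑' j, psiF q (m+t) j) :=
                tsum_congr fun i => tsum_mul_left
            _ = (∑' i, z^(2*t+n+m) * phiF q (n+t) i) * (∑' j, psiF q (m+t) j) :=
                tsum_mul_right
            _ = z^(2*t+n+m) * ((∑' i, phiF q (n+t) i) * (∑' j, psiF q (m+t) j)) := by
                rw [tsum_mul_left]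
                ring
            _ = _ := by
                rw [phi_eval hq0 hq1 (n+t), psi_eval hq0 hq1 (m+t)]
      _ = qPochInf q (q : ℂ) ^ 2 * (if n = m then 1 else 0) := by
          rw [tsum_eq_single (-n) (fun t' ht' => by
            rw [if_neg (by omega), zero_mul, mul_zero])]
          rcases eq_or_ne n m with hnm | hnm
          · subst hnm
            rw [if_pos (show n + -n = 0 by ring), if_pos (show n = n from rfl),
              show 2 * -n + n + n = (0:ℤ) from by ring, zpow_zero]
            ring
          · rw [if_neg (show ¬(m + -n = 0) by omega), if_neg hnm]
            simp
end

section
/- Let 0 < q < 1 and let x, y, s, t ∈ ℂ be nonzero with |y| < |t| < |y|^{-1}, and assume s^{-1}xy^{-1} ≠ q^j for every integer j. Then (xs^{-1}t;q)_∞ (-xst^{-1};q)_∞ / ((yt;q)_∞ (-yt^{-1};q)_∞) = ∑_{n=-∞}^∞ t^n y^n [(s^{-1}xy^{-1};q)_∞ / ((q^n s^{-1}xy^{-1};q)_∞ (q;q)_∞)] · Φ(q^n s^{-1}xy^{-1}, s x y^{-1}; q^{n+1}; -y²), with the bilateral series converging absolutely. (This is Heine's generating-function identity in the generalized form with parameter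 s.) -/
open Complex Filter

/-- `Φ(a,b;c;z) = ∑ (a;q)_k (b;q)_k (q^k c;q)_∞ z^k / (q;q)_k`,
so `Φ(a,b;c;z) = (c;q)_∞ ₂φ₁(a,b;c;q,z)` away from the poles. -/
noncomputable def PhiE (q : ℝ) (a b c z : ℂ) : ℂ :=
  ∑' k : ℕ, qPoch q a k * qPoch q b k * qPochInf q ((q : ℂ) ^ k * c) * z ^ k / qPoch q (q : ℂ) k

noncomputable def qBinF (q : ℝ) (a z : ℂ) : ℂ :=
  ∑' n : ℕ, qPoch q a n * z^n / qPoch q (q:ℂ) n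

section Lemmas

variable {q : ℝ} (hq0 : 0 < q) (hq1 : q < 1)

lemma normQpow (hq0 : 0 < q) (a : ℂ) (j : ℕ) : ‖a * (q:ℂ)^j‖ = ‖a‖ * q^j := by
  rw [norm_mul, norm_pow, Complex.norm_real, Real.norm_of_nonneg hq0.le]

include hq0 hq1 in
lemma summable_norm_aq (a : ℂ) : Summable fun j : ℕ => ‖a * (q:ℂ)^j‖ := by
  simpa only [normQpow hq0 a] using (summable_geometric_of_lt_one hq0.le hq1).mul_left ‖a‖

include hq0 hq1 in
lemma multipliable_tail (a : ℂ) (ha : ‖a‖ < 1/2) :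
    Multipliable fun j : ℕ => 1 - a * (q:ℂ)^j := by
  have hb : ∀ j : ℕ, ‖a * (q:ℂ)^j‖ ≤ ‖a‖ := by
    intro j
    rw [normQpow hq0 a j]
    exact mul_le_of_le_one_right (norm_nonneg _) (pow_le_one₀ hq0.le hq1.le)
  have hne : ∀ j : ℕ, (1 : ℂ) - a * (q:ℂ)^j ≠ 0 := by
    intro j h
    have : ‖a * (q:ℂ)^j‖ = 1 := by
      have : a * (q:ℂ)^j = 1 := by linear_combination -h
      simp [this]
    linarith [hb j]
  have hlog : Summable fun j : ℕ => Complex.log (1 - a * (q:ℂ)^j) := by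
    apply Summable.of_norm
    apply Summable.of_nonneg_of_le (fun _ => norm_nonneg _)
      (fun j => ?_) (((summable_norm_aq hq0 hq1 a)).mul_left (3/2))
    have := Complex.norm_log_one_add_half_le_self (z := -(a * (q:ℂ)^j))
      (by rw [norm_neg]; exact le_trans (hb j) ha.le)
    rw [norm_neg] at this
    simpa [sub_eq_add_neg] using this
  exact Complex.multipliable_of_summable_log hlog

include hq0 hq1 in
lemma multipliable_one_sub (a : ℂ) : Multipliable fun j : ℕ => 1 - a * (q:ℂ)^j := by
  obtain ⟨K, hK⟩ : ∃ K : ℕ, ‖a‖ * q^K < 1/2 := by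
    have h := tendsto_pow_atTop_nhds_zero_of_lt_one hq0.le hq1
    have h2 := h.const_mul ‖a‖
    rw [mul_zero] at h2
    have := (h2.eventually (eventually_lt_nhds (by norm_num : (0:ℝ) < 1/2))).exists
    exact this
  have htail : Multipliable fun n : ℕ => 1 - (a * (q:ℂ)^K) * (q:ℂ)^n := by
    apply multipliable_tail hq0 hq1
    rwa [normQpow hq0]
  have htail' : Multipliable fun n : ℕ => 1 - a * (q:ℂ)^(n + K) := by
    refine htail.congr fun n => ?_
    simp only [pow_add]; ring_nf
  exact (HasProd.prod_range_mul (f := fun j : ℕ => 1 - a*(q:ℂ)^j) (k := K) htail'.hasProd).multipliable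

include hq0 hq1 in
/-- splitting the infinite product -/
lemma qPochInf_split (a : ℂ) (k : ℕ) :
    qPochInf q a = qPoch q a k * qPochInf q ((q:ℂ)^k * a) := by
  have htail : Multipliable fun n : ℕ => 1 - a * (q:ℂ)^(n + k) := by
    refine (multipliable_one_sub hq0 hq1 ((q:ℂ)^k * a)).congr fun n => ?_
    simp only [pow_add]; ring_nf
  have := Multipliable.prod_mul_tprod_nat_mul' (f := fun j : ℕ => 1 - a * (q:ℂ)^j) (k := k) htail
  rw [qPochInf, ← this, qPoch, qPochInf]
  congr 1
  exact tprod_congr fun n => by simp only [pow_add]; ring_nf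

include hq0 hq1 in
lemma qPochInf_ne_zero (a : ℂ) (h : ∀ j : ℕ, (1:ℂ) - a * (q:ℂ)^j ≠ 0) :
    qPochInf q a ≠ 0 := by
  obtain ⟨K, hK⟩ : ∃ K : ℕ, ‖a‖ * q^K < 1/2 := by
    have h2 := (tendsto_pow_atTop_nhds_zero_of_lt_one hq0.le hq1).const_mul ‖a‖
    rw [mul_zero] at h2
    exact (h2.eventually (eventually_lt_nhds (by norm_num : (0:ℝ) < 1/2))).exists
  rw [qPochInf_split hq0 hq1 a K]
  apply mul_ne_zero
  · exact Finset.prod_ne_zero_iff.2 fun j _ => h j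
  · set b := (q:ℂ)^K * a with hb
    have hbn : ‖b‖ < 1/2 := by
      rw [hb, mul_comm, normQpow hq0 a K]; exact hK
    have hbj : ∀ j : ℕ, ‖b * (q:ℂ)^j‖ < 1/2 := by
      intro j
      rw [normQpow hq0 b j]
      calc ‖b‖ * q^j ≤ ‖b‖ * 1 := by
            apply mul_le_mul_of_nonneg_left (pow_le_one₀ hq0.le hq1.le) (norm_nonneg _)
        _ < 1/2 := by rwa [mul_one]
    have hne : ∀ j : ℕ, (1:ℂ) - b * (q:ℂ)^j ≠ 0 := by
      intro j hj
      have h1 : b * (q:ℂ)^j = 1 := by linear_combination -hj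
      have h2 := hbj j; rw [h1] at h2; simp at h2; linarith
    have hlog : Summable fun j : ℕ => Complex.log (1 - b * (q:ℂ)^j) := by
      apply Summable.of_norm
      apply Summable.of_nonneg_of_le (fun _ => norm_nonneg _)
        (fun j => ?_) (((summable_norm_aq hq0 hq1 b)).mul_left (3/2))
      have := Complex.norm_log_one_add_half_le_self (z := -(b * (q:ℂ)^j))
        (by rw [norm_neg]; exact (hbj j).le)
      rw [norm_neg] at this
      simpa [sub_eq_add_neg] using this
    have h2 : cexp (∑' j, Complex.log (1 - b * (q:ℂ)^j)) = ∏' j : ℕ, (1 - b * (q:ℂ)^j) :=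
      Complex.cexp_tsum_eq_tprod hne hlog
    rw [qPochInf, ← h2]
    exact Complex.exp_ne_zero _

end Lemmas

section L2
variable {q : ℝ} (hq0 : 0 < q) (hq1 : q < 1)

lemma normQpow' (hq0 : 0 < q) (a : ℂ) (j : ℕ) : ‖a * (q:ℂ)^j‖ = ‖a‖ * q^j := by
  rw [norm_mul, norm_pow, Complex.norm_real, Real.norm_of_nonneg hq0.le]

lemma one_sub_ne_of_norm_lt {z : ℂ} (h : ‖z‖ < 1) : (1:ℂ) - z ≠ 0 := by
  intro h0
  have : z = 1 := by linear_combination -h0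
  rw [this] at h; simp at h

include hq0 hq1 in
lemma finprod_bound (a : ℂ) (S : Finset ℕ) :
    ‖∏ j ∈ S, ((1:ℂ) - a*(q:ℂ)^j)‖ ≤ Real.exp (‖a‖ * (1-q)⁻¹) := by
  have hsum : Summable fun j : ℕ => ‖a‖ * q^j :=
    (summable_geometric_of_lt_one hq0.le hq1).mul_left ‖a‖
  calc ‖∏ j ∈ S, ((1:ℂ) - a*(q:ℂ)^j)‖ = ∏ j ∈ S, ‖(1:ℂ) - a*(q:ℂ)^j‖ := norm_prod _ _
    _ ≤ ∏ j ∈ S, Real.exp (‖a‖ * q^j) := by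
        apply Finset.prod_le_prod (fun j _ => norm_nonneg _)
        intro j _
        calc ‖(1:ℂ) - a*(q:ℂ)^j‖ ≤ ‖(1:ℂ)‖ + ‖a*(q:ℂ)^j‖ := norm_sub_le _ _
          _ = ‖a‖ * q^j + 1 := by rw [normQpow' hq0 a j, norm_one]; ring
          _ ≤ Real.exp (‖a‖ * q^j) := Real.add_one_le_exp _
    _ = Real.exp (∑ j ∈ S, ‖a‖ * q^j) := (Real.exp_sum _ _).symm
    _ ≤ Real.exp (‖a‖ * (1-q)⁻¹) := by
        apply Real.exp_le_exp.2
        calc ∑ j ∈ S, ‖a‖ * q^j ≤ ∑' j : ℕ, ‖a‖ * q^j :=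
              Summable.sum_le_tsum S (fun j _ => by positivity) hsum
          _ = ‖a‖ * (1-q)⁻¹ := by
              rw [tsum_mul_left, tsum_geometric_of_lt_one hq0.le hq1]

include hq0 hq1 in
lemma norm_qPoch_le (a : ℂ) (k : ℕ) : ‖qPoch q a k‖ ≤ Real.exp (‖a‖ * (1-q)⁻¹) :=
  finprod_bound hq0 hq1 a _

include hq0 hq1 in
lemma norm_qPochInf_le (a : ℂ) : ‖qPochInf q a‖ ≤ Real.exp (‖a‖ * (1-q)⁻¹) := by
  have hp := (multipliable_one_sub hq0 hq1 a).hasProd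
  have ht : Tendsto (fun S : Finset ℕ => ‖∏ j ∈ S, ((1:ℂ) - a*(q:ℂ)^j)‖) atTop
      (nhds ‖qPochInf q a‖) := Filter.Tendsto.norm hp
  exact le_of_tendsto ht (Eventually.of_forall fun S => finprod_bound hq0 hq1 a S)

include hq0 hq1 in
lemma one_sub_q_pow_ne (j : ℕ) : (1:ℂ) - (q:ℂ) * (q:ℂ)^j ≠ 0 := by
  apply one_sub_ne_of_norm_lt
  rw [normQpow' hq0 (q:ℂ), Complex.norm_real, Real.norm_of_nonneg hq0.le]
  calc q * q^j ≤ q * 1 := by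
        apply mul_le_mul_of_nonneg_left (pow_le_one₀ hq0.le hq1.le) hq0.le
    _ < 1 := by rwa [mul_one]

include hq0 hq1 in
lemma qPochInf_q_ne_zero : qPochInf q (q:ℂ) ≠ 0 :=
  qPochInf_ne_zero hq0 hq1 _ (one_sub_q_pow_ne hq0 hq1)

include hq0 hq1 in
lemma qPoch_q_ne_zero (k : ℕ) : qPoch q (q:ℂ) k ≠ 0 :=
  Finset.prod_ne_zero_iff.2 fun j _ => one_sub_q_pow_ne hq0 hq1 j

include hq0 hq1 in
lemma qPoch_q_lower (k : ℕ) :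
    ‖qPochInf q (q:ℂ)‖ / Real.exp (q * (1-q)⁻¹) ≤ ‖qPoch q (q:ℂ) k‖ := by
  have hsplit := qPochInf_split hq0 hq1 (q:ℂ) k
  have hb : ‖qPochInf q ((q:ℂ)^k * (q:ℂ))‖ ≤ Real.exp (q * (1-q)⁻¹) := by
    refine le_trans (norm_qPochInf_le hq0 hq1 _) (Real.exp_le_exp.2 ?_)
    have h1q : (0:ℝ) ≤ (1-q)⁻¹ := by
      rw [inv_nonneg]; linarith
    apply mul_le_mul_of_nonneg_right _ h1q
    rw [mul_comm, normQpow' hq0 (q:ℂ) k, Complex.norm_real, Real.norm_of_nonneg hq0.le]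
    calc q * q^k ≤ q * 1 := by
          apply mul_le_mul_of_nonneg_left (pow_le_one₀ hq0.le hq1.le) hq0.le
      _ = q := mul_one q
  rw [div_le_iff₀ (Real.exp_pos _), hsplit, norm_mul]
  exact mul_le_mul_of_nonneg_left hb (norm_nonneg _)

end L2

/-- uniform bound for the coefficients `(a;q)_n/(q;q)_n` -/
noncomputable def Bco (q : ℝ) (a : ℂ) : ℝ :=
  Real.exp (‖a‖ * (1-q)⁻¹) / (‖qPochInf q (q:ℂ)‖ / Real.exp (q * (1-q)⁻¹))

section QBinom
variable {q : ℝ} (hq0 : 0 < q) (hq1 : q < 1)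

include hq0 hq1 in
lemma Bco_pos (a : ℂ) : 0 < Bco q a := by
  have hc0 : 0 < ‖qPochInf q (q:ℂ)‖ := norm_pos_iff.2 (qPochInf_q_ne_zero hq0 hq1)
  unfold Bco; positivity

include hq0 hq1 in
lemma coeff_bound (a : ℂ) (n : ℕ) : ‖qPoch q a n / qPoch q (q:ℂ) n‖ ≤ Bco q a := by
  rw [norm_div]
  have hc0 : 0 < ‖qPochInf q (q:ℂ)‖ := norm_pos_iff.2 (qPochInf_q_ne_zero hq0 hq1)
  exact div_le_div₀ (Real.exp_pos _).le (norm_qPoch_le hq0 hq1 a n)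
    (by positivity) (qPoch_q_lower hq0 hq1 n)

include hq0 hq1 in
lemma summable_norm_term (a w : ℂ) (hw : ‖w‖ < 1) :
    Summable fun n : ℕ => ‖qPoch q a n * w^n / qPoch q (q:ℂ) n‖ := by
  apply Summable.of_nonneg_of_le (fun _ => norm_nonneg _) (fun n => ?_)
    ((summable_geometric_of_lt_one (norm_nonneg w) hw).mul_left (Bco q a))
  rw [mul_div_right_comm, norm_mul, norm_pow]
  exact mul_le_mul_of_nonneg_right (coeff_bound hq0 hq1 a n) (by positivity)

include hq0 hq1 in
lemma summable_term (a w : ℂ) (hw : ‖w‖ < 1) :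
    Summable fun n : ℕ => qPoch q a n * w^n / qPoch q (q:ℂ) n :=
  (summable_norm_term hq0 hq1 a w hw).of_norm


include hq0 hq1 in
lemma funEq (a z : ℂ) (hz : ‖z‖ < 1) :
    (1 - z) * qBinF q a z = (1 - a*z) * qBinF q a ((q:ℂ)*z) := by
  set f : ℕ → ℂ := fun n => qPoch q a n * z^n / qPoch q (q:ℂ) n with hf
  set g : ℕ → ℂ := fun n => qPoch q a n * ((q:ℂ)*z)^n / qPoch q (q:ℂ) n with hg
  have hqz : ‖(q:ℂ)*z‖ < 1 := by
    rw [norm_mul, Complex.norm_real, Real.norm_of_nonneg hq0.le]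
    calc q * ‖z‖ ≤ 1 * ‖z‖ := mul_le_mul_of_nonneg_right hq1.le (norm_nonneg _)
      _ = ‖z‖ := one_mul _
      _ < 1 := hz
  have hFs : Summable f := summable_term hq0 hq1 a z hz
  have hGs : Summable g := summable_term hq0 hq1 a ((q:ℂ)*z) hqz
  have hFs1 : Summable fun n => f (n+1) := (summable_nat_add_iff 1).2 hFs
  have hGs1 : Summable fun n => g (n+1) := (summable_nat_add_iff 1).2 hGs
  have hF0 : f 0 = 1 := by simp [hf, qPoch]
  have hG0 : g 0 = 1 := by simp [hg, qPoch]
  have eL : (1 - z) * qBinF q a z = 1 + ∑' n, (f (n+1) - z * f n) := by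
    have e1 : qBinF q a z = 1 + ∑' n, f (n+1) := by
      rw [qBinF, ← hF0]; exact Summable.tsum_eq_zero_add hFs
    have e2 : z * qBinF q a z = ∑' n, z * f n := (tsum_mul_left).symm
    rw [sub_mul, one_mul, e2, e1, add_sub_assoc, ← Summable.tsum_sub hFs1 (hFs.mul_left z)]
  have eR : (1 - a*z) * qBinF q a ((q:ℂ)*z) = 1 + ∑' n, (g (n+1) - (a*z) * g n) := by
    have e1 : qBinF q a ((q:ℂ)*z) = 1 + ∑' n, g (n+1) := by
      rw [qBinF, ← hG0]; exact Summable.tsum_eq_zero_add hGs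
    have e2 : (a*z) * qBinF q a ((q:ℂ)*z) = ∑' n, (a*z) * g n := (tsum_mul_left).symm
    rw [sub_mul, one_mul, e2, e1, add_sub_assoc, ← Summable.tsum_sub hGs1 (hGs.mul_left (a*z))]
  rw [eL, eR]
  congr 1
  apply tsum_congr
  intro n
  have hP1 : qPoch q a (n+1) = qPoch q a n * (1 - a * (q:ℂ)^n) := Finset.prod_range_succ _ _
  have hQ1 : qPoch q (q:ℂ) (n+1) = qPoch q (q:ℂ) n * (1 - (q:ℂ) * (q:ℂ)^n) :=
    Finset.prod_range_succ _ _
  simp only [hf, hg, hP1, hQ1]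
  have h1 := qPoch_q_ne_zero hq0 hq1 n
  have h2 := one_sub_q_pow_ne hq0 hq1 n
  generalize hD : (1:ℂ) - (q:ℂ) * (q:ℂ)^n = D at h2 ⊢
  field_simp
  linear_combination (qPoch q a n * (1 - a * (q:ℂ)^n) * z^(n+1)) * hD

lemma qPoch_succ (a : ℂ) (n : ℕ) :
    qPoch q a (n+1) = qPoch q a n * (1 - a * (q:ℂ)^n) := Finset.prod_range_succ _ _

include hq0 hq1 in
lemma norm_qpow_mul_lt (z : ℂ) (hz : ‖z‖ < 1) (m : ℕ) : ‖(q:ℂ)^m * z‖ < 1 := by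
  rw [norm_mul, norm_pow, Complex.norm_real, Real.norm_of_nonneg hq0.le]
  calc q^m * ‖z‖ ≤ 1 * ‖z‖ :=
        mul_le_mul_of_nonneg_right (pow_le_one₀ hq0.le hq1.le) (norm_nonneg _)
    _ < 1 := by rw [one_mul]; exact hz

include hq0 hq1 in
lemma iterEq (a z : ℂ) (hz : ‖z‖ < 1) (m : ℕ) :
    qPoch q z m * qBinF q a z = qPoch q (a*z) m * qBinF q a ((q:ℂ)^m * z) := by
  induction m with
  | zero => simp [qPoch]
  | succ m ih =>
    have hw : ‖(q:ℂ)^m * z‖ < 1 := norm_qpow_mul_lt hq0 hq1 z hz m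
    have hfe := funEq hq0 hq1 a ((q:ℂ)^m * z) hw
    calc qPoch q z (m+1) * qBinF q a z
        = (1 - z*(q:ℂ)^m) * (qPoch q z m * qBinF q a z) := by rw [qPoch_succ]; ring
      _ = (1 - z*(q:ℂ)^m) * (qPoch q (a*z) m * qBinF q a ((q:ℂ)^m*z)) := by rw [ih]
      _ = qPoch q (a*z) m * ((1 - (q:ℂ)^m*z) * qBinF q a ((q:ℂ)^m*z)) := by ring
      _ = qPoch q (a*z) m * ((1 - a*((q:ℂ)^m*z)) * qBinF q a ((q:ℂ)*((q:ℂ)^m*z))) := by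
          rw [hfe]
      _ = qPoch q (a*z) (m+1) * qBinF q a ((q:ℂ)^(m+1)*z) := by
          rw [qPoch_succ, show (q:ℂ)*((q:ℂ)^m*z) = (q:ℂ)^(m+1)*z by ring]; ring

include hq0 hq1 in
lemma qBinF_sub_one_bound (a w : ℂ) (hw : ‖w‖ < 1) :
    ‖qBinF q a w - 1‖ ≤ Bco q a * (1-‖w‖)⁻¹ * ‖w‖ := by
  set f : ℕ → ℂ := fun n => qPoch q a n * w^n / qPoch q (q:ℂ) n with hf
  have hFs : Summable f := summable_term hq0 hq1 a w hw
  have hF0 : f 0 = 1 := by simp [hf, qPoch]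
  have e1 : qBinF q a w - 1 = ∑' n, f (n+1) := by
    rw [qBinF, ← hf]
    rw [Summable.tsum_eq_zero_add hFs, hF0]; ring
  have hs1 : Summable fun n => ‖f (n+1)‖ :=
    (summable_nat_add_iff 1).2 (summable_norm_term hq0 hq1 a w hw)
  have hgeo : Summable fun n : ℕ => Bco q a * ‖w‖ * ‖w‖^n :=
    (summable_geometric_of_lt_one (norm_nonneg w) hw).mul_left _
  rw [e1]
  calc ‖∑' n, f (n+1)‖ ≤ ∑' n, ‖f (n+1)‖ := norm_tsum_le_tsum_norm hs1
    _ ≤ ∑' n : ℕ, Bco q a * ‖w‖ * ‖w‖^n := by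
        apply Summable.tsum_le_tsum _ hs1 hgeo
        intro n
        have : ‖f (n+1)‖ ≤ Bco q a * ‖w‖^(n+1) := by
          rw [hf]
          simp only []
          rw [mul_div_right_comm, norm_mul, norm_pow]
          exact mul_le_mul_of_nonneg_right (coeff_bound hq0 hq1 a (n+1)) (by positivity)
        calc ‖f (n+1)‖ ≤ Bco q a * ‖w‖^(n+1) := this
          _ = Bco q a * ‖w‖ * ‖w‖^n := by ring
    _ = Bco q a * ‖w‖ * (1-‖w‖)⁻¹ := by
        rw [tsum_mul_left, tsum_geometric_of_lt_one (norm_nonneg w) hw]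
    _ = Bco q a * (1-‖w‖)⁻¹ * ‖w‖ := by ring

include hq0 hq1 in
lemma tendsto_qBinF (a z : ℂ) (hz : ‖z‖ < 1) :
    Tendsto (fun m : ℕ => qBinF q a ((q:ℂ)^m * z)) atTop (nhds 1) := by
  rw [tendsto_iff_norm_sub_tendsto_zero]
  apply squeeze_zero (fun m => norm_nonneg _)
    (g := fun m => (Bco q a * (1-‖z‖)⁻¹ * ‖z‖) * q^m)
  · intro m
    have hw : ‖(q:ℂ)^m * z‖ < 1 := norm_qpow_mul_lt hq0 hq1 z hz m
    have hwn : ‖(q:ℂ)^m * z‖ = q^m * ‖z‖ := by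
      rw [norm_mul, norm_pow, Complex.norm_real, Real.norm_of_nonneg hq0.le]
    have hwle : ‖(q:ℂ)^m * z‖ ≤ ‖z‖ := by
      rw [hwn]
      calc q^m * ‖z‖ ≤ 1 * ‖z‖ :=
            mul_le_mul_of_nonneg_right (pow_le_one₀ hq0.le hq1.le) (norm_nonneg _)
        _ = ‖z‖ := one_mul _
    have hinv : (1-‖(q:ℂ)^m * z‖)⁻¹ ≤ (1-‖z‖)⁻¹ := by
      apply inv_anti₀ (by linarith) (by linarith)
    calc ‖qBinF q a ((q:ℂ)^m * z) - 1‖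
        ≤ Bco q a * (1-‖(q:ℂ)^m * z‖)⁻¹ * ‖(q:ℂ)^m * z‖ :=
          qBinF_sub_one_bound hq0 hq1 a _ hw
      _ ≤ Bco q a * (1-‖z‖)⁻¹ * ‖(q:ℂ)^m * z‖ := by
          apply mul_le_mul_of_nonneg_right _ (norm_nonneg _)
          exact mul_le_mul_of_nonneg_left hinv (Bco_pos hq0 hq1 a).le
      _ = (Bco q a * (1-‖z‖)⁻¹ * ‖z‖) * q^m := by rw [hwn]; ring
  · have := (tendsto_pow_atTop_nhds_zero_of_lt_one hq0.le hq1).const_mul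
      (Bco q a * (1-‖z‖)⁻¹ * ‖z‖)
    rwa [mul_zero] at this

include hq0 hq1 in
theorem qBinom (a z : ℂ) (hz : ‖z‖ < 1) :
    qPochInf q (a*z) = qPochInf q z * qBinF q a z := by
  have h1 : Tendsto (fun m : ℕ => qPoch q z m * qBinF q a z) atTop
      (nhds (qPochInf q z * qBinF q a z)) :=
    ((multipliable_one_sub hq0 hq1 z).hasProd.tendsto_prod_nat).mul_const _
  have h2 : Tendsto (fun m : ℕ => qPoch q (a*z) m * qBinF q a ((q:ℂ)^m*z)) atTop
      (nhds (qPochInf q (a*z) * 1)) :=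
    ((multipliable_one_sub hq0 hq1 (a*z)).hasProd.tendsto_prod_nat).mul
      (tendsto_qBinF hq0 hq1 a z hz)
  have h3 := tendsto_nhds_unique (h1.congr (fun m => iterEq hq0 hq1 a z hz m)) h2
  rw [mul_one] at h3
  exact h3.symm

end QBinom

section Assemble
variable {q : ℝ} (hq0 : 0 < q) (hq1 : q < 1)

lemma hQne (hq0 : 0 < q) : ((q:ℂ)) ≠ 0 := by
  simpa using hq0.ne'

lemma tprod_eq_zero_of_factor {f : ℕ → ℂ} (i : ℕ) (h : f i = 0) : ∏' j, f j = 0 := by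
  have hp : HasProd f 0 := by
    rw [HasProd]
    have he : ∀ᶠ (s : Finset ℕ) in atTop, (0:ℂ) = ∏ b ∈ s, f b := by
      filter_upwards [Filter.eventually_ge_atTop {i}] with s hs
      exact (Finset.prod_eq_zero (by simpa using hs) h).symm
    exact Tendsto.congr' he tendsto_const_nhds
  exact hp.tprod_eq

lemma qPoch_add (a : ℂ) (k l : ℕ) :
    qPoch q a (k + l) = qPoch q a k * qPoch q ((q:ℂ)^k * a) l := by
  rw [qPoch, qPoch, qPoch, Finset.prod_range_add]
  congr 1
  apply Finset.prod_congr rfl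
  intro i _
  rw [pow_add]; ring

include hq0 in
lemma zpow_factor_ne {a : ℂ} (hgen : ∀ j : ℤ, a ≠ (q:ℂ)^j) (N : ℤ) (j : ℕ) :
    (1:ℂ) - ((q:ℂ)^N * a) * (q:ℂ)^j ≠ 0 := by
  intro h
  have hQ := hQne hq0
  have h1 : (q:ℂ)^N * a * (q:ℂ)^(j:ℤ) = 1 := by
    rw [zpow_natCast]; linear_combination -h
  have hne : (q:ℂ)^(N+(j:ℤ)) ≠ 0 := zpow_ne_zero _ hQ
  have h3 : a = ((q:ℂ)^(N+(j:ℤ)))⁻¹ := by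
    rw [inv_eq_one_div, eq_div_iff hne, zpow_add₀ hQ]
    linear_combination h1
  exact hgen (-(N+(j:ℤ))) (by rw [zpow_neg]; exact h3)

include hq0 hq1 in
lemma qPinf_zpow_ne_zero {a : ℂ} (hgen : ∀ j : ℤ, a ≠ (q:ℂ)^j) (N : ℤ) :
    qPochInf q ((q:ℂ)^N * a) ≠ 0 :=
  qPochInf_ne_zero hq0 hq1 _ (zpow_factor_ne hq0 hgen N)

include hq0 hq1 in
lemma qPinf_base_ne_zero {a : ℂ} (hgen : ∀ j : ℤ, a ≠ (q:ℂ)^j) :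
    qPochInf q a ≠ 0 := by
  have := qPinf_zpow_ne_zero hq0 hq1 hgen 0
  simpa using this

include hq0 hq1 in
lemma ratio_prod (a : ℂ) (N : ℤ) (m n : ℕ) (hn : (n:ℤ) = N + m) :
    qPochInf q a * qPoch q ((q:ℂ)^N * a) m = qPoch q a n * qPochInf q ((q:ℂ)^N * a) := by
  have hQ := hQne hq0
  obtain ⟨p, rfl | rfl⟩ := N.eq_nat_or_neg
  · have hnp : n = p + m := by exact_mod_cast hn
    subst hnp
    have hz : ((q:ℂ)^((p:ℕ):ℤ) : ℂ) = (q:ℂ)^p := zpow_natCast _ _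
    rw [hz, qPochInf_split hq0 hq1 a p, qPoch_add]
    ring
  · have hmp : m = n + p := by omega
    subst hmp
    have hcan : (q:ℂ)^p * ((q:ℂ)^(-(p:ℤ)) * a) = a := by
      rw [← mul_assoc, ← zpow_natCast (q:ℂ) p, ← zpow_add₀ hQ]
      simp
    have e1 : qPochInf q ((q:ℂ)^(-(p:ℤ)) * a) =
        qPoch q ((q:ℂ)^(-(p:ℤ))*a) p * qPochInf q a := by
      rw [qPochInf_split hq0 hq1 ((q:ℂ)^(-(p:ℤ))*a) p, hcan]
    have e2 : qPoch q ((q:ℂ)^(-(p:ℤ))*a) (p + n) =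
        qPoch q ((q:ℂ)^(-(p:ℤ))*a) p * qPoch q a n := by
      rw [qPoch_add, hcan]
    rw [show n+p = p+n from add_comm n p, e2, e1]
    ring

include hq0 in
lemma qpow_combine (n m : ℕ) (N : ℤ) (hn : (n:ℤ) = N + m) :
    (q:ℂ)^m * (q:ℂ)^(N+1) = (q:ℂ)^n * (q:ℂ) := by
  have hQ := hQne hq0
  rw [← zpow_natCast (q:ℂ) m, ← zpow_natCast (q:ℂ) n, ← zpow_add₀ hQ]
  rw [show (q:ℂ)^(n:ℤ) * (q:ℂ) = (q:ℂ)^((n:ℤ)+1) from (zpow_add_one₀ hQ _).symm]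
  congr 1
  omega

include hq0 hq1 in
lemma qPinf_q_split (n : ℕ) :
    qPochInf q (q:ℂ) = qPoch q (q:ℂ) n * qPochInf q ((q:ℂ)^n * (q:ℂ)) :=
  qPochInf_split hq0 hq1 (q:ℂ) n

include hq0 in
/-- vanishing of `(q^{m+N+1};q)_∞` when `N + m < 0` -/
lemma qPinf_vanish (m : ℕ) (N : ℤ) (hNm : N + m < 0) :
    qPochInf q ((q:ℂ)^m * (q:ℂ)^(N+1)) = 0 := by
  have hQ := hQne hq0
  set p : ℕ := (-(N + m + 1)).toNat with hp
  apply tprod_eq_zero_of_factor p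
  have : ((q:ℂ)^m * (q:ℂ)^(N+1)) * (q:ℂ)^p = 1 := by
    rw [← zpow_natCast (q:ℂ) m, ← zpow_natCast (q:ℂ) p, ← zpow_add₀ hQ, ← zpow_add₀ hQ]
    rw [show (m:ℤ) + (N+1) + (p:ℤ) = 0 by omega]
    simp
  rw [this]; ring
end Assemble

section Heart
variable {q : ℝ} (hq0 : 0 < q) (hq1 : q < 1)

lemma scalars (y t : ℂ) (hy : y ≠ 0) (ht : t ≠ 0) (n m : ℕ) :
    t^((n:ℤ)-(m:ℤ)) * y^((n:ℤ)-(m:ℤ)) * (-y^2)^m * t^m = (y*t)^n * (-y)^m := by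
  rw [zpow_sub₀ ht, zpow_sub₀ hy, zpow_natCast, zpow_natCast, zpow_natCast, zpow_natCast]
  field_simp
  ring

include hq0 hq1 in
lemma heart (y t a b : ℂ) (hy : y ≠ 0) (ht : t ≠ 0) (hgen : ∀ j : ℤ, a ≠ (q:ℂ)^j)
    (n m : ℕ) :
    (t^((n:ℤ)-(m:ℤ)) * y^((n:ℤ)-(m:ℤ)) *
      (qPochInf q a / (qPochInf q ((q:ℂ)^((n:ℤ)-(m:ℤ)) * a) * qPochInf q (q:ℂ)))) *
    (qPoch q ((q:ℂ)^((n:ℤ)-(m:ℤ))*a) m * qPoch q b m *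
      qPochInf q ((q:ℂ)^m * (q:ℂ)^(((n:ℤ)-(m:ℤ))+1)) * (-y^2)^m / qPoch q (q:ℂ) m)
    = (qPoch q a n * (y*t)^n / qPoch q (q:ℂ) n) *
      (qPoch q b m * (-y*t⁻¹)^m / qPoch q (q:ℂ) m) := by
  set N : ℤ := (n:ℤ) - (m:ℤ) with hN
  have hn : (n:ℤ) = N + m := by omega
  have R1 := ratio_prod hq0 hq1 a N m n hn
  have R2 : qPochInf q ((q:ℂ)^m * (q:ℂ)^(N+1)) = qPochInf q ((q:ℂ)^n * (q:ℂ)) := by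
    rw [qpow_combine hq0 n m N hn]
  have R3 : qPochInf q (q:ℂ) = qPoch q (q:ℂ) n * qPochInf q ((q:ℂ)^n*(q:ℂ)) :=
    qPinf_q_split hq0 hq1 n
  have RS := scalars y t hy ht n m
  rw [← hN] at RS
  have nz1 : qPochInf q ((q:ℂ)^N * a) ≠ 0 := qPinf_zpow_ne_zero hq0 hq1 hgen N
  have nz2 : qPochInf q (q:ℂ) ≠ 0 := qPochInf_q_ne_zero hq0 hq1
  have nz3 : qPoch q (q:ℂ) n ≠ 0 := qPoch_q_ne_zero hq0 hq1 n
  have nz4 : qPoch q (q:ℂ) m ≠ 0 := qPoch_q_ne_zero hq0 hq1 m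
  have nz5 : qPochInf q ((q:ℂ)^n*(q:ℂ)) ≠ 0 := by
    intro h
    apply nz2
    rw [R3, h, mul_zero]
  rw [R2, R3]
  field_simp
  have RS' : t^N*y^N*(-y^2)^m = (y*t)^n * (-(y/t))^m := by
    rw [neg_div', div_pow, mul_div_assoc', ← RS]; field_simp
  linear_combination (t^N*y^N*qPoch q b m*(-y^2)^m) * R1 + (qPoch q a n * qPochInf q ((q:ℂ)^N*a) * qPoch q b m) * RS'
end Heart

/-- Heine's generating-function identity in the generalized form (4.9): for
`|y| < |t| < |y|⁻¹` and `s⁻¹xy⁻¹` not an integer power of `q`,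
`(xs⁻¹t;q)_∞(-xst⁻¹;q)_∞/((yt;q)_∞(-yt⁻¹;q)_∞)
  = ∑_{n∈ℤ} tⁿ yⁿ (s⁻¹xy⁻¹;q)_∞/((qⁿs⁻¹xy⁻¹;q)_∞(q;q)_∞) Φ(qⁿs⁻¹xy⁻¹, sxy⁻¹; q^{n+1}; -y²)`,
with absolute convergence. -/
theorem stmt14 (q : ℝ) (hq0 : 0 < q) (hq1 : q < 1) (x y s t : ℂ)
    (hx : x ≠ 0) (hy : y ≠ 0) (hs : s ≠ 0) (ht : t ≠ 0)
    (h1 : ‖y‖ < ‖t‖) (h2 : ‖t‖ < (‖y‖)⁻¹)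
    (hgen : ∀ j : ℤ, s⁻¹ * x * y⁻¹ ≠ (q : ℂ) ^ j) :
    (Summable fun n : ℤ => ‖t ^ n * y ^ n *
      (qPochInf q (s⁻¹ * x * y⁻¹) /
        (qPochInf q ((q : ℂ) ^ n * (s⁻¹ * x * y⁻¹)) * qPochInf q (q : ℂ))) *
      PhiE q ((q : ℂ) ^ n * (s⁻¹ * x * y⁻¹)) (s * x * y⁻¹) ((q : ℂ) ^ (n + 1)) (-y ^ 2)‖) ∧
    qPochInf q (x * s⁻¹ * t) * qPochInf q (-x * s * t⁻¹) /
        (qPochInf q (y * t) * qPochInf q (-y * t⁻¹)) =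
      ∑' n : ℤ, t ^ n * y ^ n *
        (qPochInf q (s⁻¹ * x * y⁻¹) /
          (qPochInf q ((q : ℂ) ^ n * (s⁻¹ * x * y⁻¹)) * qPochInf q (q : ℂ))) *
        PhiE q ((q : ℂ) ^ n * (s⁻¹ * x * y⁻¹)) (s * x * y⁻¹) ((q : ℂ) ^ (n + 1)) (-y ^ 2) := by
  -- abbreviations
  set A : ℂ := s⁻¹ * x * y⁻¹ with hA
  set B : ℂ := s * x * y⁻¹ with hB
  -- norm facts
  have hyn : 0 < ‖y‖ := norm_pos_iff.2 hy
  have htn : 0 < ‖t‖ := norm_pos_iff.2 ht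
  have h1' : ‖y‖ < ‖t‖ := by simpa using h1
  have h2' : ‖t‖ < ‖y‖⁻¹ := by simpa using h2
  have hyt : ‖y * t‖ < 1 := by
    rw [norm_mul]
    calc ‖y‖ * ‖t‖ < ‖y‖ * ‖y‖⁻¹ := by
          exact mul_lt_mul_of_pos_left h2' hyn
      _ = 1 := mul_inv_cancel₀ hyn.ne'
  have hyt' : ‖-y * t⁻¹‖ < 1 := by
    rw [norm_mul, norm_neg, norm_inv]
    rw [← div_eq_mul_inv, div_lt_one htn]
    exact h1'
  -- the two series
  set u : ℕ → ℂ := fun n => qPoch q A n * (y*t)^n / qPoch q (q:ℂ) n with hu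
  set v : ℕ → ℂ := fun m => qPoch q B m * (-y*t⁻¹)^m / qPoch q (q:ℂ) m with hv
  have hun : Summable fun n => ‖u n‖ := summable_norm_term hq0 hq1 A (y*t) hyt
  have hvn : Summable fun m => ‖v m‖ := summable_norm_term hq0 hq1 B (-y*t⁻¹) hyt'
  -- the bilateral family
  set G : ℤ × ℕ → ℂ := fun w =>
    (t^w.1 * y^w.1 *
      (qPochInf q A / (qPochInf q ((q:ℂ)^w.1 * A) * qPochInf q (q:ℂ)))) *
    (qPoch q ((q:ℂ)^w.1*A) w.2 * qPoch q B w.2 *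
      qPochInf q ((q:ℂ)^w.2 * (q:ℂ)^(w.1+1)) * (-y^2)^w.2 / qPoch q (q:ℂ) w.2) with hG
  set e : ℕ × ℕ → ℤ × ℕ := fun p => ((p.1:ℤ) - p.2, p.2) with he
  have hinj : Function.Injective e := by
    intro p p' h
    rw [he] at h
    simp only [Prod.mk.injEq] at h
    have h2 := h.2
    have h1 := h.1
    rw [h2] at h1
    have : p.1 = p'.1 := by omega
    exact Prod.ext this h2
  have hzero : ∀ w : ℤ × ℕ, w ∉ Set.range e → G w = 0 := by
    rintro ⟨N, m⟩ hw
    have hNm : N + m < 0 := by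
      by_contra hc
      push_neg at hc
      apply hw
      refine ⟨((N + m).toNat, m), ?_⟩
      rw [he]
      refine Prod.ext ?_ rfl
      simp only
      omega
    have hvan := qPinf_vanish (q := q) hq0 m N hNm
    show (t^N * y^N *
      (qPochInf q A / (qPochInf q ((q:ℂ)^N * A) * qPochInf q (q:ℂ)))) *
    (qPoch q ((q:ℂ)^N*A) m * qPoch q B m *
      qPochInf q ((q:ℂ)^m * (q:ℂ)^(N+1)) * (-y^2)^m / qPoch q (q:ℂ) m) = 0
    rw [hvan]
    ring
  have hcomp : ∀ p : ℕ × ℕ, G (e p) = u p.1 * v p.2 := by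
    intro p
    exact heart hq0 hq1 y t A B hy ht hgen p.1 p.2
  -- summability
  have hFnorm : Summable fun p : ℕ × ℕ => ‖u p.1 * v p.2‖ := Summable.mul_norm hun hvn
  have hGnorm : Summable fun w : ℤ × ℕ => ‖G w‖ := by
    apply (Function.Injective.summable_iff hinj ?_).1 ?_
    · intro w hw
      rw [hzero w hw, norm_zero]
    · exact hFnorm.congr fun p => (congrArg norm (hcomp p)).symm
  have hGs : Summable G := hGnorm.of_norm
  -- inner sums
  have hinner : ∀ N : ℤ, (∑' m : ℕ, G (N, m)) =
      t^N * y^N * (qPochInf q A / (qPochInf q ((q:ℂ)^N * A) * qPochInf q (q:ℂ))) *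
      PhiE q ((q:ℂ)^N * A) B ((q:ℂ)^(N+1)) (-y^2) := by
    intro N
    have hphi : PhiE q ((q:ℂ)^N * A) B ((q:ℂ)^(N+1)) (-y^2) =
        ∑' m : ℕ, (qPoch q ((q:ℂ)^N*A) m * qPoch q B m *
          qPochInf q ((q:ℂ)^m * (q:ℂ)^(N+1)) * (-y^2)^m / qPoch q (q:ℂ) m) := rfl
    rw [hphi, ← tsum_mul_left]
  constructor
  · -- summability of the bilateral series
    have hpair := (summable_prod_of_nonneg (fun _ => norm_nonneg _)).1 hGnorm
    apply Summable.of_nonneg_of_le (fun _ => norm_nonneg _) (fun N => ?_) hpair.2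
    rw [← hinner N]
    exact norm_tsum_le_tsum_norm (hpair.1 N)
  · -- the identity
    have nz1 : qPochInf q (y*t) ≠ 0 := by
      apply qPochInf_ne_zero hq0 hq1
      intro j
      apply one_sub_ne_of_norm_lt
      rw [normQpow' hq0]
      calc ‖y*t‖ * q^j ≤ ‖y*t‖ * 1 :=
            mul_le_mul_of_nonneg_left (pow_le_one₀ hq0.le hq1.le) (norm_nonneg _)
        _ < 1 := by rw [mul_one]; exact hyt
    have nz2 : qPochInf q (-y*t⁻¹) ≠ 0 := by
      apply qPochInf_ne_zero hq0 hq1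
      intro j
      apply one_sub_ne_of_norm_lt
      rw [normQpow' hq0]
      calc ‖-y*t⁻¹‖ * q^j ≤ ‖-y*t⁻¹‖ * 1 :=
            mul_le_mul_of_nonneg_left (pow_le_one₀ hq0.le hq1.le) (norm_nonneg _)
        _ < 1 := by rw [mul_one]; exact hyt'
    have E1 : qPochInf q (x * s⁻¹ * t) = qPochInf q (y*t) * qBinF q A (y*t) := by
      have h := qBinom hq0 hq1 A (y*t) hyt
      rw [show A * (y*t) = x * s⁻¹ * t by rw [hA]; field_simp] at h
      exact h
    have E2 : qPochInf q (-x * s * t⁻¹) = qPochInf q (-y*t⁻¹) * qBinF q B (-y*t⁻¹) := by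
      have h := qBinom hq0 hq1 B (-y*t⁻¹) hyt'
      rw [show B * (-y*t⁻¹) = -x * s * t⁻¹ by rw [hB]; field_simp] at h
      exact h
    have ELHS : qPochInf q (x * s⁻¹ * t) * qPochInf q (-x * s * t⁻¹) /
        (qPochInf q (y * t) * qPochInf q (-y * t⁻¹)) =
        qBinF q A (y*t) * qBinF q B (-y*t⁻¹) := by
      rw [E1, E2, div_eq_iff (mul_ne_zero nz1 nz2)]
      ring
    rw [ELHS]
    have step1 : qBinF q A (y*t) * qBinF q B (-y*t⁻¹) = ∑' p : ℕ × ℕ, u p.1 * v p.2 := by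
      rw [qBinF, qBinF]
      exact tsum_mul_tsum_of_summable_norm hun hvn
    have hsupp : Function.support G ⊆ Set.range e := by
      intro w hw
      by_contra hr
      exact hw (hzero w hr)
    have step2 : (∑' p : ℕ × ℕ, u p.1 * v p.2) = ∑' w : ℤ × ℕ, G w :=
      calc (∑' p : ℕ × ℕ, u p.1 * v p.2) = ∑' p : ℕ × ℕ, G (e p) :=
            tsum_congr fun p => (hcomp p).symm
        _ = ∑' w : ℤ × ℕ, G w := Function.Injective.tsum_eq hinj hsupp
    have step3 : (∑' w : ℤ × ℕ, G w) = ∑' (N : ℤ), ∑' (m : ℕ), G (N, m) :=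
      Summable.tsum_prod' hGs fun N => (hGs.prod_factor N)
    rw [step1, step2, step3]
    exact tsum_congr fun N => hinner N
end

section
/- Let 0 < q < 1, and let a, b be real with 0 < a < q^{-1} and 0 ≤ b < q^{-1}. For each positive integer n define the terminating sum P_n(x) := ∑_{k=0}^n (q^{-n};q)_k (q^{n+1}ab;q)_k (q^n x)^k / ((qa;q)_k (q;q)_k) (which equals ₂φ₁(q^{-n}, q^{n+1}ab; qa; q, q^n x), a little q-Jacobi polynomial evaluation). Then lim_{n→∞} P_n(x) = ₁φ₁(0;qa;q,x), uniformly for x in compact subsets of ℂ. -/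
open Complex Filter
open Topology

/-- `₁φ₁(0;w;q,z)`. -/
noncomputable def phi11 (q : ℝ) (w z : ℂ) : ℂ :=
  ∑' k : ℕ, (-1) ^ k * (q : ℂ) ^ (k * (k - 1) / 2) * z ^ k /
    (qPoch q w k * qPoch q (q : ℂ) k)

lemma cast_qPoch (q c : ℝ) (k : ℕ) :
    qPoch q ((c : ℝ) : ℂ) k = ((∏ j ∈ Finset.range k, (1 - c * q ^ j) : ℝ) : ℂ) := by
  simp only [qPoch]
  push_cast
  rfl

noncomputable def myD (q a : ℝ) (k : ℕ) : ℂ :=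
  qPoch q ((q:ℂ)*(a:ℂ)) k * qPoch q (q:ℂ) k

noncomputable def myA (q a b : ℝ) (n k : ℕ) : ℂ :=
  (∏ j ∈ Finset.range k, ((q:ℂ)^n - (q:ℂ)^j)) *
    qPoch q ((q:ℂ)^(n+1) * ((a:ℂ)*(b:ℂ))) k

noncomputable def myAinf (q : ℝ) (k : ℕ) : ℂ := (-1)^k * (q:ℂ)^(k*(k-1)/2)

-- rewriting the statement's term
lemma term_rw (q a b : ℝ) (hq : (q:ℂ) ≠ 0) (n k : ℕ) (x : ℂ) :
    qPoch q ((q : ℂ) ^ (-(n : ℤ))) k * qPoch q ((q : ℂ) ^ (n + 1) * ((a : ℂ) * (b : ℂ))) k *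
      ((q : ℂ) ^ n * x) ^ k / (qPoch q ((q : ℂ) * (a : ℂ)) k * qPoch q (q : ℂ) k)
    = myA q a b n k * x ^ k / myD q a k := by
  have h1 : qPoch q ((q:ℂ)^(-(n:ℤ))) k * ((q:ℂ)^n)^k
      = ∏ j ∈ Finset.range k, ((q:ℂ)^n - (q:ℂ)^j) := by
    have h0 : ((q:ℂ)^n)^k = ∏ _j ∈ Finset.range k, (q:ℂ)^n := by simp
    rw [h0, qPoch, ← Finset.prod_mul_distrib]
    refine Finset.prod_congr rfl fun j _ => ?_
    have hz : (q:ℂ)^(-(n:ℤ)) = ((q:ℂ)^n)⁻¹ := by rw [zpow_neg, zpow_natCast]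
    rw [hz]
    field_simp
  rw [myA, myD, mul_pow]
  rw [show qPoch q ((q : ℂ) ^ (-(n : ℤ))) k * qPoch q ((q : ℂ) ^ (n + 1) * ((a : ℂ) * (b : ℂ))) k *
      (((q : ℂ) ^ n) ^ k * x ^ k)
      = (qPoch q ((q:ℂ)^(-(n:ℤ))) k * ((q:ℂ)^n)^k) *
        qPoch q ((q : ℂ) ^ (n + 1) * ((a : ℂ) * (b : ℂ))) k * x ^ k by ring, h1]

lemma prod_q_eqC (q : ℝ) (k : ℕ) :
    (∏ j ∈ Finset.range k, (q:ℂ) ^ j) = (q:ℂ) ^ (k * (k-1) / 2) := by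
  rw [Finset.prod_pow_eq_pow_sum, Finset.sum_range_id]

lemma myAinf_eq_prod (q : ℝ) (k : ℕ) :
    myAinf q k = ∏ j ∈ Finset.range k, (0 - (q:ℂ)^j) := by
  rw [show (∏ j ∈ Finset.range k, (0 - (q:ℂ)^j))
      = ∏ j ∈ Finset.range k, ((-1) * (q:ℂ)^j) from
    Finset.prod_congr rfl fun j _ => by ring]
  rw [Finset.prod_mul_distrib, Finset.prod_const, Finset.card_range, prod_q_eqC, myAinf]

lemma myA_tendsto (q a b : ℝ) (hq0 : 0 < q) (hq1 : q < 1) (k : ℕ) :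
    Tendsto (fun n => myA q a b n k) atTop (𝓝 (myAinf q k)) := by
  have hqn : Tendsto (fun n : ℕ => (q:ℂ)^n) atTop (𝓝 0) := by
    apply tendsto_pow_atTop_nhds_zero_of_norm_lt_one
    rw [Complex.norm_real, Real.norm_eq_abs, abs_of_pos hq0]; exact hq1
  have h1 : Tendsto (fun n => ∏ j ∈ Finset.range k, ((q:ℂ)^n - (q:ℂ)^j)) atTop
      (𝓝 (∏ j ∈ Finset.range k, (0 - (q:ℂ)^j))) := by
    refine tendsto_finset_prod _ fun j _ => ?_
    exact hqn.sub tendsto_const_nhds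
  have h2 : Tendsto (fun n => qPoch q ((q:ℂ)^(n+1) * ((a:ℂ)*(b:ℂ))) k) atTop (𝓝 1) := by
    have : Tendsto (fun n => ∏ j ∈ Finset.range k,
        (1 - ((q:ℂ)^(n+1) * ((a:ℂ)*(b:ℂ))) * (q:ℂ)^j)) atTop
        (𝓝 (∏ j ∈ Finset.range k, (1 : ℂ))) := by
      refine tendsto_finset_prod _ fun j _ => ?_
      have hq' : Tendsto (fun n : ℕ => (q:ℂ)^(n+1)) atTop (𝓝 0) := by
        simpa [pow_succ] using hqn.mul_const (q:ℂ)
      have : Tendsto (fun n : ℕ => 1 - ((q:ℂ)^(n+1) * ((a:ℂ)*(b:ℂ))) * (q:ℂ)^j)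
          atTop (𝓝 (1 - (0 * ((a:ℂ)*(b:ℂ))) * (q:ℂ)^j)) :=
        tendsto_const_nhds.sub (((hq'.mul_const _).mul_const _))
      simpa using this
    simpa [qPoch] using this
  have := h1.mul h2
  rw [mul_one] at this
  rw [myAinf_eq_prod]
  exact this

lemma real_poch_lower (q c : ℝ) (hq0 : 0 ≤ q) (hq1 : q ≤ 1) (hc0 : 0 ≤ c) (hc1 : c < 1)
    (k : ℕ) : (1-c)^k ≤ ∏ j ∈ Finset.range k, (1 - c*q^j) := by
  calc (1-c)^k = ∏ _j ∈ Finset.range k, (1-c) := by simp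
  _ ≤ ∏ j ∈ Finset.range k, (1 - c*q^j) := by
      refine Finset.prod_le_prod (fun j _ => by linarith) (fun j _ => ?_)
      have hqj : q^j ≤ 1 := pow_le_one₀ hq0 hq1
      have hqj0 : 0 ≤ q^j := pow_nonneg hq0 j
      nlinarith

lemma myD_lower (q a : ℝ) (hq0 : 0 < q) (hq1 : q < 1) (ha0 : 0 ≤ a) (hqa : q*a < 1) (k : ℕ) :
    ((1-q*a)*(1-q))^k ≤ ‖myD q a k‖ := by
  have hcast1 : (q:ℂ)*(a:ℂ) = ((q*a : ℝ) : ℂ) := by push_cast; ring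
  rw [myD, hcast1, cast_qPoch, show ((q:ℝ):ℂ) = ((q:ℝ):ℂ) from rfl, cast_qPoch,
    norm_mul, Complex.norm_real, Complex.norm_real, Real.norm_eq_abs, Real.norm_eq_abs]
  have h1 : (1-q*a)^k ≤ ∏ j ∈ Finset.range k, (1 - (q*a)*q^j) :=
    real_poch_lower q (q*a) hq0.le hq1.le (by nlinarith) hqa k
  have h2 : (1-q)^k ≤ ∏ j ∈ Finset.range k, (1 - q*q^j) :=
    real_poch_lower q q hq0.le hq1.le hq0.le hq1 k
  have h1' := (le_abs_self _).trans' h1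
  have h2' := (le_abs_self _).trans' h2
  calc ((1-q*a)*(1-q))^k = (1-q*a)^k * (1-q)^k := by rw [mul_pow]
  _ ≤ _ := by
      refine mul_le_mul h1' h2' (pow_nonneg (by linarith) k) ((abs_nonneg _))

lemma myA_bound (q a b : ℝ) (hq0 : 0 < q) (hq1 : q < 1) (ha0 : 0 ≤ a) (hb0 : 0 ≤ b)
    (n k : ℕ) (hk : k ≤ n) :
    ‖myA q a b n k‖ ≤ (∏ j ∈ Finset.range k, q^j) * (1+a*b)^k := by
  rw [myA, norm_mul]
  have h1 : ‖∏ j ∈ Finset.range k, ((q:ℂ)^n - (q:ℂ)^j)‖ ≤ ∏ j ∈ Finset.range k, q^j := by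
    rw [norm_prod]
    refine Finset.prod_le_prod (fun j _ => norm_nonneg _) (fun j hj => ?_)
    have hjn : j ≤ n := le_trans (Nat.le_of_lt_succ (Nat.lt_succ_of_lt (Finset.mem_range.1 hj))) hk
    have hle : q^n ≤ q^j := pow_le_pow_of_le_one hq0.le hq1.le hjn
    have h0n : 0 ≤ q^n := pow_nonneg hq0.le n
    have : ((q:ℂ)^n - (q:ℂ)^j) = ((q^n - q^j : ℝ) : ℂ) := by push_cast; ring
    rw [this, Complex.norm_real, Real.norm_eq_abs]
    rw [abs_le]
    constructor <;> nlinarith [pow_nonneg hq0.le j]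
  have h2 : ‖qPoch q ((q:ℂ)^(n+1) * ((a:ℂ)*(b:ℂ))) k‖ ≤ (1+a*b)^k := by
    have hc : (q:ℂ)^(n+1) * ((a:ℂ)*(b:ℂ)) = ((q^(n+1)*(a*b) : ℝ) : ℂ) := by push_cast; ring
    rw [hc, cast_qPoch, Complex.norm_real, Real.norm_eq_abs, Finset.abs_prod]
    calc ∏ j ∈ Finset.range k, |1 - q^(n+1)*(a*b)*q^j|
        ≤ ∏ _j ∈ Finset.range k, (1+a*b) := by
          refine Finset.prod_le_prod (fun j _ => abs_nonneg _) (fun j _ => ?_)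
          have ht0 : 0 ≤ q^(n+1)*(a*b)*q^j := by positivity
          have ht1 : q^(n+1)*q^j ≤ 1 := by
            calc q^(n+1)*q^j = q^(n+1+j) := by rw [← pow_add]
            _ ≤ 1 := pow_le_one₀ hq0.le hq1.le
          have hab : 0 ≤ a*b := by positivity
          rw [abs_le]
          constructor <;> nlinarith
    _ = (1+a*b)^k := by simp
  have hn1 : 0 ≤ ‖∏ j ∈ Finset.range k, ((q:ℂ)^n - (q:ℂ)^j)‖ := norm_nonneg _
  have hp : (0:ℝ) ≤ ∏ j ∈ Finset.range k, q^j := by positivity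
  exact mul_le_mul h1 h2 (norm_nonneg _) hp

noncomputable def myU (q a b R : ℝ) (k : ℕ) : ℝ :=
  (∏ j ∈ Finset.range k, q^j) * ((1+a*b)*(R+1))^k / ((1-q*a)*(1-q))^k

lemma myU_pos (q a b R : ℝ) (hq0 : 0 < q) (hq1 : q < 1) (hqa : q*a < 1)
    (hab : 0 ≤ a*b) (hR : 0 ≤ R) (k : ℕ) : 0 < myU q a b R k := by
  have h1 : 0 < 1 - q*a := by linarith
  have h2 : 0 < 1 - q := by linarith
  have h3 : (0:ℝ) < (1+a*b)*(R+1) := by nlinarith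
  rw [myU]
  positivity

lemma myU_summable (q a b R : ℝ) (hq0 : 0 < q) (hq1 : q < 1) (hqa : q*a < 1)
    (hab : 0 ≤ a*b) (hR : 0 ≤ R) : Summable (myU q a b R) := by
  have h1 : (0:ℝ) < 1 - q*a := by linarith
  have h2 : (0:ℝ) < 1 - q := by linarith
  have h3 : (0:ℝ) < (1+a*b)*(R+1) := by nlinarith
  have hd : ((1-q*a)*(1-q)) ≠ 0 := by positivity
  have hrat : ∀ k : ℕ, myU q a b R (k+1) / myU q a b R k
      = q^k * ((1+a*b)*(R+1) / ((1-q*a)*(1-q))) := by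
    intro k
    have hP : (∏ j ∈ Finset.range k, q^j) ≠ 0 := by positivity
    have hX : (1+a*b)*(R+1) ≠ 0 := h3.ne'
    rw [myU, myU, Finset.prod_range_succ]
    set X := (1+a*b)*(R+1)
    set D := (1-q*a)*(1-q)
    rw [pow_succ, pow_succ]
    field_simp
  refine summable_of_ratio_test_tendsto_lt_one zero_lt_one
    (Eventually.of_forall fun k => (myU_pos q a b R hq0 hq1 hqa hab hR k).ne') ?_
  have : Tendsto (fun k : ℕ => q^k * ((1+a*b)*(R+1) / ((1-q*a)*(1-q)))) atTop (𝓝 0) := by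
    have hq : Tendsto (fun k : ℕ => q^k) atTop (𝓝 0) := by
      apply tendsto_pow_atTop_nhds_zero_of_norm_lt_one
      rw [Real.norm_eq_abs, abs_of_pos hq0]; exact hq1
    simpa using hq.mul_const _
  refine Tendsto.congr (fun k => ?_) this
  rw [← hrat k, Real.norm_eq_abs, Real.norm_eq_abs,
    abs_of_pos (myU_pos q a b R hq0 hq1 hqa hab hR _),
    abs_of_pos (myU_pos q a b R hq0 hq1 hqa hab hR _)]

lemma key_bound (q a b R : ℝ) (hq0 : 0 < q) (hq1 : q < 1) (ha0 : 0 ≤ a) (hqa : q*a < 1)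
    (hab : 0 ≤ a*b) (hR : 0 ≤ R) (k : ℕ) (c x : ℂ)
    (hc : ‖c‖ ≤ (∏ j ∈ Finset.range k, q^j) * (1+a*b)^k) (hx : ‖x‖ ≤ R) :
    ‖c * x^k / myD q a k‖ ≤ myU q a b R k := by
  have h1 : (0:ℝ) < 1 - q*a := by linarith
  have h2 : (0:ℝ) < 1 - q := by linarith
  have hdpos : (0:ℝ) < ((1-q*a)*(1-q))^k := by positivity
  have hd := myD_lower q a hq0 hq1 ha0 hqa k
  have hnum : ‖c‖ * ‖x‖^k ≤ ((∏ j ∈ Finset.range k, q^j) * (1+a*b)^k) * R^k := by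
    refine mul_le_mul hc (pow_le_pow_left₀ (norm_nonneg x) hx k)
      (pow_nonneg (norm_nonneg x) k) ?_
    have : (0:ℝ) ≤ ∏ j ∈ Finset.range k, q^j := by positivity
    nlinarith [pow_nonneg (by nlinarith : (0:ℝ) ≤ 1+a*b) k]
  rw [norm_div, norm_mul, norm_pow]
  refine le_trans (div_le_div₀ (by positivity) hnum hdpos hd) ?_
  rw [myU, div_le_div_iff₀ hdpos hdpos]
  have hmono : ((∏ j ∈ Finset.range k, q^j) * (1+a*b)^k) * R^k
      ≤ (∏ j ∈ Finset.range k, q^j) * ((1+a*b)*(R+1))^k := by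
    rw [mul_pow, ← mul_assoc]
    gcongr
    all_goals (first | positivity | linarith)
  nlinarith [hdpos.le, hmono, mul_le_mul_of_nonneg_right hmono hdpos.le]

lemma myAinf_norm (q : ℝ) (hq0 : 0 < q) (k : ℕ) :
    ‖myAinf q k‖ = ∏ j ∈ Finset.range k, q^j := by
  rw [myAinf, norm_mul, norm_pow, norm_pow, norm_neg, norm_one, one_pow, one_mul,
    Complex.norm_real, Real.norm_eq_abs, abs_of_pos hq0,
    Finset.prod_pow_eq_pow_sum, Finset.sum_range_id]


/-- Proposition A.1: the little q-Jacobi polynomial evaluations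
`Pₙ(x) = ₂φ₁(q⁻ⁿ, q^{n+1}ab; qa; q, qⁿx)` tend to `₁φ₁(0;qa;q,x)` as `n → ∞`, uniformly on
compact subsets of `ℂ`. -/
theorem stmt16 (q : ℝ) (hq0 : 0 < q) (hq1 : q < 1) (a b : ℝ)
    (ha0 : 0 < a) (ha1 : a < q⁻¹) (hb0 : 0 ≤ b) (hb1 : b < q⁻¹)
    (K : Set ℂ) (hK : IsCompact K) :
    TendstoUniformlyOn
      (fun (n : ℕ) (x : ℂ) => ∑ k ∈ Finset.range (n + 1),
        qPoch q ((q : ℂ) ^ (-(n : ℤ))) k * qPoch q ((q : ℂ) ^ (n + 1) * ((a : ℂ) * (b : ℂ))) k *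
          ((q : ℂ) ^ n * x) ^ k / (qPoch q ((q : ℂ) * (a : ℂ)) k * qPoch q (q : ℂ) k))
      (fun x => phi11 q ((q : ℂ) * (a : ℂ)) x) atTop K := by
  have hqC : (q:ℂ) ≠ 0 := by exact_mod_cast hq0.ne'
  have hqa : q * a < 1 := by
    have := mul_lt_mul_of_pos_left ha1 hq0
    rwa [mul_inv_cancel₀ hq0.ne'] at this
  have h1qa : (0:ℝ) < 1 - q*a := by linarith
  have h1q : (0:ℝ) < 1 - q := by linarith
  have hab : 0 ≤ a*b := mul_nonneg ha0.le hb0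
  obtain ⟨r, hr⟩ := hK.isBounded.subset_closedBall 0
  set R : ℝ := max r 0 with hRdef
  have hR0 : 0 ≤ R := le_max_right r 0
  have hxR : ∀ x ∈ K, ‖x‖ ≤ R := by
    intro x hx
    have := hr hx
    rw [Metric.mem_closedBall, dist_zero_right] at this
    exact this.trans (le_max_left r 0)
  set u : ℕ → ℝ := myU q a b R with hudef
  have hu : Summable u := myU_summable q a b R hq0 hq1 hqa hab hR0
  have hupos : ∀ k, 0 < u k := myU_pos q a b R hq0 hq1 hqa hab hR0
  -- rewrite the approximating functions
  have hF : (fun (n : ℕ) (x : ℂ) => ∑ k ∈ Finset.range (n + 1),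
        qPoch q ((q : ℂ) ^ (-(n : ℤ))) k * qPoch q ((q : ℂ) ^ (n + 1) * ((a : ℂ) * (b : ℂ))) k *
          ((q : ℂ) ^ n * x) ^ k / (qPoch q ((q : ℂ) * (a : ℂ)) k * qPoch q (q : ℂ) k))
      = fun (n : ℕ) (x : ℂ) =>
          ∑ k ∈ Finset.range (n+1), myA q a b n k * x^k / myD q a k := by
    funext n x
    exact Finset.sum_congr rfl fun k _ => term_rw q a b hqC n k x
  rw [hF]
  have hDpos : ∀ k : ℕ, (0:ℝ) < ‖myD q a k‖ := fun k =>
    lt_of_lt_of_le (pow_pos (by nlinarith) k) (myD_lower q a hq0 hq1 ha0.le hqa k)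
  have hLnorm : ∀ x, ‖x‖ ≤ R → ∀ k, ‖myAinf q k * x^k / myD q a k‖ ≤ u k := by
    intro x hx k
    refine key_bound q a b R hq0 hq1 ha0.le hqa hab hR0 k _ x ?_ hx
    rw [myAinf_norm q hq0]
    have h1 : (0:ℝ) ≤ ∏ j ∈ Finset.range k, q^j := by positivity
    have h2 : (1:ℝ) ≤ (1+a*b)^k := one_le_pow₀ (by linarith)
    nlinarith
  have hGnorm : ∀ n k, k ≤ n → ∀ x, ‖x‖ ≤ R → ‖myA q a b n k * x^k / myD q a k‖ ≤ u k := by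
    intro n k hk x hx
    exact key_bound q a b R hq0 hq1 ha0.le hqa hab hR0 k _ x
      (myA_bound q a b hq0 hq1 ha0.le hb0 n k hk) hx
  have hsumL : ∀ x, ‖x‖ ≤ R → Summable (fun k => myAinf q k * x^k / myD q a k) := by
    intro x hx
    exact Summable.of_norm_bounded hu (hLnorm x hx)
  have hphi : ∀ x : ℂ, phi11 q ((q:ℂ)*(a:ℂ)) x = ∑' k, myAinf q k * x^k / myD q a k := by
    intro x
    rw [phi11]
    refine tsum_congr fun k => ?_
    rw [myAinf, myD]
  have hterm : ∀ k, Tendsto (fun n => ‖myA q a b n k - myAinf q k‖ * (R^k / ‖myD q a k‖))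
      atTop (𝓝 0) := by
    intro k
    have h : Tendsto (fun n => myA q a b n k - myAinf q k) atTop (𝓝 0) := by
      simpa using (myA_tendsto q a b hq0 hq1 k).sub
        (tendsto_const_nhds (x := myAinf q k))
    simpa using (h.norm.mul_const (R^k / ‖myD q a k‖))
  rw [Metric.tendstoUniformlyOn_iff]
  intro ε hε
  have htail : Tendsto (fun N => ∑' k, u (k+N)) atTop (𝓝 0) := tendsto_sum_nat_add u
  obtain ⟨N, hN1, hNtail⟩ : ∃ N : ℕ, 1 ≤ N ∧ ∑' k, u (k+N) < ε/3 := by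
    have h := ((htail.eventually (gt_mem_nhds (by linarith : (0:ℝ) < ε/3))).and
      (eventually_ge_atTop 1)).exists
    obtain ⟨N, h1, h2⟩ := h
    exact ⟨N, h2, h1⟩
  have hNne : ((N:ℝ)) ≠ 0 := by exact_mod_cast (by omega : N ≠ 0)
  have hδ : (0:ℝ) < ε/(3*N) := by positivity
  have heven : ∀ᶠ n in atTop, ∀ k ∈ Finset.range N,
      ‖myA q a b n k - myAinf q k‖ * (R^k / ‖myD q a k‖) < ε/(3*N) := by
    rw [eventually_all_finset]
    intro k _
    exact (hterm k).eventually (gt_mem_nhds hδ)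
  have hsum_tail : Summable (fun k => u (k+N)) := (summable_nat_add_iff N).2 hu
  filter_upwards [heven, eventually_ge_atTop N] with n hn hnN x hx
  have hxR' := hxR x hx
  rw [dist_eq_norm, hphi x]
  set L : ℕ → ℂ := fun k => myAinf q k * x^k / myD q a k with hLdef
  set G : ℕ → ℂ := fun k => myA q a b n k * x^k / myD q a k with hGdef
  have hsplit1 : ∑' k, L k = ∑ k ∈ Finset.range N, L k + ∑' k, L (k+N) :=
    (Summable.sum_add_tsum_nat_add N (hsumL x hxR')).symm
  have hNn : N ≤ n+1 := by omega
  have hsplit2 : ∑ k ∈ Finset.range (n+1), G k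
      = ∑ k ∈ Finset.range N, G k + ∑ k ∈ Finset.Ico N (n+1), G k := by
    rw [Finset.range_eq_Ico, ← Finset.sum_Ico_consecutive G (Nat.zero_le N) hNn, Finset.range_eq_Ico]
  have hdiff : ∑' k, L k - ∑ k ∈ Finset.range (n+1), G k
      = (∑ k ∈ Finset.range N, (L k - G k))
        + (∑' k, L (k+N) - ∑ k ∈ Finset.Ico N (n+1), G k) := by
    rw [hsplit1, hsplit2, Finset.sum_sub_distrib]
    ring
  rw [hdiff]
  -- piece 1
  have hp1 : ‖∑ k ∈ Finset.range N, (L k - G k)‖ ≤ ∑ _k ∈ Finset.range N, (ε/(3*N)) := by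
    refine le_trans (norm_sum_le _ _) (Finset.sum_le_sum fun k hk => ?_)
    have hb := hn k hk
    have heq : L k - G k = (myAinf q k - myA q a b n k) * x^k / myD q a k := by
      rw [hLdef, hGdef]
      ring
    rw [heq, norm_div, norm_mul, norm_pow]
    calc ‖myAinf q k - myA q a b n k‖ * ‖x‖^k / ‖myD q a k‖
        ≤ ‖myA q a b n k - myAinf q k‖ * R^k / ‖myD q a k‖ := by
          rw [norm_sub_rev]
          gcongr
    _ = ‖myA q a b n k - myAinf q k‖ * (R^k / ‖myD q a k‖) := by ring
    _ ≤ ε/(3*N) := hb.le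
  have hp1' : ∑ _k ∈ Finset.range N, (ε/(3*N)) = ε/3 := by
    rw [Finset.sum_const, Finset.card_range, nsmul_eq_mul]
    field_simp
  -- piece 2
  have hsnorm : Summable (fun k => ‖L (k+N)‖) :=
    Summable.of_nonneg_of_le (fun k => norm_nonneg _)
      (fun k => hLnorm x hxR' (k+N)) hsum_tail
  have hp2 : ‖∑' k, L (k+N)‖ ≤ ∑' k, u (k+N) :=
    le_trans (norm_tsum_le_tsum_norm hsnorm)
      (Summable.tsum_le_tsum (fun k => hLnorm x hxR' (k+N)) hsnorm hsum_tail)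
  -- piece 3
  have hp3 : ‖∑ k ∈ Finset.Ico N (n+1), G k‖ ≤ ∑' k, u (k+N) := by
    refine le_trans (norm_sum_le _ _) ?_
    have hb : ∑ k ∈ Finset.Ico N (n+1), ‖G k‖ ≤ ∑ k ∈ Finset.Ico N (n+1), u k := by
      refine Finset.sum_le_sum fun k hk => ?_
      have hkn : k ≤ n := by
        have := (Finset.mem_Ico.1 hk).2
        omega
      exact hGnorm n k hkn x hxR'
    refine hb.trans ?_
    rw [Finset.sum_Ico_eq_sum_range]
    have hcongr : ∑ i ∈ Finset.range (n+1-N), u (N+i)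
        = ∑ i ∈ Finset.range (n+1-N), u (i+N) :=
      Finset.sum_congr rfl fun i _ => by rw [Nat.add_comm]
    rw [hcongr]
    exact Summable.sum_le_tsum _ (fun i _ => (hupos _).le) hsum_tail
  calc ‖(∑ k ∈ Finset.range N, (L k - G k))
        + (∑' k, L (k+N) - ∑ k ∈ Finset.Ico N (n+1), G k)‖
      ≤ ‖∑ k ∈ Finset.range N, (L k - G k)‖
        + (‖∑' k, L (k+N)‖ + ‖∑ k ∈ Finset.Ico N (n+1), G k‖) :=
        le_trans (norm_add_le _ _) (add_le_add le_rfl (norm_sub_le _ _))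
  _ < ε := by
      have h1 := hp1
      rw [hp1'] at h1
      linarith
end

section
/- Let α > -1 be real. Then lim_{q↑1} ₁φ₁(0;q^{α+1};q,(1-q)² z) = ₀F₁(-;α+1;-z), uniformly for z in compact subsets of ℂ; that is, for every compact K ⊆ ℂ and every ε > 0 there is δ > 0 such that for all q ∈ (1-δ, 1) and all z ∈ K, |∑_{k=0}^∞ (-1)^k q^{k(k-1)/2} (1-q)^{2k} z^k / ((q^{α+1};q)_k (q;q)_k) − ∑_{k=0}^∞ (-z)^k / ((α+1)_k · k!)| < ε, where (α+1)_k := (α+1)(α+2)···(α+k) is the Pochhammer symbol. -/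
open Complex Filter

private lemma ratio_tendsto (s : ℝ) (hs : 0 < s) :
    Tendsto (fun q : ℝ => (1 - q ^ s) / (1 - q)) (nhdsWithin 1 (Set.Iio 1)) (nhds s) := by
  have h : HasDerivAt (fun x : ℝ => x ^ s) (s * (1:ℝ) ^ (s-1)) 1 :=
    Real.hasDerivAt_rpow_const (Or.inl one_ne_zero)
  rw [Real.one_rpow, mul_one] at h
  have h2 := hasDerivAt_iff_tendsto_slope.mp h
  have h3 : Tendsto (slope (fun x : ℝ => x ^ s) 1) (nhdsWithin 1 (Set.Iio 1)) (nhds s) :=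
    h2.mono_left (nhdsWithin_mono 1 (by intro x hx; simpa using ne_of_lt hx))
  refine h3.congr fun q => ?_
  rw [slope_def_field, Real.one_rpow, ← neg_div_neg_eq]
  ring_nf

private lemma inv_ratio_tendsto (s : ℝ) (hs : 0 < s) :
    Tendsto (fun q : ℝ => (1 - q) / (1 - q ^ s)) (nhdsWithin 1 (Set.Iio 1)) (nhds s⁻¹) := by
  have := (ratio_tendsto s hs).inv₀ hs.ne'
  refine this.congr fun q => ?_
  rw [inv_div]

private lemma qPochA_eq (α q : ℝ) (hq : 0 < q) (k : ℕ) :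
    qPoch q (((q ^ (α + 1) : ℝ) : ℂ)) k
      = ((∏ j ∈ Finset.range k, (1 - q ^ (α + 1 + (j : ℝ))) : ℝ) : ℂ) := by
  rw [qPoch, Complex.ofReal_prod]
  refine Finset.prod_congr rfl fun j _ => ?_
  have h : q ^ (α + 1 + (j : ℝ)) = q ^ (α + 1) * q ^ j := by
    rw [Real.rpow_add hq, Real.rpow_natCast]
  rw [h]
  push_cast
  ring

private lemma qPochB_eq (q : ℝ) (k : ℕ) :
    qPoch q (q : ℂ) k = ((∏ j ∈ Finset.range k, (1 - q ^ (j + 1)) : ℝ) : ℂ) := by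
  rw [qPoch, Complex.ofReal_prod]
  refine Finset.prod_congr rfl fun j _ => ?_
  rw [pow_succ']
  push_cast
  ring

private lemma factA_pos (α q : ℝ) (hα : 0 < α + 1) (hq0 : 0 < q) (hq1 : q < 1) (j : ℕ) :
    0 < 1 - q ^ (α + 1 + (j : ℝ)) := by
  have : q ^ (α + 1 + (j : ℝ)) < 1 :=
    Real.rpow_lt_one hq0.le hq1 (by positivity)
  linarith

private lemma prodA_pos (α q : ℝ) (hα : 0 < α + 1) (hq0 : 0 < q) (hq1 : q < 1) (k : ℕ) :
    0 < ∏ j ∈ Finset.range k, (1 - q ^ (α + 1 + (j : ℝ))) :=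
  Finset.prod_pos fun j _ => factA_pos α q hα hq0 hq1 j

private lemma prodB_pos (q : ℝ) (hq0 : 0 < q) (hq1 : q < 1) (k : ℕ) :
    0 < ∏ j ∈ Finset.range k, (1 - q ^ (j + 1)) := by
  refine Finset.prod_pos fun j _ => ?_
  have : q ^ (j + 1) < 1 := pow_lt_one₀ hq0.le hq1 (Nat.succ_ne_zero j)
  linarith

private lemma geom_lb (q : ℝ) (hq0 : 0 ≤ q) (hq1 : q ≤ 1) (m : ℕ) :
    (m + 1 : ℝ) * q ^ m * (1 - q) ≤ 1 - q ^ (m + 1) := by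
  have hsum : ((m + 1 : ℕ) : ℝ) * q ^ m ≤ ∑ i ∈ Finset.range (m + 1), q ^ i := by
    have := Finset.card_nsmul_le_sum (Finset.range (m + 1)) (fun i => q ^ i) (q ^ m)
      (fun i hi => pow_le_pow_of_le_one hq0 hq1 (Nat.lt_succ_iff.mp (Finset.mem_range.mp hi)))
    simpa [Finset.card_range, nsmul_eq_mul] using this
  have hg := geom_sum_mul q (m + 1)
  have h1q : 0 ≤ 1 - q := by linarith
  have := mul_le_mul_of_nonneg_left hsum h1q
  push_cast at this
  nlinarith [hg]

private lemma prodB_lb (q : ℝ) (hq0 : 0 < q) (hq1 : q < 1) (k : ℕ) :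
    (1 - q) ^ k * (k.factorial : ℝ) * q ^ (∑ j ∈ Finset.range k, j)
      ≤ ∏ j ∈ Finset.range k, (1 - q ^ (j + 1)) := by
  have h1q : 0 < 1 - q := by linarith
  induction k with
  | zero => simp
  | succ n ih =>
    have h1 := geom_lb q hq0.le hq1.le n
    have hBpos := prodB_pos q hq0 hq1 n
    have h2 : (0:ℝ) ≤ (n + 1 : ℝ) * q ^ n * (1 - q) := by positivity
    have hnn : (0:ℝ) ≤ (1 - q) ^ n * (n.factorial : ℝ) * q ^ (∑ j ∈ Finset.range n, j) :=
      mul_nonneg (mul_nonneg (pow_nonneg h1q.le n) (Nat.cast_nonneg _)) (pow_nonneg hq0.le _)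
    calc (1 - q) ^ (n+1) * ((n+1).factorial : ℝ) * q ^ (∑ j ∈ Finset.range (n+1), j)
        = ((1 - q) ^ n * (n.factorial : ℝ) * q ^ (∑ j ∈ Finset.range n, j)) *
          ((n + 1 : ℝ) * q ^ n * (1 - q)) := by
          rw [Finset.sum_range_succ, Nat.factorial_succ, pow_add, pow_succ]; push_cast; ring
      _ ≤ (∏ j ∈ Finset.range n, (1 - q ^ (j + 1))) * (1 - q ^ (n + 1)) :=
          mul_le_mul ih h1 h2 hBpos.le
      _ = ∏ j ∈ Finset.range (n+1), (1 - q ^ (j + 1)) := (Finset.prod_range_succ _ _).symm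

private lemma prodA_lb (α q : ℝ) (hα : 0 < α + 1) (hq0 : 0 < q) (hq1 : q < 1)
    (hq2 : (α + 1) / 2 * (1 - q) ≤ 1 - q ^ (α + 1)) (k : ℕ) :
    min 1 ((α + 1) / 2) * (1 - q) ^ k ≤ ∏ j ∈ Finset.range k, (1 - q ^ (α + 1 + (j : ℝ))) := by
  have h1q : 0 < 1 - q := by linarith
  cases k with
  | zero => simpa using min_le_left 1 ((α + 1) / 2)
  | succ n =>
    rw [Finset.prod_range_succ']
    have hfac : ∀ i ∈ Finset.range n, (1 - q) ≤ 1 - q ^ (α + 1 + ((i + 1 : ℕ) : ℝ)) := by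
      intro i _
      have h1 : q ^ (α + 1 + ((i + 1 : ℕ) : ℝ)) ≤ q ^ (1 : ℝ) := by
        apply Real.rpow_le_rpow_of_exponent_ge hq0 hq1.le
        push_cast; linarith [Nat.cast_nonneg (α := ℝ) i]
      rw [Real.rpow_one] at h1
      linarith
    have hprod : (1 - q) ^ n ≤ ∏ i ∈ Finset.range n, (1 - q ^ (α + 1 + ((i + 1 : ℕ) : ℝ))) := by
      calc (1 - q) ^ n = ∏ _i ∈ Finset.range n, (1 - q) := by
            rw [Finset.prod_const, Finset.card_range]
        _ ≤ _ := Finset.prod_le_prod (fun i _ => h1q.le) hfac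
    have h0 : 1 - q ^ (α + 1 + ((0 : ℕ) : ℝ)) = 1 - q ^ (α + 1) := by norm_num
    rw [h0]
    have hmin : min 1 ((α + 1) / 2) ≤ (α + 1) / 2 := min_le_right _ _
    have hminpos : 0 < min 1 ((α + 1) / 2) := lt_min one_pos (by linarith)
    calc min 1 ((α + 1) / 2) * (1 - q) ^ (n + 1)
        = (1 - q) ^ n * (min 1 ((α + 1) / 2) * (1 - q)) := by ring
      _ ≤ (∏ i ∈ Finset.range n, (1 - q ^ (α + 1 + ((i + 1 : ℕ) : ℝ)))) * (1 - q ^ (α + 1)) := by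
          apply mul_le_mul hprod ?_ (by positivity) (le_trans (by positivity) hprod)
          calc min 1 ((α + 1) / 2) * (1 - q) ≤ (α + 1) / 2 * (1 - q) :=
                mul_le_mul_of_nonneg_right hmin h1q.le
            _ ≤ 1 - q ^ (α + 1) := hq2

private lemma pochP_pos (α : ℝ) (hα : 0 < α + 1) (k : ℕ) :
    0 < ∏ j ∈ Finset.range k, (α + 1 + (j : ℝ)) :=
  Finset.prod_pos fun j _ => by positivity

private lemma pochP_lb (α : ℝ) (hα : 0 < α + 1) (k : ℕ) :
    min 1 ((α + 1) / 2) ≤ ∏ j ∈ Finset.range k, (α + 1 + (j : ℝ)) := by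
  cases k with
  | zero => simpa using min_le_left 1 ((α + 1) / 2)
  | succ n =>
    rw [Finset.prod_range_succ']
    have h1 : (1:ℝ) ≤ ∏ i ∈ Finset.range n, (α + 1 + ((i + 1 : ℕ) : ℝ)) := by
      have := Finset.prod_le_prod (s := Finset.range n) (f := fun _ => (1:ℝ))
        (g := fun i => α + 1 + ((i + 1 : ℕ) : ℝ)) (fun i _ => zero_le_one)
        (fun i _ => by push_cast; linarith [Nat.cast_nonneg (α := ℝ) i])
      simpa using this
    have h0 : α + 1 + ((0 : ℕ) : ℝ) = α + 1 := by norm_num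
    rw [h0]
    calc min 1 ((α + 1) / 2) ≤ (α + 1) / 2 := min_le_right _ _
      _ ≤ 1 * (α + 1) := by linarith
      _ ≤ (∏ i ∈ Finset.range n, (α + 1 + ((i + 1 : ℕ) : ℝ))) * (α + 1) :=
          mul_le_mul_of_nonneg_right h1 (by linarith)

private noncomputable def gam (α q : ℝ) (k : ℕ) : ℝ :=
  q ^ (k * (k - 1) / 2) *
    (∏ j ∈ Finset.range k, ((1 - q) / (1 - q ^ (α + 1 + (j : ℝ))))) *
    (∏ j ∈ Finset.range k, ((1 - q) / (1 - q ^ (j + 1))))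

private noncomputable def glim (α : ℝ) (k : ℕ) : ℝ :=
  (∏ j ∈ Finset.range k, (α + 1 + (j : ℝ)))⁻¹ * ((k.factorial : ℝ))⁻¹

private lemma gam_eq (α q : ℝ) (k : ℕ)
    (hA : (∏ j ∈ Finset.range k, (1 - q ^ (α + 1 + (j : ℝ)))) ≠ 0)
    (hB : (∏ j ∈ Finset.range k, (1 - q ^ (j + 1))) ≠ 0) :
    gam α q k = q ^ (k * (k - 1) / 2) * (1 - q) ^ (2 * k) /
      ((∏ j ∈ Finset.range k, (1 - q ^ (α + 1 + (j : ℝ)))) *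
        ∏ j ∈ Finset.range k, (1 - q ^ (j + 1))) := by
  simp only [gam, Finset.prod_div_distrib, Finset.prod_const, Finset.card_range]
  field_simp
  ring



private lemma term_a_eq (α q : ℝ) (hα : 0 < α + 1) (hq0 : 0 < q) (hq1 : q < 1) (z : ℂ) (k : ℕ) :
    (-1) ^ k * (q : ℂ) ^ (k * (k - 1) / 2) * ((((1 - q) ^ 2 : ℝ) : ℂ) * z) ^ k /
      (qPoch q (((q ^ (α + 1) : ℝ) : ℂ)) k * qPoch q (q : ℂ) k)
      = (-1) ^ k * ((gam α q k : ℝ) : ℂ) * z ^ k := by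
  have hqA := qPochA_eq α q hq0 k
  have hqB := qPochB_eq q k
  have hApos := prodA_pos α q hα hq0 hq1 k
  have hBpos := prodB_pos q hq0 hq1 k
  have hA' : ((∏ j ∈ Finset.range k, (1 - q ^ (α + 1 + (j : ℝ))) : ℝ) : ℂ) ≠ 0 :=
    Complex.ofReal_ne_zero.mpr hApos.ne'
  have hB' : ((∏ j ∈ Finset.range k, (1 - q ^ (j + 1)) : ℝ) : ℂ) ≠ 0 :=
    Complex.ofReal_ne_zero.mpr hBpos.ne'
  rw [hqA, hqB, gam_eq α q k hApos.ne' hBpos.ne', mul_pow]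
  push_cast [-Complex.ofReal_prod]
  rw [pow_mul]
  field_simp

private lemma term_b_eq (α : ℝ) (hα : 0 < α + 1) (z : ℂ) (k : ℕ) :
    (-z) ^ k / ((∏ j ∈ Finset.range k, ((α : ℂ) + 1 + (j : ℂ))) * (k.factorial : ℂ))
      = (-1) ^ k * ((glim α k : ℝ) : ℂ) * z ^ k := by
  have hPpos : 0 < ∏ j ∈ Finset.range k, (α + 1 + (j : ℝ)) :=
    Finset.prod_pos fun j _ => by positivity
  have hP : (∏ j ∈ Finset.range k, ((α : ℂ) + 1 + (j : ℂ)))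
      = ((∏ j ∈ Finset.range k, (α + 1 + (j : ℝ)) : ℝ) : ℂ) := by
    push_cast; rfl
  rw [hP]
  simp only [glim]
  push_cast [-Complex.ofReal_prod]
  rw [neg_pow]
  have h1 : ((∏ j ∈ Finset.range k, (α + 1 + (j : ℝ)) : ℝ) : ℂ) ≠ 0 :=
    Complex.ofReal_ne_zero.mpr hPpos.ne'
  have h2 : ((k.factorial : ℝ) : ℂ) ≠ 0 := by
    exact_mod_cast Nat.cast_ne_zero.mpr k.factorial_ne_zero
  field_simp

private lemma gam_tendsto (α : ℝ) (hα : 0 < α + 1) (k : ℕ) :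
    Tendsto (fun q => gam α q k) (nhdsWithin 1 (Set.Iio 1)) (nhds (glim α k)) := by
  have lem_inv : ∀ s : ℝ, 0 < s → Tendsto (fun q : ℝ => (1 - q) / (1 - q ^ s))
      (nhdsWithin 1 (Set.Iio 1)) (nhds s⁻¹) := inv_ratio_tendsto
  have T1 : Tendsto (fun q : ℝ => q ^ (k * (k - 1) / 2)) (nhdsWithin 1 (Set.Iio 1))
      (nhds 1) := by
    have := ((continuous_pow (k * (k - 1) / 2)).tendsto (1 : ℝ)).mono_left
      (nhdsWithin_le_nhds (s := Set.Iio 1))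
    simpa using this
  have T2 : Tendsto (fun q : ℝ => ∏ j ∈ Finset.range k, ((1 - q) / (1 - q ^ (α + 1 + (j : ℝ)))))
      (nhdsWithin 1 (Set.Iio 1)) (nhds (∏ j ∈ Finset.range k, (α + 1 + (j : ℝ))⁻¹)) := by
    refine tendsto_finset_prod _ fun j _ => ?_
    refine lem_inv _ ?_
    have : (0:ℝ) ≤ (j : ℝ) := Nat.cast_nonneg j
    linarith
  have T3 : Tendsto (fun q : ℝ => ∏ j ∈ Finset.range k, ((1 - q) / (1 - q ^ (j + 1))))
      (nhdsWithin 1 (Set.Iio 1)) (nhds (∏ j ∈ Finset.range k, (((j : ℝ) + 1))⁻¹)) := by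
    refine tendsto_finset_prod _ fun j _ => ?_
    have h := lem_inv ((j : ℝ) + 1) (by positivity)
    refine h.congr fun q => ?_
    rw [show ((j : ℝ) + 1) = ((j + 1 : ℕ) : ℝ) by push_cast; ring, Real.rpow_natCast]
  have hmul := (T1.mul T2).mul T3
  rw [one_mul] at hmul
  have heq : (∏ j ∈ Finset.range k, (α + 1 + (j : ℝ))⁻¹) *
      (∏ j ∈ Finset.range k, (((j : ℝ) + 1))⁻¹) = glim α k := by
    rw [glim, Finset.prod_inv_distrib, Finset.prod_inv_distrib]
    congr 1
    rw [show (∏ j ∈ Finset.range k, ((j : ℝ) + 1)) = ((k.factorial : ℕ) : ℝ) by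
      rw [← Finset.prod_range_add_one_eq_factorial]; push_cast; rfl]
  rw [heq] at hmul
  exact hmul.congr fun q => by rw [gam]




private lemma gam_bound (α q : ℝ) (hα : 0 < α + 1) (hq0 : 0 < q) (hq1 : q < 1)
    (hq2 : (α + 1) / 2 * (1 - q) ≤ 1 - q ^ (α + 1)) (k : ℕ) :
    |gam α q k| ≤ 1 / (min 1 ((α + 1) / 2) * (k.factorial : ℝ)) := by
  have hcpos : 0 < min 1 ((α + 1) / 2) := lt_min one_pos (by linarith)
  have hApos := prodA_pos α q hα hq0 hq1 k
  have hBpos := prodB_pos q hq0 hq1 k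
  have h1q : 0 < 1 - q := by linarith
  have hE : (∑ j ∈ Finset.range k, j) = k * (k - 1) / 2 := Finset.sum_range_id k
  have hAlb := prodA_lb α q hα hq0 hq1 hq2 k
  have hBlb := prodB_lb q hq0 hq1 k
  rw [gam_eq α q k hApos.ne' hBpos.ne']
  have hnum : (0:ℝ) ≤ q ^ (k * (k - 1) / 2) * (1 - q) ^ (2 * k) := by positivity
  rw [_root_.abs_of_nonneg (div_nonneg hnum (mul_nonneg hApos.le hBpos.le))]
  rw [div_le_div_iff₀ (mul_pos hApos hBpos) (by positivity)]
  calc q ^ (k * (k - 1) / 2) * (1 - q) ^ (2 * k) * (min 1 ((α + 1) / 2) * (k.factorial : ℝ))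
      = (min 1 ((α + 1) / 2) * (1 - q) ^ k) *
        ((1 - q) ^ k * (k.factorial : ℝ) * q ^ (∑ j ∈ Finset.range k, j)) := by
        rw [hE]; ring
    _ ≤ (∏ j ∈ Finset.range k, (1 - q ^ (α + 1 + (j : ℝ)))) *
        (∏ j ∈ Finset.range k, (1 - q ^ (j + 1))) := by
        refine mul_le_mul hAlb hBlb ?_ hApos.le
        have : (0:ℝ) ≤ (1 - q) ^ k * (k.factorial : ℝ) :=
          mul_nonneg (pow_nonneg h1q.le k) (Nat.cast_nonneg _)
        positivity
    _ = 1 * ((∏ j ∈ Finset.range k, (1 - q ^ (α + 1 + (j : ℝ)))) *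
        (∏ j ∈ Finset.range k, (1 - q ^ (j + 1)))) := (one_mul _).symm

private lemma glim_bound (α : ℝ) (hα : 0 < α + 1) (k : ℕ) :
    |glim α k| ≤ 1 / (min 1 ((α + 1) / 2) * (k.factorial : ℝ)) := by
  have hcpos : 0 < min 1 ((α + 1) / 2) := lt_min one_pos (by linarith)
  have hPpos : 0 < ∏ j ∈ Finset.range k, (α + 1 + (j : ℝ)) :=
    Finset.prod_pos fun j _ => by positivity
  have hfac : (0:ℝ) < (k.factorial : ℝ) := by exact_mod_cast k.factorial_pos
  rw [glim, _root_.abs_of_nonneg (by positivity)]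
  rw [← mul_inv, ← one_div]
  apply one_div_le_one_div_of_le (by positivity)
  exact mul_le_mul_of_nonneg_right (pochP_lb α hα k) hfac.le

/-- `₀F₁(-;α+1;z) = ∑ z^k/((α+1)_k k!)`. -/
noncomputable def F01 (α : ℝ) (z : ℂ) : ℂ :=
  ∑' k : ℕ, z ^ k / ((∏ j ∈ Finset.range k, ((α : ℂ) + 1 + (j : ℂ))) * (k.factorial : ℂ))

/-- Proposition A.2: `₁φ₁(0;q^{α+1};q,(1-q)²z) → ₀F₁(-;α+1;-z)` as `q ↑ 1`, uniformly on
compact subsets of `ℂ`. -/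
theorem stmt17 (α : ℝ) (hα : -1 < α) (K : Set ℂ) (hK : IsCompact K) (ε : ℝ) (hε : 0 < ε) :
    ∃ δ > 0, ∀ q : ℝ, 1 - δ < q → q < 1 → ∀ z ∈ K,
      ‖(phi11 q (((q ^ (α + 1) : ℝ) : ℂ)) ((((1 - q) ^ 2 : ℝ) : ℂ) * z)
        - F01 α (-z))‖ < ε := by
  have hα1 : 0 < α + 1 := by linarith
  set c := min 1 ((α + 1) / 2) with hc
  have hcpos : 0 < c := lt_min one_pos (by linarith)
  obtain ⟨R0, hR0⟩ := hK.isBounded.subset_closedBall 0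
  set R := max R0 0 with hR
  have hRnn : (0:ℝ) ≤ R := le_max_right _ _
  have hzR : ∀ z ∈ K, ‖z‖ ≤ R := by
    intro z hz
    have h := hR0 hz
    rw [Metric.mem_closedBall, dist_zero_right] at h
    exact le_trans h (le_max_left _ _)
  set D : ℕ → ℝ := fun k => 2 / c * (R ^ k / (k.factorial : ℝ)) with hD
  have hDsum : Summable D := (Real.summable_pow_div_factorial R).mul_left _
  -- choose N
  have htail := tendsto_sum_nat_add D
  obtain ⟨N, hN⟩ := (htail.eventually_lt_const (by linarith : (0:ℝ) < ε / 2)).exists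
  -- good set of q
  have hq_half : ∀ᶠ q in nhdsWithin (1:ℝ) (Set.Iio 1), 1/2 < q :=
    (eventually_gt_nhds (by norm_num)).filter_mono nhdsWithin_le_nhds
  have hq_lt1 : ∀ᶠ q in nhdsWithin (1:ℝ) (Set.Iio 1), q < 1 :=
    eventually_mem_nhdsWithin
  have hq_alpha : ∀ᶠ q in nhdsWithin (1:ℝ) (Set.Iio 1),
      (α + 1) / 2 < (1 - q ^ (α + 1)) / (1 - q) :=
    (ratio_tendsto (α + 1) hα1).eventually_const_lt (by linarith)
  have hq_all : ∀ᶠ q in nhdsWithin (1:ℝ) (Set.Iio 1),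
      ∀ k ∈ Finset.range N, |gam α q k - glim α k| * R ^ k < ε / (2 * (N + 1)) := by
    rw [eventually_all_finset]
    intro k _
    have h : Tendsto (fun q => |gam α q k - glim α k| * R ^ k)
        (nhdsWithin (1:ℝ) (Set.Iio 1)) (nhds 0) := by
      have h0 : Tendsto (fun q => |gam α q k - glim α k| * R ^ k)
          (nhdsWithin (1:ℝ) (Set.Iio 1)) (nhds (|glim α k - glim α k| * R ^ k)) :=
        Tendsto.mul_const _ (Tendsto.abs ((gam_tendsto α hα1 k).sub
          (tendsto_const_nhds (x := glim α k))))
      simpa using h0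
    exact h.eventually_lt_const (by positivity)
  have hbig := (hq_half.and (hq_lt1.and (hq_alpha.and hq_all)))
  obtain ⟨l, hl, hsub⟩ := mem_nhdsLT_iff_exists_Ioo_subset.mp hbig
  rw [Set.mem_Iio] at hl
  refine ⟨1 - l, by linarith, ?_⟩
  intro q hql hq1' z hz
  obtain ⟨hhalf, hlt1, halphar, hsmall⟩ := hsub ⟨by linarith, hq1'⟩
  have hq0 : (0:ℝ) < q := by linarith
  have h1q : (0:ℝ) < 1 - q := by linarith
  have halpha : (α + 1) / 2 * (1 - q) ≤ 1 - q ^ (α + 1) :=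
    ((lt_div_iff₀ h1q).mp halphar).le
  have hza : ‖z‖ ≤ R := hzR z hz
  -- terms
  set a : ℕ → ℂ := fun k => (-1) ^ k * (q : ℂ) ^ (k * (k - 1) / 2) *
      ((((1 - q) ^ 2 : ℝ) : ℂ) * z) ^ k /
      (qPoch q (((q ^ (α + 1) : ℝ) : ℂ)) k * qPoch q (q : ℂ) k) with ha_def
  set b : ℕ → ℂ := fun k => (-z) ^ k /
      ((∏ j ∈ Finset.range k, ((α : ℂ) + 1 + (j : ℂ))) * (k.factorial : ℂ)) with hb_def
  have ha_eq : ∀ k, a k = (-1) ^ k * ((gam α q k : ℝ) : ℂ) * z ^ k :=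
    fun k => term_a_eq α q hα1 hq0 hq1' z k
  have hb_eq : ∀ k, b k = (-1) ^ k * ((glim α k : ℝ) : ℂ) * z ^ k :=
    fun k => term_b_eq α hα1 z k
  have hdiff : ∀ k, ‖a k - b k‖ = |gam α q k - glim α k| * ‖z‖ ^ k := by
    intro k
    have h : a k - b k = ((gam α q k - glim α k : ℝ) : ℂ) * ((-1) ^ k * z ^ k) := by
      rw [ha_eq, hb_eq]; push_cast; ring
    rw [h, norm_mul, Complex.norm_real, Real.norm_eq_abs, norm_mul, norm_pow, norm_neg,
      norm_one, one_pow, one_mul, norm_pow]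
  have hnorm_a : ∀ k, ‖a k‖ ≤ 1 / (c * (k.factorial : ℝ)) * R ^ k := by
    intro k
    rw [ha_eq, norm_mul, norm_mul, norm_pow, norm_neg, norm_one, one_pow, one_mul,
      Complex.norm_real, Real.norm_eq_abs, norm_pow]
    exact mul_le_mul (gam_bound α q hα1 hq0 hq1' halpha k)
      (pow_le_pow_left₀ (norm_nonneg z) hza k) (by positivity) (by positivity)
  have hnorm_b : ∀ k, ‖b k‖ ≤ 1 / (c * (k.factorial : ℝ)) * R ^ k := by
    intro k
    rw [hb_eq, norm_mul, norm_mul, norm_pow, norm_neg, norm_one, one_pow, one_mul,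
      Complex.norm_real, Real.norm_eq_abs, norm_pow]
    exact mul_le_mul (glim_bound α hα1 k)
      (pow_le_pow_left₀ (norm_nonneg z) hza k) (by positivity) (by positivity)
  have hDb : ∀ k, ‖a k - b k‖ ≤ D k := by
    intro k
    have hfac : (0:ℝ) < (k.factorial : ℝ) := by exact_mod_cast k.factorial_pos
    have h := le_trans (norm_sub_le (a k) (b k)) (add_le_add (hnorm_a k) (hnorm_b k))
    calc ‖a k - b k‖ ≤ 1 / (c * (k.factorial : ℝ)) * R ^ k
          + 1 / (c * (k.factorial : ℝ)) * R ^ k := h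
      _ = D k := by rw [hD]; field_simp; ring
  have hg_sum : Summable (fun k : ℕ => 1 / (c * (k.factorial : ℝ)) * R ^ k) := by
    have h1 : Summable (fun k : ℕ => 1 / c * (R ^ k / (k.factorial : ℝ))) :=
      (Real.summable_pow_div_factorial R).mul_left _
    refine h1.congr fun k => ?_
    field_simp
  have hsa : Summable a := Summable.of_norm_bounded hg_sum hnorm_a
  have hsb : Summable b := Summable.of_norm_bounded hg_sum hnorm_b
  have hsab : Summable (fun k => ‖a k - b k‖) :=
    Summable.of_nonneg_of_le (fun k => norm_nonneg _) hDb hDsum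
  have hkey : phi11 q (((q ^ (α + 1) : ℝ) : ℂ)) ((((1 - q) ^ 2 : ℝ) : ℂ) * z) - F01 α (-z)
      = ∑' k, (a k - b k) := by
    rw [phi11, F01, Summable.tsum_sub hsa hsb]
  rw [hkey]
  have hsplit : ∑' k, ‖a k - b k‖
      = ∑ k ∈ Finset.range N, ‖a k - b k‖ + ∑' k, ‖a (k + N) - b (k + N)‖ :=
    (Summable.sum_add_tsum_nat_add N hsab).symm
  have hpart1 : ∑ k ∈ Finset.range N, ‖a k - b k‖ < ε / 2 := by
    have hterm : ∀ k ∈ Finset.range N, ‖a k - b k‖ ≤ ε / (2 * (N + 1)) := by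
      intro k hk
      rw [hdiff k]
      refine le_trans ?_ (hsmall k hk).le
      exact mul_le_mul_of_nonneg_left (pow_le_pow_left₀ (norm_nonneg z) hza k)
        (abs_nonneg _)
    calc ∑ k ∈ Finset.range N, ‖a k - b k‖
        ≤ ∑ _k ∈ Finset.range N, ε / (2 * (N + 1)) := Finset.sum_le_sum hterm
      _ = (N : ℝ) * (ε / (2 * (N + 1))) := by
          rw [Finset.sum_const, Finset.card_range, nsmul_eq_mul]
      _ < ε / 2 := by
          rw [mul_div_assoc']
          rw [div_lt_div_iff₀ (by positivity) (by norm_num : (0:ℝ) < 2)]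
          nlinarith [hε, Nat.cast_nonneg (α := ℝ) N]
  have hpart2 : ∑' k, ‖a (k + N) - b (k + N)‖ < ε / 2 := by
    calc ∑' k, ‖a (k + N) - b (k + N)‖ ≤ ∑' k, D (k + N) :=
        Summable.tsum_le_tsum (fun k => hDb (k + N)) ((summable_nat_add_iff N).mpr hsab)
          ((summable_nat_add_iff N).mpr hDsum)
      _ < ε / 2 := hN
  calc ‖∑' k, (a k - b k)‖ ≤ ∑' k, ‖a k - b k‖ := norm_tsum_le_tsum_norm hsab
    _ = _ := hsplit
    _ < ε / 2 + ε / 2 := add_lt_add hpart1 hpart2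
    _ = ε := by ring
end

section
/- Let 0 < q < 1 and let a, b, c ∈ ℂ with c ∉ {q^{-l} : l = 0,1,2,...}. Then there exists a function u, analytic on the open set ℂ ∖ {q^{-l} : l = 0,1,2,...}, such that u(z) = ₂φ₁(a,b;c;q,z) for all z with |z| < 1. (Thus ₂φ₁(a,b;c;q,·) extends analytically to ℂ with possible poles only at the points q^{-l}, l = 0,1,2,...; the extension is unique since the domain is connected.) -/
open Complex Filter

/-- `₂φ₁(a,b;c;q,z)`. -/
noncomputable def phi21 (q : ℝ) (a b c z : ℂ) : ℂ :=
  ∑' k : ℕ, qPoch q a k * qPoch q b k * z ^ k / (qPoch q c k * qPoch q (q : ℂ) k)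

namespace Stmt18Aux

noncomputable def Complex.abs : AbsoluteValue ℂ ℝ := IsAbsoluteValue.toAbsoluteValue (norm : ℂ → ℝ)

lemma Complex.norm_eq_abs (z : ℂ) : ‖z‖ = Complex.abs z := rfl

lemma Complex.abs_ofReal (r : ℝ) : Complex.abs (r : ℂ) = |r| := by
  rw [← Complex.norm_eq_abs, Complex.norm_real, Real.norm_eq_abs]

lemma Complex.continuous_abs : Continuous Complex.abs := continuous_norm

lemma Complex.dist_eq (z w : ℂ) : dist z w = Complex.abs (z - w) := dist_eq_norm _ _

noncomputable def coef (q : ℝ) (a b c : ℂ) (k : ℕ) : ℂ :=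
  qPoch q a k * qPoch q b k / (qPoch q c k * qPoch q (q:ℂ) k)

lemma qPoch_succ (q : ℝ) (x : ℂ) (k : ℕ) :
    qPoch q x (k+1) = qPoch q x k * (1 - x * (q:ℂ)^k) := Finset.prod_range_succ _ _

-- Weierstrass product lower bound
lemma weier (s : Finset ℕ) (x : ℕ → ℝ) (h0 : ∀ j ∈ s, 0 ≤ x j) (h1 : ∀ j ∈ s, x j ≤ 1) :
    1 - ∑ j ∈ s, x j ≤ ∏ j ∈ s, (1 - x j) := by
  classical
  induction s using Finset.induction_on with
  | empty => simp
  | insert _ _ hns ih =>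
    rename_i n s
    rw [Finset.sum_insert hns, Finset.prod_insert hns]
    have h0' : ∀ j ∈ s, 0 ≤ x j := fun j hj => h0 j (Finset.mem_insert_of_mem hj)
    have h1' : ∀ j ∈ s, x j ≤ 1 := fun j hj => h1 j (Finset.mem_insert_of_mem hj)
    have ihs := ih h0' h1'
    have hxn0 : 0 ≤ x n := h0 n (Finset.mem_insert_self n s)
    have hxn1 : x n ≤ 1 := h1 n (Finset.mem_insert_self n s)
    have hsum0 : 0 ≤ ∑ j ∈ s, x j := Finset.sum_nonneg h0'
    nlinarith [mul_le_mul_of_nonneg_left ihs (by linarith : (0:ℝ) ≤ 1 - x n)]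

lemma geom_sum_le (q : ℝ) (hq0 : 0 < q) (hq1 : q < 1) (k : ℕ) :
    ∑ j ∈ Finset.range k, q ^ j ≤ 1 / (1 - q) := by
  have h := (summable_geometric_of_lt_one hq0.le hq1).sum_le_tsum (Finset.range k)
    (fun i _ => (pow_nonneg hq0.le i))
  rw [tsum_geometric_of_lt_one hq0.le hq1] at h
  simpa [one_div] using h

lemma qPoch_abs_le (q : ℝ) (hq0 : 0 < q) (hq1 : q < 1) (x : ℂ) (k : ℕ) :
    Complex.abs (qPoch q x k) ≤ Real.exp (Complex.abs x / (1 - q)) := by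
  rw [qPoch, map_prod]
  calc ∏ j ∈ Finset.range k, Complex.abs (1 - x * (q:ℂ)^j)
      ≤ ∏ j ∈ Finset.range k, Real.exp (Complex.abs x * q ^ j) := by
        apply Finset.prod_le_prod (fun j _ => AbsoluteValue.nonneg _ _)
        intro j _
        calc Complex.abs (1 - x * (q:ℂ)^j) ≤ Complex.abs 1 + Complex.abs (x * (q:ℂ)^j) := by
              simpa [sub_eq_add_neg] using Complex.abs.add_le 1 (-(x * (q:ℂ)^j))
          _ = 1 + Complex.abs x * q ^ j := by
              simp [map_mul, map_pow, Complex.abs_ofReal, abs_of_pos hq0]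
          _ ≤ Real.exp (Complex.abs x * q ^ j) := by
              have := Real.add_one_le_exp (Complex.abs x * q ^ j)
              linarith
    _ ≤ Real.exp (Complex.abs x / (1 - q)) := by
        rw [← Real.exp_sum]
        apply Real.exp_le_exp.2
        rw [← Finset.mul_sum]
        rw [div_eq_mul_inv, ← one_div]
        exact mul_le_mul_of_nonneg_left (geom_sum_le q hq0 hq1 k) (AbsoluteValue.nonneg _ _)







lemma qPoch_abs_lower (q : ℝ) (hq0 : 0 < q) (hq1 : q < 1) (x : ℂ)
    (hx : ∀ j : ℕ, (1:ℂ) - x * (q:ℂ)^j ≠ 0) :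
    ∃ m : ℝ, 0 < m ∧ ∀ k, m ≤ Complex.abs (qPoch q x k) := by
  have h1q : 0 < 1 - q := by linarith
  -- choose J with |x| q^J/(1-q) ≤ 1/2
  obtain ⟨J, hJ⟩ : ∃ J : ℕ, Complex.abs x * q ^ J / (1 - q) ≤ 1/2 := by
    obtain ⟨J, hJ⟩ := exists_pow_lt_of_lt_one
      (show (0:ℝ) < (1 - q) / (2 * (Complex.abs x + 1)) by positivity) hq1
    refine ⟨J, ?_⟩
    have hx0 : 0 ≤ Complex.abs x := AbsoluteValue.nonneg _ _
    rw [div_le_iff₀ h1q]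
    calc Complex.abs x * q ^ J ≤ Complex.abs x * ((1 - q) / (2 * (Complex.abs x + 1))) :=
          mul_le_mul_of_nonneg_left hJ.le hx0
      _ ≤ 1/2 * (1-q) := by
          rw [mul_div_assoc', div_le_iff₀ (by positivity)]; nlinarith
  set m0 : ℝ := ∏ j ∈ Finset.range J, min (Complex.abs (1 - x * (q:ℂ)^j)) 1 with hm0
  have hm0pos : 0 < m0 := Finset.prod_pos fun j _ =>
    lt_min (AbsoluteValue.pos _ (hx j)) one_pos
  refine ⟨m0 * (1/2), by positivity, fun k => ?_⟩
  have habs : Complex.abs (qPoch q x k) = ∏ j ∈ Finset.range k, Complex.abs (1 - x * (q:ℂ)^j) := by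
    rw [qPoch, map_prod]
  rcases le_or_gt k J with hk | hk
  · -- few factors: prod over range k of abs ≥ prod over range k of min ≥ prod over range J of min ≥ m0/2
    have h1 : ∏ j ∈ Finset.range J, min (Complex.abs (1 - x * (q:ℂ)^j)) 1
        ≤ ∏ j ∈ Finset.range k, min (Complex.abs (1 - x * (q:ℂ)^j)) 1 := by
      rw [← Finset.prod_range_mul_prod_Ico _ hk]
      have hle1 : ∏ j ∈ Finset.Ico k J, min (Complex.abs (1 - x * (q:ℂ)^j)) 1 ≤ 1 :=
        Finset.prod_le_one (fun j _ => le_of_lt (lt_min (AbsoluteValue.pos _ (hx j)) one_pos))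
          (fun j _ => min_le_right _ _)
      have hpos : (0:ℝ) ≤ ∏ j ∈ Finset.range k, min (Complex.abs (1 - x * (q:ℂ)^j)) 1 :=
        Finset.prod_nonneg (fun j _ => le_of_lt (lt_min (AbsoluteValue.pos _ (hx j)) one_pos))
      nlinarith [Finset.prod_nonneg (s := Finset.Ico k J)
        (fun j _ => le_of_lt (lt_min (AbsoluteValue.pos (Complex.abs) (hx j)) one_pos))]
    have h2 : ∏ j ∈ Finset.range k, min (Complex.abs (1 - x * (q:ℂ)^j)) 1
        ≤ ∏ j ∈ Finset.range k, Complex.abs (1 - x * (q:ℂ)^j) :=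
      Finset.prod_le_prod (fun j _ => le_of_lt (lt_min (AbsoluteValue.pos _ (hx j)) one_pos))
        (fun j _ => min_le_left _ _)
    rw [habs]
    have : m0 * (1/2) ≤ m0 * 1 := by
      apply mul_le_mul_of_nonneg_left (by norm_num) hm0pos.le
    calc m0 * (1/2) ≤ m0 := by linarith
      _ ≤ _ := le_trans h1 h2
  · -- split range k = range J ∪ Ico J k
    rw [habs, ← Finset.prod_range_mul_prod_Ico _ hk.le]
    have hA : m0 ≤ ∏ j ∈ Finset.range J, Complex.abs (1 - x * (q:ℂ)^j) :=
      Finset.prod_le_prod (fun j _ => le_of_lt (lt_min (AbsoluteValue.pos _ (hx j)) one_pos))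
        (fun j _ => min_le_left _ _)
    have hB : (1:ℝ)/2 ≤ ∏ j ∈ Finset.Ico J k, Complex.abs (1 - x * (q:ℂ)^j) := by
      have hfac : ∀ j ∈ Finset.Ico J k, 1 - Complex.abs x * q^j ≤ Complex.abs (1 - x * (q:ℂ)^j) := by
        intro j _
        have := norm_sub_norm_le (1 : ℂ) (x * (q:ℂ)^j)
        simp only [Complex.norm_eq_abs, map_one, map_mul, map_pow, Complex.abs_ofReal,
          abs_of_pos hq0] at this
        linarith
      have hxq1 : ∀ j ∈ Finset.Ico J k, Complex.abs x * q ^ j ≤ 1 := by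
        intro j hj
        have hj' : J ≤ j := (Finset.mem_Ico.1 hj).1
        have : Complex.abs x * q ^ j ≤ Complex.abs x * q ^ J := by
          apply mul_le_mul_of_nonneg_left (pow_le_pow_of_le_one hq0.le hq1.le hj')
            (AbsoluteValue.nonneg _ _)
        have h2 : Complex.abs x * q ^ J ≤ (1-q)/2 := by
          rw [div_le_iff₀ h1q] at hJ; linarith
        linarith
      have hxq0 : ∀ j ∈ Finset.Ico J k, 0 ≤ Complex.abs x * q ^ j := fun j _ => by positivity
      have hw := weier (Finset.Ico J k) (fun j => Complex.abs x * q ^ j) hxq0 hxq1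
      have hsum : ∑ j ∈ Finset.Ico J k, Complex.abs x * q ^ j ≤ 1/2 := by
        rw [← Finset.mul_sum]
        have hgeom : ∑ j ∈ Finset.Ico J k, q ^ j ≤ q ^ J / (1 - q) := by
          rw [Finset.sum_Ico_eq_sum_range]
          have : ∀ i ∈ Finset.range (k - J), q ^ (J + i) = q ^ J * q ^ i := fun i _ => pow_add q J i
          rw [Finset.sum_congr rfl this, ← Finset.mul_sum, div_eq_mul_inv, ← one_div]
          apply mul_le_mul_of_nonneg_left _ (pow_nonneg hq0.le J)
          have h := (summable_geometric_of_lt_one hq0.le hq1).sum_le_tsum (Finset.range (k-J))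
            (fun i _ => (pow_nonneg hq0.le i))
          rw [tsum_geometric_of_lt_one hq0.le hq1] at h
          simpa [one_div] using h
        calc Complex.abs x * ∑ j ∈ Finset.Ico J k, q ^ j
            ≤ Complex.abs x * (q ^ J / (1-q)) :=
              mul_le_mul_of_nonneg_left hgeom (AbsoluteValue.nonneg _ _)
          _ ≤ 1/2 := by rw [← mul_div_assoc]; exact hJ
      have := Finset.prod_le_prod (g := fun j => Complex.abs (1 - x * (q:ℂ)^j))
        (fun j hj => by have := hxq1 j hj; have := hxq0 j hj; linarith) hfac
      linarith
    calc m0 * (1/2) ≤ _ := mul_le_mul hA hB (by norm_num) (le_trans hm0pos.le hA)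


lemma one_sub_q_pow_ne (q : ℝ) (hq0 : 0 < q) (hq1 : q < 1) (j : ℕ) :
    (1:ℂ) - (q:ℂ) * (q:ℂ)^j ≠ 0 := by
  have : (q:ℂ) * (q:ℂ)^j = ((q^(j+1) : ℝ) : ℂ) := by push_cast; ring
  rw [this, sub_ne_zero]
  intro h
  have h2 : (q:ℝ)^(j+1) = 1 := by exact_mod_cast h.symm
  have h3 : (q:ℝ)^(j+1) < 1 := by
    apply pow_lt_one₀ hq0.le hq1; omega
  linarith

lemma hc_ne (q : ℝ) (hq0 : 0 < q) (c : ℂ) (hc : ∀ l : ℕ, c ≠ (q:ℂ)^(-(l:ℤ))) (j : ℕ) :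
    (1:ℂ) - c * (q:ℂ)^j ≠ 0 := by
  intro h
  have hqj : ((q:ℂ)^j) ≠ 0 := pow_ne_zero _ (by exact_mod_cast hq0.ne')
  apply hc j
  have : c * (q:ℂ)^j = 1 := by linear_combination -h
  rw [zpow_neg, zpow_natCast]
  field_simp at this ⊢
  linear_combination this
lemma qPoch_ne_zero (q : ℝ) (x : ℂ) (hx : ∀ j : ℕ, (1:ℂ) - x * (q:ℂ)^j ≠ 0) (k : ℕ) :
    qPoch q x k ≠ 0 := by
  rw [qPoch]
  exact Finset.prod_ne_zero_iff.2 fun j _ => hx j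

lemma coef_rec (q : ℝ) (hq0 : 0 < q) (hq1 : q < 1) (a b c : ℂ)
    (hc : ∀ j : ℕ, (1:ℂ) - c * (q:ℂ)^j ≠ 0) (k : ℕ) :
    coef q a b c (k+1) * ((1 - c * (q:ℂ)^k) * (1 - (q:ℂ) * (q:ℂ)^k))
      = coef q a b c k * ((1 - a * (q:ℂ)^k) * (1 - b * (q:ℂ)^k)) := by
  have hcK : qPoch q c k ≠ 0 := qPoch_ne_zero q c hc k
  have hqK : qPoch q (q:ℂ) k ≠ 0 :=
    qPoch_ne_zero q (q:ℂ) (fun j => one_sub_q_pow_ne q hq0 hq1 j) k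
  have h1 : (1:ℂ) - c * (q:ℂ)^k ≠ 0 := hc k
  have h2 : (1:ℂ) - (q:ℂ) * (q:ℂ)^k ≠ 0 := one_sub_q_pow_ne q hq0 hq1 k
  rw [coef, coef, qPoch_succ, qPoch_succ, qPoch_succ, qPoch_succ]
  rw [div_mul_eq_mul_div, div_eq_iff (by exact mul_ne_zero (mul_ne_zero hcK h1) (mul_ne_zero hqK h2))]
  field_simp



lemma coef_bound (q : ℝ) (hq0 : 0 < q) (hq1 : q < 1) (a b c : ℂ)
    (hc' : ∀ j : ℕ, (1:ℂ) - c * (q:ℂ)^j ≠ 0) :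
    ∃ M : ℝ, 0 < M ∧ ∀ k, Complex.abs (coef q a b c k) ≤ M := by
  obtain ⟨mc, hmc, hmcb⟩ := qPoch_abs_lower q hq0 hq1 c hc'
  obtain ⟨mq, hmq, hmqb⟩ := qPoch_abs_lower q hq0 hq1 (q:ℂ) (one_sub_q_pow_ne q hq0 hq1)
  refine ⟨Real.exp (Complex.abs a/(1-q)) * Real.exp (Complex.abs b/(1-q)) / (mc*mq),
    by positivity, fun k => ?_⟩
  rw [coef, map_div₀, map_mul, map_mul]
  apply div_le_div₀ (by positivity)
    (mul_le_mul (qPoch_abs_le q hq0 hq1 a k) (qPoch_abs_le q hq0 hq1 b k)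
      (AbsoluteValue.nonneg _ _) (Real.exp_pos _).le)
    (by positivity)
    (mul_le_mul (hmcb k) (hmqb k) hmq.le (AbsoluteValue.nonneg _ _))

noncomputable def F (q : ℝ) (a b c : ℂ) (z : ℂ) : ℂ := ∑' k, coef q a b c k * z ^ k

lemma summable_template (q : ℝ) (a b c : ℂ) {M : ℝ}
    (hM : ∀ k, Complex.abs (coef q a b c k) ≤ M) {w : ℂ} (hw : Complex.abs w < 1)
    (g : ℕ → ℂ) (C : ℝ) (hg : ∀ k, Complex.abs (g k) ≤ C) :
    Summable (fun k => coef q a b c k * w ^ k * g k) := by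
  have hM0 : 0 ≤ M := le_trans (AbsoluteValue.nonneg _ _) (hM 0)
  have hC0 : 0 ≤ C := le_trans (AbsoluteValue.nonneg _ _) (hg 0)
  apply Summable.of_norm_bounded (g := fun k => (M*C) * (Complex.abs w)^k)
    ((summable_geometric_of_lt_one (AbsoluteValue.nonneg _ _) hw).mul_left (M*C))
  intro k
  have : ‖coef q a b c k * w ^ k * g k‖
      = Complex.abs (coef q a b c k) * (Complex.abs w)^k * Complex.abs (g k) := by
    simp [Complex.norm_eq_abs, map_mul, map_pow]
  rw [this]
  calc Complex.abs (coef q a b c k) * (Complex.abs w)^k * Complex.abs (g k)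
      ≤ M * (Complex.abs w)^k * C := by
        apply mul_le_mul (mul_le_mul (hM k) le_rfl (by positivity) hM0) (hg k)
          (AbsoluteValue.nonneg _ _) (by positivity)
    _ = M * C * (Complex.abs w)^k := by ring

noncomputable def Pterm (q : ℝ) (a b c z : ℂ) (k : ℕ) : ℂ :=
  coef q a b c k * z^k * (1 - (c+(q:ℂ))*(q:ℂ)^k/(q:ℂ) + c*(q:ℂ)^(2*k)/(q:ℂ))

noncomputable def Qterm (q : ℝ) (a b c z : ℂ) (k : ℕ) : ℂ :=
  coef q a b c k * z^(k+1) * (-(1:ℂ) + (a+b)*(q:ℂ)^k - a*b*(q:ℂ)^(2*k))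

lemma funeq (q : ℝ) (hq0 : 0 < q) (hq1 : q < 1) (a b c : ℂ)
    (hc' : ∀ j : ℕ, (1:ℂ) - c * (q:ℂ)^j ≠ 0) (z : ℂ) (hz : Complex.abs z < 1) :
    (1 - z) * F q a b c z
      = ((c+(q:ℂ))/(q:ℂ) - (a+b)*z) * F q a b c ((q:ℂ)*z)
        - (c/(q:ℂ) - a*b*z) * F q a b c ((q:ℂ)*((q:ℂ)*z)) := by
  obtain ⟨M, hMpos, hM⟩ := coef_bound q hq0 hq1 a b c hc'
  have hqC : (q:ℂ) ≠ 0 := by exact_mod_cast hq0.ne'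
  set co := coef q a b c with hco
  have habsq : ∀ w : ℂ, Complex.abs ((q:ℂ)*w) ≤ Complex.abs w := by
    intro w
    rw [map_mul, Complex.abs_ofReal, abs_of_pos hq0]
    nlinarith [AbsoluteValue.nonneg Complex.abs w]
  have hqz : Complex.abs ((q:ℂ)*z) < 1 := lt_of_le_of_lt (habsq z) hz
  have hqqz : Complex.abs ((q:ℂ)*((q:ℂ)*z)) < 1 := lt_of_le_of_lt (habsq _) hqz
  -- summability of the three plain series (with constants multiplied in)
  have hone : ∀ w : ℂ, Complex.abs w < 1 → ∀ u : ℂ, Summable (fun k => u * (co k * w ^ k)) := by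
    intro w hw u
    have := summable_template q a b c hM hw (fun _ => (1:ℂ)) 1 (fun _ => by simp)
    simpa using (this.mul_left u)
  set Az := ((c+(q:ℂ))/(q:ℂ) - (a+b)*z) with hAz
  set Bz := (c/(q:ℂ) - a*b*z) with hBz
  have hA : Summable (fun k => (1-z) * (co k * z ^ k)) := hone z hz _
  have hB : Summable (fun k => Az * (co k * ((q:ℂ)*z) ^ k)) := hone _ hqz _
  have hC : Summable (fun k => Bz * (co k * ((q:ℂ)*((q:ℂ)*z)) ^ k)) := hone _ hqqz _
  have hP : Summable (fun k => Pterm q a b c z k) := by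
    apply summable_template q a b c hM hz
      (g := fun k => (1 - (c+(q:ℂ))*(q:ℂ)^k/(q:ℂ) + c*(q:ℂ)^(2*k)/(q:ℂ)))
      (C := 1 + (Complex.abs c + q)/q + Complex.abs c / q)
    intro k
    have hqk : Complex.abs ((q:ℂ)^k) ≤ 1 := by
      rw [map_pow, Complex.abs_ofReal, abs_of_pos hq0]
      exact pow_le_one₀ hq0.le hq1.le
    have hq2k : Complex.abs ((q:ℂ)^(2*k)) ≤ 1 := by
      rw [map_pow, Complex.abs_ofReal, abs_of_pos hq0]
      exact pow_le_one₀ hq0.le hq1.le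
    calc Complex.abs (1 - (c+(q:ℂ))*(q:ℂ)^k/(q:ℂ) + c*(q:ℂ)^(2*k)/(q:ℂ))
        ≤ Complex.abs (1 - (c+(q:ℂ))*(q:ℂ)^k/(q:ℂ)) + Complex.abs (c*(q:ℂ)^(2*k)/(q:ℂ)) :=
          Complex.abs.add_le _ _
      _ ≤ (Complex.abs 1 + Complex.abs ((c+(q:ℂ))*(q:ℂ)^k/(q:ℂ))) + Complex.abs (c*(q:ℂ)^(2*k)/(q:ℂ)) := by
          have := Complex.abs.add_le 1 (-((c+(q:ℂ))*(q:ℂ)^k/(q:ℂ)))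
          simp only [sub_eq_add_neg, map_neg_eq_map] at this ⊢
          linarith
      _ ≤ 1 + (Complex.abs c + q)/q + Complex.abs c / q := by
          rw [map_one]
          have h1 : Complex.abs ((c+(q:ℂ))*(q:ℂ)^k/(q:ℂ)) ≤ (Complex.abs c + q)/q := by
            rw [map_div₀, map_mul, Complex.abs_ofReal, abs_of_pos hq0]
            apply div_le_div₀ ?_ ?_ hq0 le_rfl
            · positivity
            · calc Complex.abs (c+(q:ℂ)) * Complex.abs ((q:ℂ)^k)
                  ≤ (Complex.abs c + q) * 1 := by
                    apply mul_le_mul ?_ hqk (AbsoluteValue.nonneg _ _) (by positivity)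
                    calc Complex.abs (c+(q:ℂ)) ≤ Complex.abs c + Complex.abs (q:ℂ) :=
                          Complex.abs.add_le _ _
                      _ = Complex.abs c + q := by rw [Complex.abs_ofReal, abs_of_pos hq0]
                _ = Complex.abs c + q := mul_one _
          have h2 : Complex.abs (c*(q:ℂ)^(2*k)/(q:ℂ)) ≤ Complex.abs c / q := by
            rw [map_div₀, map_mul, Complex.abs_ofReal, abs_of_pos hq0]
            apply div_le_div₀ ?_ ?_ hq0 le_rfl
            · positivity
            · calc Complex.abs c * Complex.abs ((q:ℂ)^(2*k)) ≤ Complex.abs c * 1 :=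
                  mul_le_mul_of_nonneg_left hq2k (AbsoluteValue.nonneg _ _)
                _ = Complex.abs c := mul_one _
          linarith
  have hQ : Summable (fun k => Qterm q a b c z k) := by
    have : ∀ k : ℕ, Qterm q a b c z k
        = co k * z ^ k * (z * (-(1:ℂ) + (a+b)*(q:ℂ)^k - a*b*(q:ℂ)^(2*k))) := by
      intro k; rw [Qterm]; ring
    rw [funext this]
    apply summable_template q a b c hM hz _ (1 * (1 + (Complex.abs a + Complex.abs b) + Complex.abs a * Complex.abs b))
    intro k
    have hqk : Complex.abs ((q:ℂ)^k) ≤ 1 := by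
      rw [map_pow, Complex.abs_ofReal, abs_of_pos hq0]; exact pow_le_one₀ hq0.le hq1.le
    have hq2k : Complex.abs ((q:ℂ)^(2*k)) ≤ 1 := by
      rw [map_pow, Complex.abs_ofReal, abs_of_pos hq0]; exact pow_le_one₀ hq0.le hq1.le
    rw [map_mul]
    apply mul_le_mul hz.le ?_ (AbsoluteValue.nonneg _ _) (by norm_num)
    calc Complex.abs (-(1:ℂ) + (a+b)*(q:ℂ)^k - a*b*(q:ℂ)^(2*k))
        ≤ Complex.abs (-(1:ℂ) + (a+b)*(q:ℂ)^k) + Complex.abs (a*b*(q:ℂ)^(2*k)) := by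
          have := Complex.abs.add_le (-(1:ℂ) + (a+b)*(q:ℂ)^k) (-(a*b*(q:ℂ)^(2*k)))
          simp only [sub_eq_add_neg, map_neg_eq_map] at this ⊢; linarith
      _ ≤ (Complex.abs (-(1:ℂ)) + Complex.abs ((a+b)*(q:ℂ)^k)) + Complex.abs (a*b*(q:ℂ)^(2*k)) := by
          have := Complex.abs.add_le (-(1:ℂ)) ((a+b)*(q:ℂ)^k)
          linarith
      _ ≤ 1 + (Complex.abs a + Complex.abs b) + Complex.abs a * Complex.abs b := by
          simp only [map_neg_eq_map, map_one, map_mul]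
          have h1 : Complex.abs (a+b) * Complex.abs ((q:ℂ)^k)
              ≤ (Complex.abs a + Complex.abs b) * 1 :=
            mul_le_mul (Complex.abs.add_le a b) hqk (AbsoluteValue.nonneg _ _) (by positivity)
          have h2 : Complex.abs a * Complex.abs b * Complex.abs ((q:ℂ)^(2*k))
              ≤ Complex.abs a * Complex.abs b * 1 :=
            mul_le_mul_of_nonneg_left hq2k (by positivity)
          simp only [mul_one] at h1 h2
          linarith
  have hPs : Summable (fun k => Pterm q a b c z (k+1)) := (summable_nat_add_iff 1).2 hP
  -- combine tsums
  have e1 : (1-z) * F q a b c z = ∑' k, (1-z) * (co k * z ^ k) := (tsum_mul_left).symm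
  have e2 : Az * F q a b c ((q:ℂ)*z) = ∑' k, Az * (co k * ((q:ℂ)*z) ^ k) := (tsum_mul_left).symm
  have e3 : Bz * F q a b c ((q:ℂ)*((q:ℂ)*z)) = ∑' k, Bz * (co k * ((q:ℂ)*((q:ℂ)*z)) ^ k) :=
    (tsum_mul_left).symm
  have eterm : ∀ k, (1-z) * (co k * z ^ k) - Az * (co k * ((q:ℂ)*z) ^ k)
      + Bz * (co k * ((q:ℂ)*((q:ℂ)*z)) ^ k) = Pterm q a b c z k + Qterm q a b c z k := by
    intro k
    rw [Pterm, Qterm, hAz, hBz, ← hco]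
    rw [mul_pow, mul_pow, mul_pow]
    have h2k : ((q:ℂ)^k)^k = 0 ∨ True := Or.inr trivial
    have hq2 : (q:ℂ)^(2*k) = (q:ℂ)^k * (q:ℂ)^k := by rw [two_mul, pow_add]
    rw [hq2]
    field_simp
    ring
  have key : (1-z) * F q a b c z - (Az * F q a b c ((q:ℂ)*z) - Bz * F q a b c ((q:ℂ)*((q:ℂ)*z))) = 0 := by
    rw [e1, e2, e3]
    have hsub : ∑' k, (1-z) * (co k * z ^ k) - ∑' k, Az * (co k * ((q:ℂ)*z) ^ k)
        + ∑' k, Bz * (co k * ((q:ℂ)*((q:ℂ)*z)) ^ k)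
        = ∑' k, ((1-z) * (co k * z ^ k) - Az * (co k * ((q:ℂ)*z) ^ k)
            + Bz * (co k * ((q:ℂ)*((q:ℂ)*z)) ^ k)) := by
      rw [Summable.tsum_add (hA.sub hB) hC, Summable.tsum_sub hA hB]
    have : ∑' k, ((1-z) * (co k * z ^ k) - Az * (co k * ((q:ℂ)*z) ^ k)
        + Bz * (co k * ((q:ℂ)*((q:ℂ)*z)) ^ k)) = 0 := by
      rw [tsum_congr eterm]
      rw [Summable.tsum_add hP hQ]
      rw [Summable.tsum_eq_zero_add hP]
      have hP0 : Pterm q a b c z 0 = 0 := by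
        rw [Pterm]
        have : (1:ℂ) - (c+(q:ℂ))*(q:ℂ)^(0:ℕ)/(q:ℂ) + c*(q:ℂ)^(2*0)/(q:ℂ) = 0 := by
          field_simp
          ring
        rw [this, mul_zero]
      rw [hP0, zero_add, ← Summable.tsum_add hPs hQ]
      have hzero : ∀ k, Pterm q a b c z (k+1) + Qterm q a b c z k = 0 := by
        intro k
        have h := coef_rec q hq0 hq1 a b c hc' k
        have hb1 : (1:ℂ) - (c+(q:ℂ))*(q:ℂ)^(k+1)/(q:ℂ) + c*(q:ℂ)^(2*(k+1))/(q:ℂ)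
            = (1 - c*(q:ℂ)^k) * (1 - (q:ℂ)*(q:ℂ)^k) := by
          field_simp
          ring
        have hb2 : (-(1:ℂ) + (a+b)*(q:ℂ)^k - a*b*(q:ℂ)^(2*k))
            = -((1 - a*(q:ℂ)^k) * (1 - b*(q:ℂ)^k)) := by
          rw [two_mul, pow_add]; ring
        rw [Pterm, Qterm, hb1, hb2, ← hco]
        calc co (k+1) * z^(k+1) * ((1 - c*(q:ℂ)^k) * (1 - (q:ℂ)*(q:ℂ)^k))
            + co k * z^(k+1) * -((1 - a*(q:ℂ)^k) * (1 - b*(q:ℂ)^k))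
            = z^(k+1) * (co (k+1) * ((1 - c*(q:ℂ)^k) * (1 - (q:ℂ)*(q:ℂ)^k))
              - co k * ((1 - a*(q:ℂ)^k) * (1 - b*(q:ℂ)^k))) := by ring
          _ = 0 := by rw [hco, h, sub_self, mul_zero]
      rw [tsum_congr hzero, tsum_zero]
    linear_combination hsub.trans this
  linear_combination key

noncomputable def uA (q : ℝ) (a b c : ℂ) : ℕ → ℂ → ℂ
  | 0 => F q a b c
  | n+1 => fun z => (((c+(q:ℂ))/(q:ℂ) - (a+b)*z) * uA q a b c n ((q:ℂ)*z)
      - (c/(q:ℂ) - a*b*z) * uA q a b c n ((q:ℂ)*((q:ℂ)*z))) / (1 - z)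

lemma uA_zero (q : ℝ) (a b c : ℂ) : uA q a b c 0 = F q a b c := rfl

lemma uA_succ (q : ℝ) (a b c : ℂ) (n : ℕ) (z : ℂ) :
    uA q a b c (n+1) z = (((c+(q:ℂ))/(q:ℂ) - (a+b)*z) * uA q a b c n ((q:ℂ)*z)
      - (c/(q:ℂ) - a*b*z) * uA q a b c n ((q:ℂ)*((q:ℂ)*z))) / (1 - z) := rfl

lemma F_analyticAt (q : ℝ) (hq0 : 0 < q) (hq1 : q < 1) (a b c : ℂ)
    (hc' : ∀ j : ℕ, (1:ℂ) - c * (q:ℂ)^j ≠ 0) (z : ℂ) (hz : Complex.abs z < 1) :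
    AnalyticAt ℂ (F q a b c) z := by
  obtain ⟨M, hMpos, hM⟩ := coef_bound q hq0 hq1 a b c hc'
  set p : FormalMultilinearSeries ℂ ℂ ℂ :=
    fun n => ContinuousMultilinearMap.mkPiRing ℂ (Fin n) (coef q a b c n) with hp
  have hrad : 1 ≤ p.radius := by
    apply p.le_radius_of_bound M
    intro n
    rw [hp]
    simp only [ContinuousMultilinearMap.norm_mkPiRing, NNReal.coe_one, one_pow, mul_one]
    exact hM n
  have hsum : F q a b c = p.sum := by
    funext x
    rw [F, FormalMultilinearSeries.sum]
    apply tsum_congr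
    intro k
    rw [hp]
    simp [ContinuousMultilinearMap.mkPiRing_apply, Finset.prod_const, smul_eq_mul]
    ring
  rw [hsum]
  have hr0 : (0:ENNReal) < p.radius := lt_of_lt_of_le (by norm_num) hrad
  have hball := (p.hasFPowerSeriesOnBall hr0).analyticOnNhd
  apply hball
  have : (‖z‖₊ : ENNReal) < 1 := by
    rw [← ENNReal.coe_one, ENNReal.coe_lt_coe, ← NNReal.coe_lt_coe]
    simpa [Complex.norm_eq_abs] using hz
  simp only [EMetric.mem_ball, edist_zero_right]
  exact lt_of_lt_of_le this hrad

lemma ne_pole_mul (q : ℝ) (hq0 : 0 < q) (z : ℂ) (hpole : ∀ l : ℕ, z ≠ (q:ℂ)^(-(l:ℤ)))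
    (l : ℕ) : (q:ℂ) * z ≠ (q:ℂ)^(-(l:ℤ)) := by
  have hqC : (q:ℂ) ≠ 0 := by exact_mod_cast hq0.ne'
  intro h
  apply hpole (l+1)
  have : z = (q:ℂ)^(-(l:ℤ)) / (q:ℂ) := by
    field_simp at h ⊢
    linear_combination h
  rw [this, div_eq_mul_inv, ← zpow_neg_one, ← zpow_add₀ hqC]
  congr 1
  push_cast
  ring

lemma uA_analyticAt (q : ℝ) (hq0 : 0 < q) (hq1 : q < 1) (a b c : ℂ)
    (hc' : ∀ j : ℕ, (1:ℂ) - c * (q:ℂ)^j ≠ 0) :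
    ∀ n : ℕ, ∀ z : ℂ, Complex.abs z * q^n < 1 → (∀ l : ℕ, z ≠ (q:ℂ)^(-(l:ℤ))) →
      AnalyticAt ℂ (uA q a b c n) z := by
  intro n
  induction n with
  | zero =>
    intro z hz _
    exact F_analyticAt q hq0 hq1 a b c hc' z (by simpa using hz)
  | succ n ih =>
    intro z hz hpole
    have habs : ∀ w : ℂ, Complex.abs ((q:ℂ)*w) = q * Complex.abs w := by
      intro w; rw [map_mul, Complex.abs_ofReal, abs_of_pos hq0]
    have hqz : Complex.abs ((q:ℂ)*z) * q^n < 1 := by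
      rw [habs]
      calc q * Complex.abs z * q^n = Complex.abs z * q^(n+1) := by ring
        _ < 1 := hz
    have hqqz : Complex.abs ((q:ℂ)*((q:ℂ)*z)) * q^n < 1 := by
      rw [habs, habs]
      have h0 : 0 < q^(n+1) := by positivity
      calc q * (q * Complex.abs z) * q^n = q * (Complex.abs z * q^(n+1)) := by ring
        _ < q * 1 := by
            apply mul_lt_mul_of_pos_left hz hq0
        _ ≤ 1 := by nlinarith
    have hp1 : ∀ l : ℕ, (q:ℂ)*z ≠ (q:ℂ)^(-(l:ℤ)) := ne_pole_mul q hq0 z hpole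
    have hp2 : ∀ l : ℕ, (q:ℂ)*((q:ℂ)*z) ≠ (q:ℂ)^(-(l:ℤ)) := ne_pole_mul q hq0 _ hp1
    have h1 : AnalyticAt ℂ (fun w => uA q a b c n ((q:ℂ)*w)) z := by
      have hg : AnalyticAt ℂ (fun w : ℂ => (q:ℂ)*w) z := analyticAt_const.mul analyticAt_id
      have := AnalyticAt.comp (g := uA q a b c n) (f := fun w : ℂ => (q:ℂ)*w) (x := z)
        (ih ((q:ℂ)*z) hqz hp1) hg
      simpa [Function.comp_def] using this
    have h2 : AnalyticAt ℂ (fun w => uA q a b c n ((q:ℂ)*((q:ℂ)*w))) z := by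
      have hg : AnalyticAt ℂ (fun w : ℂ => (q:ℂ)*((q:ℂ)*w)) z :=
        analyticAt_const.mul (analyticAt_const.mul analyticAt_id)
      have := AnalyticAt.comp (g := uA q a b c n) (f := fun w : ℂ => (q:ℂ)*((q:ℂ)*w)) (x := z)
        (ih ((q:ℂ)*((q:ℂ)*z)) hqqz hp2) hg
      simpa [Function.comp_def] using this
    have hz1 : (1:ℂ) - z ≠ 0 := by
      rw [sub_ne_zero]
      intro h
      apply hpole 0
      simp [← h]
    have hA : AnalyticAt ℂ (fun w : ℂ => (c+(q:ℂ))/(q:ℂ) - (a+b)*w) z :=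
      analyticAt_const.sub (analyticAt_const.mul analyticAt_id)
    have hB : AnalyticAt ℂ (fun w : ℂ => c/(q:ℂ) - a*b*w) z :=
      analyticAt_const.sub (analyticAt_const.mul analyticAt_id)
    have := ((hA.mul h1).sub (hB.mul h2)).div
      (analyticAt_const.sub analyticAt_id) (by simpa using hz1)
    exact this

lemma abs_pole (q : ℝ) (hq0 : 0 < q) (l : ℕ) :
    Complex.abs ((q:ℂ)^(-(l:ℤ))) = (q:ℝ)^(-(l:ℤ)) := by
  rw [map_zpow₀, Complex.abs_ofReal, abs_of_pos hq0]

lemma one_le_abs_pole (q : ℝ) (hq0 : 0 < q) (hq1 : q < 1) (l : ℕ) :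
    1 ≤ Complex.abs ((q:ℂ)^(-(l:ℤ))) := by
  rw [abs_pole q hq0]
  rw [zpow_neg, zpow_natCast]
  rw [le_inv_comm₀ one_pos (by positivity)]
  simpa using pow_le_one₀ hq0.le hq1.le

lemma uA_succ_eq (q : ℝ) (hq0 : 0 < q) (hq1 : q < 1) (a b c : ℂ)
    (hc' : ∀ j : ℕ, (1:ℂ) - c * (q:ℂ)^j ≠ 0) :
    ∀ n : ℕ, ∀ z : ℂ, Complex.abs z * q^n < 1 → (∀ l : ℕ, z ≠ (q:ℂ)^(-(l:ℤ))) →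
      uA q a b c (n+1) z = uA q a b c n z := by
  intro n
  induction n with
  | zero =>
    intro z hz hpole
    have hz' : Complex.abs z < 1 := by simpa using hz
    have hz1 : (1:ℂ) - z ≠ 0 := by
      rw [sub_ne_zero]
      intro h
      apply hpole 0
      simp [← h]
    rw [uA_succ, uA_zero]
    rw [← funeq q hq0 hq1 a b c hc' z hz']
    field_simp
  | succ n ih =>
    intro z hz hpole
    have habs : ∀ w : ℂ, Complex.abs ((q:ℂ)*w) = q * Complex.abs w := by
      intro w; rw [map_mul, Complex.abs_ofReal, abs_of_pos hq0]
    have hqz : Complex.abs ((q:ℂ)*z) * q^n < 1 := by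
      rw [habs]
      calc q * Complex.abs z * q^n = Complex.abs z * q^(n+1) := by ring
        _ < 1 := hz
    have hqqz : Complex.abs ((q:ℂ)*((q:ℂ)*z)) * q^n < 1 := by
      rw [habs, habs]
      calc q * (q * Complex.abs z) * q^n = q * (Complex.abs z * q^(n+1)) := by ring
        _ < q * 1 := mul_lt_mul_of_pos_left hz hq0
        _ ≤ 1 := by nlinarith
    have hp1 : ∀ l : ℕ, (q:ℂ)*z ≠ (q:ℂ)^(-(l:ℤ)) := ne_pole_mul q hq0 z hpole
    have hp2 : ∀ l : ℕ, (q:ℂ)*((q:ℂ)*z) ≠ (q:ℂ)^(-(l:ℤ)) := ne_pole_mul q hq0 _ hp1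
    rw [uA_succ q a b c (n+1) z, ih ((q:ℂ)*z) hqz hp1, ih ((q:ℂ)*((q:ℂ)*z)) hqqz hp2,
      ← uA_succ q a b c n z]

lemma uA_eq_of_le (q : ℝ) (hq0 : 0 < q) (hq1 : q < 1) (a b c : ℂ)
    (hc' : ∀ j : ℕ, (1:ℂ) - c * (q:ℂ)^j ≠ 0) (m : ℕ) (z : ℂ)
    (hz : Complex.abs z * q^m < 1) (hpole : ∀ l : ℕ, z ≠ (q:ℂ)^(-(l:ℤ))) :
    ∀ n : ℕ, m ≤ n → uA q a b c n z = uA q a b c m z := by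
  intro n
  induction n with
  | zero => intro h; rw [Nat.le_zero.1 h]
  | succ n ih =>
    intro h
    rcases Nat.lt_or_ge m (n+1) with h' | h'
    · have hmn : m ≤ n := by omega
      have hzn : Complex.abs z * q^n < 1 := by
        have : q^n ≤ q^m := pow_le_pow_of_le_one hq0.le hq1.le hmn
        nlinarith [AbsoluteValue.nonneg Complex.abs z]
      rw [uA_succ_eq q hq0 hq1 a b c hc' n z hzn hpole, ih hmn]
    · have : m = n+1 := by omega
      rw [this]

lemma F_eq_phi21 (q : ℝ) (a b c z : ℂ) :
    F q a b c z = ∑' k : ℕ, qPoch q a k * qPoch q b k * z ^ k / (qPoch q c k * qPoch q (q:ℂ) k) := by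
  rw [F]
  apply tsum_congr
  intro k
  rw [coef, div_mul_eq_mul_div]

lemma exists_small (q : ℝ) (hq0 : 0 < q) (hq1 : q < 1) (r : ℝ) :
    ∃ n : ℕ, r * q^n < 1 := by
  obtain ⟨n, hn⟩ := exists_pow_lt_of_lt_one
    (show (0:ℝ) < 1/(|r|+1) by positivity) hq1
  refine ⟨n, ?_⟩
  have h1 : r * q^n ≤ |r| * q^n := by
    apply mul_le_mul_of_nonneg_right (le_abs_self r) (by positivity)
  have h2 : |r| * q^n ≤ (|r|+1) * q^n := by nlinarith [pow_pos hq0 n]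
  have h3 : (|r|+1) * q^n < (|r|+1) * (1/(|r|+1)) := by
    apply mul_lt_mul_of_pos_left hn (by positivity)
  have h4 : (|r|+1) * (1/(|r|+1)) = 1 := by field_simp
  linarith

lemma isOpen_S (q : ℝ) (hq0 : 0 < q) (hq1 : q < 1) :
    IsOpen {ζ : ℂ | ∀ l : ℕ, ζ ≠ (q:ℂ)^(-(l:ℤ))} := by
  rw [Metric.isOpen_iff]
  intro z₀ hz₀
  obtain ⟨L, hL⟩ := exists_small q hq0 hq1 (Complex.abs z₀ + 1)
  have hne : (Finset.range (L+1)).Nonempty := ⟨0, by simp⟩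
  set d : ℝ := (Finset.range (L+1)).inf' hne (fun l => Complex.abs (z₀ - (q:ℂ)^(-(l:ℤ)))) with hd
  have hdpos : 0 < d := by
    rw [hd, Finset.lt_inf'_iff]
    intro l _
    rw [AbsoluteValue.pos_iff]
    rw [sub_ne_zero]
    exact hz₀ l
  refine ⟨min 1 d, lt_min one_pos hdpos, ?_⟩
  intro w hw
  rw [Metric.mem_ball] at hw
  intro l
  rcases Nat.lt_or_ge l (L+1) with hl | hl
  · intro h
    have h1 : d ≤ Complex.abs (z₀ - (q:ℂ)^(-(l:ℤ))) :=
      Finset.inf'_le _ (Finset.mem_range.2 hl)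
    have h2 : Complex.abs (w - z₀) < d := by
      rw [← Complex.dist_eq]
      exact lt_of_lt_of_le hw (min_le_right _ _)
    have h3 : Complex.abs (z₀ - (q:ℂ)^(-(l:ℤ))) = Complex.abs (w - z₀) := by
      rw [← h, AbsoluteValue.map_sub]
    rw [h3] at h1
    linarith
  · intro h
    have hwabs : Complex.abs w < Complex.abs z₀ + 1 := by
      have h2 : dist w z₀ = Complex.abs (w - z₀) := Complex.dist_eq w z₀
      have h3 : Complex.abs w ≤ Complex.abs z₀ + Complex.abs (w - z₀) := by
        calc Complex.abs w = Complex.abs (z₀ + (w - z₀)) := by ring_nf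
          _ ≤ _ := Complex.abs.add_le _ _
      have := lt_of_lt_of_le hw (min_le_left 1 d)
      rw [h2] at this
      linarith
    have hql : (0:ℝ) < q^l := pow_pos hq0 l
    have hqL : (0:ℝ) < q^L := pow_pos hq0 L
    have hmono : (q:ℝ)^l ≤ q^L := pow_le_pow_of_le_one hq0.le hq1.le (by omega)
    have hLlt : Complex.abs z₀ + 1 < (q^L)⁻¹ := by
      have := (lt_div_iff₀ hqL).2 hL
      simpa [one_div] using this
    have hinv : ((q:ℝ)^L)⁻¹ ≤ ((q:ℝ)^l)⁻¹ := by
      have := one_div_le_one_div_of_le hql hmono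
      simpa [one_div] using this
    have habs : Complex.abs ((q:ℂ)^(-(l:ℤ))) = ((q:ℝ)^l)⁻¹ := by
      rw [abs_pole q hq0, zpow_neg, zpow_natCast]
    rw [h, habs] at hwabs
    linarith
end Stmt18Aux

open Stmt18Aux in
/-- Appendix B: `z ↦ ₂φ₁(a,b;c;q,z)` extends analytically to `ℂ` minus the points `q^{-l}`,
`l = 0,1,2,…`. -/
theorem stmt18 (q : ℝ) (hq0 : 0 < q) (hq1 : q < 1) (a b c : ℂ)
    (hc : ∀ l : ℕ, c ≠ (q : ℂ) ^ (-(l : ℤ))) :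
    ∃ u : ℂ → ℂ,
      AnalyticOnNhd ℂ u {ζ : ℂ | ∀ l : ℕ, ζ ≠ (q : ℂ) ^ (-(l : ℤ))} ∧
      ∀ z : ℂ, ‖z‖ < 1 → u z = phi21 q a b c z := by
  classical
  have hc' : ∀ j : ℕ, (1:ℂ) - c * (q:ℂ)^j ≠ 0 := hc_ne q hq0 c hc
  have hex : ∀ z : ℂ, ∃ n : ℕ, Complex.abs z * q^n < 1 := fun z =>
    exists_small q hq0 hq1 _
  refine ⟨fun z => uA q a b c (Nat.find (hex z)) z, ?_, ?_⟩
  · intro z₀ hz₀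
    simp only [Set.mem_setOf_eq] at hz₀
    set n := Nat.find (hex z₀) with hn'
    have hn : Complex.abs z₀ * q^n < 1 := Nat.find_spec (hex z₀)
    have hana := uA_analyticAt q hq0 hq1 a b c hc' n z₀ hn hz₀
    apply hana.congr
    have hopen1 : IsOpen {w : ℂ | Complex.abs w * q^n < 1} := by
      have hcont : Continuous fun w : ℂ => Complex.abs w * q^n :=
        Complex.continuous_abs.mul continuous_const
      exact isOpen_lt hcont continuous_const
    have hopen2 := isOpen_S q hq0 hq1
    have hmem : z₀ ∈ {w : ℂ | Complex.abs w * q^n < 1}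
        ∩ {ζ : ℂ | ∀ l : ℕ, ζ ≠ (q:ℂ)^(-(l:ℤ))} := ⟨hn, hz₀⟩
    apply Filter.eventuallyEq_of_mem ((hopen1.inter hopen2).mem_nhds hmem)
    intro w hw
    obtain ⟨hw1, hw2⟩ := hw
    have hm : Complex.abs w * q^(Nat.find (hex w)) < 1 := Nat.find_spec (hex w)
    have e1 := uA_eq_of_le q hq0 hq1 a b c hc' n w hw1 hw2
      (max n (Nat.find (hex w))) (le_max_left _ _)
    have e2 := uA_eq_of_le q hq0 hq1 a b c hc' (Nat.find (hex w)) w hm hw2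
      (max n (Nat.find (hex w))) (le_max_right _ _)
    exact e1.symm.trans e2
  · intro z hz
    replace hz : Complex.abs z < 1 := hz
    have hpole : ∀ l : ℕ, z ≠ (q:ℂ)^(-(l:ℤ)) := by
      intro l h
      have h1 := one_le_abs_pole q hq0 hq1 l
      rw [← h] at h1
      linarith
    have h0 : Complex.abs z * q^0 < 1 := by simpa using hz
    have e := uA_eq_of_le q hq0 hq1 a b c hc' 0 z h0 hpole
      (Nat.find (hex z)) (Nat.zero_le _)
    show uA q a b c (Nat.find (hex z)) z = phi21 q a b c z
    rw [e, uA_zero, F_eq_phi21, phi21]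
end
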